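/- arXiv:1310.7260 — 6 statements merged into one kernel-verified Lean document; each statement's English description precedes it below -/
import Mathlib

section
/- For every integer d ≥ 2, the density of d-tuples of coprime integers converges to the reciprocal of the Riemann zeta value: (1/n^d)·#{(x₁,…,x_d) ∈ {1,…,n}^d : gcd(x₁,…,x_d) = 1} → ∏_{p prime} (1 − 1/p^d) = 1/ζ(d) as n → ∞. -/
open Filter Real

section DensityCoprimeAux

open Finset ArithmeticFunction
open scoped ArithmeticFunction.Moebius

private lemma count_eq_sum (d n : ℕ) (hd : 1 ≤ d) :
    ((((Fintype.piFinset fun _ : Fin d => Finset.Icc 1 n)).filter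
        (fun x : Fin d → ℕ => Finset.univ.gcd x = 1)).card : ℤ)
      = ∑ k ∈ Finset.Icc 1 n, μ k * ((n / k : ℕ) : ℤ) ^ d := by
  classical
  set S := Fintype.piFinset fun _ : Fin d => Finset.Icc 1 n with hS
  have h1 : ∀ x ∈ S, (if Finset.univ.gcd x = 1 then (1:ℤ) else 0)
      = ∑ k ∈ Finset.Icc 1 n, if k ∣ Finset.univ.gcd x then μ k else 0 := by
    intro x hx
    simp only [hS, Fintype.mem_piFinset, Finset.mem_Icc] at hx
    set m := Finset.univ.gcd x with hm
    have hi0 : (⟨0, by omega⟩ : Fin d) ∈ (Finset.univ : Finset (Fin d)) := Finset.mem_univ _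
    have hx0 := hx ⟨0, by omega⟩
    have hpos : 0 < m := by
      rcases Nat.eq_zero_or_pos m with h | h
      · rw [hm, Finset.gcd_eq_zero_iff] at h
        have := h _ hi0
        omega
      · exact h
    have hle : m ≤ n := by
      have hdvd : m ∣ x ⟨0, by omega⟩ := Finset.gcd_dvd hi0
      have := Nat.le_of_dvd (by omega) hdvd
      omega
    have hdiv : (Finset.Icc 1 n).filter (· ∣ m) = m.divisors := by
      ext k
      simp only [Finset.mem_filter, Finset.mem_Icc, Nat.mem_divisors]
      constructor
      · rintro ⟨⟨h1, h2⟩, h3⟩; exact ⟨h3, by omega⟩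
      · rintro ⟨h3, -⟩
        refine ⟨⟨?_, le_trans (Nat.le_of_dvd hpos h3) hle⟩, h3⟩
        rcases Nat.eq_zero_or_pos k with rfl | h
        · simp [Nat.zero_dvd.mp h3] at hpos
        · omega
    rw [← Finset.sum_filter, hdiv]
    have := congrArg (fun f : ArithmeticFunction ℤ => f m) moebius_mul_coe_zeta
    simp only [coe_mul_zeta_apply, one_apply] at this
    rw [this]
  rw [Finset.card_filter]
  push_cast
  rw [Finset.sum_congr rfl h1, Finset.sum_comm]
  refine Finset.sum_congr rfl fun k hk => ?_
  rw [← Finset.sum_filter, Finset.sum_const, nsmul_eq_mul, mul_comm]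
  congr 1
  have hset : S.filter (fun x => k ∣ Finset.univ.gcd x)
      = Fintype.piFinset fun _ : Fin d => (Finset.Icc 1 n).filter (k ∣ ·) := by
    ext x
    simp only [Finset.mem_filter, hS, Fintype.mem_piFinset, Finset.dvd_gcd_iff,
      Finset.mem_univ, forall_true_left, ← forall_and]
  rw [hset, Fintype.card_piFinset]
  have : ((Finset.Icc 1 n).filter (k ∣ ·)).card = n / k := by
    rw [show Finset.Icc 1 n = Finset.Ioc 0 n from Finset.Icc_add_one_left_eq_Ioc 0 n]
    exact Nat.Ioc_filter_dvd_card_eq_div n k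
  simp [this]

private lemma hasProd_of_hasProd_inv {ι : Type*} {f : ι → ℝ} {a : ℝ} (ha : a ≠ 0)
    (h : HasProd (fun i => (f i)⁻¹) a) : HasProd f a⁻¹ := by
  have t : Tendsto (fun s : Finset ι => (∏ i ∈ s, (f i)⁻¹)⁻¹) atTop (nhds a⁻¹) :=
    Tendsto.inv₀ h ha
  have he : (fun s : Finset ι => (∏ i ∈ s, (f i)⁻¹)⁻¹) = fun s => ∏ i ∈ s, f i := by
    funext s; simp [Finset.prod_inv_distrib]
  rwa [he] at t

/-- the completely multiplicative real function `n ↦ (n^d)⁻¹` -/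
private noncomputable def fpow (d : ℕ) (hd : 1 ≤ d) : ℕ →*₀ ℝ where
  toFun n := ((n : ℝ) ^ d)⁻¹
  map_zero' := by simp [zero_pow (by omega : d ≠ 0)]
  map_one' := by simp
  map_mul' m n := by push_cast; rw [mul_pow, mul_inv]

private lemma euler_hasProd (d : ℕ) (hd : 2 ≤ d) :
    HasProd (fun p : Nat.Primes => (1 - 1 / (p : ℝ) ^ d))
      (∑' n : ℕ, ((n : ℝ) ^ d)⁻¹)⁻¹ := by
  have hd1 : (1:ℕ) ≤ d := by omega
  have hsum : Summable (fun n : ℕ => ‖fpow d hd1 n‖) := by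
    simp only [fpow, MonoidWithZeroHom.coe_mk, ZeroHom.coe_mk, norm_inv, norm_pow,
      Real.norm_natCast]
    simp_rw [← one_div]
    exact Real.summable_one_div_nat_pow.mpr (by omega)
  have hp := EulerProduct.eulerProduct_completely_multiplicative_hasProd hsum
  have hsum' : Summable (fun n : ℕ => fpow d hd1 n) := hsum.of_norm
  have hZpos : 0 < ∑' n : ℕ, fpow d hd1 n := by
    refine Summable.tsum_pos hsum' (fun n => ?_) 1 ?_
    · simp [fpow]
    · simp [fpow]
  have h2 := hasProd_of_hasProd_inv (ne_of_gt hZpos) hp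
  have hfun : (fun p : Nat.Primes => 1 - fpow d hd1 (p : ℕ)) =
      fun p : Nat.Primes => 1 - 1 / (p : ℝ) ^ d := by
    funext p; simp [fpow, one_div]
  rw [hfun] at h2
  have hZ : (∑' n : ℕ, fpow d hd1 n) = ∑' n : ℕ, ((n : ℝ) ^ d)⁻¹ :=
    tsum_congr fun n => by simp [fpow]
  rwa [hZ] at h2

private lemma zeta_coe (d : ℕ) (hd : 2 ≤ d) :
    ((∑' n : ℕ, ((n : ℝ) ^ d)⁻¹ : ℝ) : ℂ) = riemannZeta d := by
  rw [Complex.ofReal_tsum, zeta_nat_eq_tsum_of_gt_one (by omega : 1 < d)]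
  refine tsum_congr fun n => ?_
  push_cast
  rw [one_div]

private lemma moebius_sum_coe (d : ℕ) (hd : 2 ≤ d) :
    ((∑' k : ℕ, (μ k : ℝ) * ((k : ℝ) ^ d)⁻¹ : ℝ) : ℂ) = (riemannZeta d)⁻¹ := by
  have hre : 1 < (d : ℂ).re := by
    rw [Complex.natCast_re]; exact_mod_cast by omega
  rw [Complex.ofReal_tsum]
  have hterm : ∀ k : ℕ, (((μ k : ℝ) * ((k : ℝ) ^ d)⁻¹ : ℝ) : ℂ)
      = LSeries.term (fun n => ((μ n : ℤ) : ℂ)) d k := by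
    intro k
    rcases eq_or_ne k 0 with rfl | hk
    · simp [LSeries.term]
    · rw [LSeries.term_of_ne_zero hk, Complex.cpow_natCast]
      push_cast
      rw [div_eq_mul_inv]
  rw [tsum_congr hterm]
  have h1 := LSeries_zeta_mul_Lseries_moebius (s := d) hre
  rw [LSeries_zeta_eq_riemannZeta hre] at h1
  exact (inv_eq_of_mul_eq_one_right h1).symm

private lemma div_cast_tendsto {k : ℕ} (hk : 1 ≤ k) :
    Tendsto (fun n : ℕ => ((n / k : ℕ) : ℝ) / (n : ℝ)) atTop (nhds ((k : ℝ)⁻¹)) := by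
  have hk0 : (0 : ℝ) < k := by exact_mod_cast hk
  have h1 : ∀ᶠ n : ℕ in atTop, ‖((n / k : ℕ) : ℝ) / (n : ℝ) - (k : ℝ)⁻¹‖ ≤ (n : ℝ)⁻¹ := by
    filter_upwards [eventually_ge_atTop 1] with n hn
    have hn0 : (0 : ℝ) < n := by exact_mod_cast hn
    have hmod : (k : ℝ) * ((n / k : ℕ) : ℝ) + ((n % k : ℕ) : ℝ) = (n : ℝ) := by
      exact_mod_cast congrArg (Nat.cast : ℕ → ℝ) (Nat.div_add_mod n k)
    have e : ((n / k : ℕ) : ℝ) / (n : ℝ) - (k : ℝ)⁻¹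
        = -(((n % k : ℕ) : ℝ) / ((k : ℝ) * n)) := by
      field_simp
      linear_combination hmod
    rw [e, norm_neg]
    have habs : ‖((n % k : ℕ) : ℝ) / ((k : ℝ) * n)‖ = ((n % k : ℕ) : ℝ) / ((k : ℝ) * n) := by
      rw [Real.norm_eq_abs, abs_of_nonneg]; positivity
    rw [habs]
    calc ((n % k : ℕ) : ℝ) / ((k : ℝ) * n) ≤ (k : ℝ) / ((k : ℝ) * n) := by
          gcongr
          exact_mod_cast (Nat.mod_lt n (by omega)).le
      _ = (n : ℝ)⁻¹ := by field_simp
  have h0 : Tendsto (fun n : ℕ => (n : ℝ)⁻¹) atTop (nhds 0) := by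
    simpa only [one_div] using tendsto_one_div_atTop_nhds_zero_nat (𝕜 := ℝ)
  have := squeeze_zero_norm' h1 h0
  rw [tendsto_sub_nhds_zero_iff] at this
  exact this

private lemma tendsto_aux (d : ℕ) (hd : 2 ≤ d) :
    Tendsto (fun n : ℕ => ∑' k : ℕ, (μ k : ℝ) * ((n / k : ℕ) : ℝ) ^ d / (n : ℝ) ^ d)
      atTop (nhds (∑' k : ℕ, (μ k : ℝ) * ((k : ℝ) ^ d)⁻¹)) := by
  have hd0 : d ≠ 0 := by omega
  refine tendsto_tsum_of_dominated_convergence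
    (bound := fun k : ℕ => ((k : ℝ) ^ d)⁻¹) ?_ ?_ ?_
  · simpa only [one_div] using Real.summable_one_div_nat_pow.mpr (by omega : 1 < d)
  · intro k
    rcases Nat.eq_zero_or_pos k with rfl | hk
    · simpa using tendsto_const_nhds
    · have key := div_cast_tendsto hk
      have h2 := (key.pow d).const_mul ((μ k : ℤ) : ℝ)
      have hfun : (fun n : ℕ => ((μ k : ℤ) : ℝ) * (((n / k : ℕ) : ℝ) / (n : ℝ)) ^ d)
          = fun n : ℕ => (μ k : ℝ) * ((n / k : ℕ) : ℝ) ^ d / (n : ℝ) ^ d := by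
        funext n; rw [div_pow, mul_div_assoc]
      rwa [hfun, inv_pow] at h2
  · refine Eventually.of_forall fun n k => ?_
    rcases Nat.eq_zero_or_pos k with rfl | hk
    · simp [zero_pow hd0]
    rcases Nat.eq_zero_or_pos n with rfl | hn
    · simp only [Nat.zero_div, Nat.cast_zero, zero_pow hd0, mul_zero, zero_div, norm_zero]
      positivity
    have hk0 : (0 : ℝ) < k := by exact_mod_cast hk
    have hn0 : (0 : ℝ) < n := by exact_mod_cast hn
    have h1 : ‖(μ k : ℝ) * ((n / k : ℕ) : ℝ) ^ d / (n : ℝ) ^ d‖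
        = |(μ k : ℝ)| * ((n / k : ℕ) : ℝ) ^ d / (n : ℝ) ^ d := by
      rw [Real.norm_eq_abs, abs_div, abs_mul,
        abs_of_nonneg (by positivity : (0:ℝ) ≤ ((n / k : ℕ) : ℝ) ^ d),
        abs_of_nonneg (by positivity : (0:ℝ) ≤ (n : ℝ) ^ d)]
    have hmu : |(μ k : ℝ)| ≤ 1 := by exact_mod_cast (abs_moebius_le_one (n := k))
    have hdivle : ((n / k : ℕ) : ℝ) ≤ (n : ℝ) / (k : ℝ) := Nat.cast_div_le
    calc ‖(μ k : ℝ) * ((n / k : ℕ) : ℝ) ^ d / (n : ℝ) ^ d‖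
        = |(μ k : ℝ)| * ((n / k : ℕ) : ℝ) ^ d / (n : ℝ) ^ d := h1
      _ ≤ 1 * ((n : ℝ) / (k : ℝ)) ^ d / (n : ℝ) ^ d := by
          gcongr
      _ = ((k : ℝ) ^ d)⁻¹ := by
          rw [one_mul, div_pow, div_right_comm, div_self (by positivity), one_div]

private lemma tsum_eq_card (d n : ℕ) (hd : 2 ≤ d) (hn : 1 ≤ n) :
    ∑' k : ℕ, (μ k : ℝ) * ((n / k : ℕ) : ℝ) ^ d / (n : ℝ) ^ d
      = ((((Fintype.piFinset fun _ : Fin d => Finset.Icc 1 n)).filter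
          (fun x : Fin d → ℕ => Finset.univ.gcd x = 1)).card : ℝ) / (n : ℝ) ^ d := by
  have hd0 : d ≠ 0 := by omega
  rw [tsum_eq_sum (s := Finset.Icc 1 n) ?_]
  · rw [← Finset.sum_div]
    congr 1
    have hcount := congrArg (Int.cast : ℤ → ℝ) (count_eq_sum d n (by omega))
    push_cast at hcount
    exact hcount.symm
  · intro k hk
    simp only [Finset.mem_Icc, not_and_or, not_le] at hk
    rcases hk with hk | hk
    · interval_cases k
      simp
    · rw [Nat.div_eq_of_lt hk]
      simp [zero_pow hd0]

end DensityCoprimeAux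

open ArithmeticFunction ArithmeticFunction.Moebius in
/-- For every integer `d ≥ 2`, the density of `d`-tuples of
coprime integers in `{1,…,n}^d` converges to `∏_p (1 − 1/p^d) = 1/ζ(d)`. -/
theorem density_coprime_tuples (d : ℕ) (hd : 2 ≤ d) :
    Tendsto
      (fun n : ℕ =>
        ((((Fintype.piFinset fun _ : Fin d => Finset.Icc 1 n)).filter
            (fun x : Fin d → ℕ => Finset.univ.gcd x = 1)).card : ℝ) / (n : ℝ) ^ d)
      atTop (nhds (∏' p : Nat.Primes, (1 - 1 / (p : ℝ) ^ d)))
    ∧ ((∏' p : Nat.Primes, (1 - 1 / (p : ℝ) ^ d) : ℝ) : ℂ) = (riemannZeta d)⁻¹ := by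
  have hP := euler_hasProd d hd
  have hZC := zeta_coe d hd
  have htp : (∏' p : Nat.Primes, (1 - 1 / (p : ℝ) ^ d))
      = (∑' n : ℕ, ((n : ℝ) ^ d)⁻¹)⁻¹ := hP.tprod_eq
  have hcoe : ((∏' p : Nat.Primes, (1 - 1 / (p : ℝ) ^ d) : ℝ) : ℂ) = (riemannZeta d)⁻¹ := by
    rw [htp, Complex.ofReal_inv, hZC]
  refine ⟨?_, hcoe⟩
  have hLP : (∑' k : ℕ, (μ k : ℝ) * ((k : ℝ) ^ d)⁻¹)
      = ∏' p : Nat.Primes, (1 - 1 / (p : ℝ) ^ d) := by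
    apply Complex.ofReal_injective
    rw [moebius_sum_coe d hd, hcoe]
  rw [← hLP]
  refine (tendsto_aux d hd).congr' ?_
  filter_upwards [eventually_ge_atTop 1] with n hn
  exact tsum_eq_card d n hd hn
end

section
/- For every integer d ≥ 2, as n → ∞, (1/n^{2d−1})·#{(x₁,…,x_{2d−1}) ∈ {1,…,n}^{2d−1} : gcd(x₁,…,x_d) = 1 and gcd(x_d,…,x_{2d−1}) = 1} → ∏_{p prime} (1 − 2/p^d + 1/p^{2d−1}). -/
open Filter Real Finset ArithmeticFunction Topology
open scoped ArithmeticFunction.Moebius ArithmeticFunction.Omega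



lemma sum_moebius_divisors (m : ℕ) : ∑ a ∈ m.divisors, μ a = if m = 1 then (1:ℤ) else 0 := by
  rw [← coe_mul_zeta_apply, moebius_mul_coe_zeta, one_apply]

lemma indicator_eq {n : ℕ} {m : ℕ} (hm1 : 1 ≤ m) (hmn : m ≤ n) :
    (if m = 1 then (1:ℤ) else 0) = ∑ a ∈ Finset.Icc 1 n, if a ∣ m then μ a else 0 := by
  rw [← sum_moebius_divisors, ← Finset.sum_filter]
  apply Finset.sum_congr _ (fun _ _ => rfl)
  ext a
  simp only [Nat.mem_divisors, mem_filter, Finset.mem_Icc]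
  constructor
  · rintro ⟨hd, hm0⟩
    have ha0 : a ≠ 0 := by rintro rfl; exact hm0 (Nat.eq_zero_of_zero_dvd hd)
    exact ⟨⟨Nat.one_le_iff_ne_zero.2 ha0, le_trans (Nat.le_of_dvd (by omega) hd) hmn⟩, hd⟩
  · rintro ⟨_, hd⟩
    exact ⟨hd, by omega⟩

lemma piFinset_filter {ι : Type*} [Fintype ι] [DecidableEq ι] {δ : ι → Type*}
    [∀ i, DecidableEq (δ i)] (t : ∀ i, Finset (δ i)) (p : ∀ i, δ i → Prop)
    [∀ i, DecidablePred (p i)] :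
    (Fintype.piFinset t).filter (fun x => ∀ i, p i (x i)) =
      Fintype.piFinset (fun i => (t i).filter (p i)) := by
  ext x
  simp [Fintype.mem_piFinset, forall_and]


lemma count_eq (d : ℕ) (hd : 2 ≤ d) (n : ℕ) :
    (((Fintype.piFinset fun _ : Fin (2 * d - 1) => Finset.Icc 1 n).filter
        (fun x : Fin (2 * d - 1) → ℕ =>
          (Finset.univ.filter fun i : Fin (2 * d - 1) => (i : ℕ) < d).gcd x = 1 ∧
          (Finset.univ.filter fun i : Fin (2 * d - 1) => d - 1 ≤ (i : ℕ)).gcd x = 1)).card : ℤ)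
      = ∑ a ∈ Finset.Icc 1 n, ∑ b ∈ Finset.Icc 1 n,
          μ a * μ b * ((n / a : ℕ) : ℤ) ^ (d - 1) * ((n / b : ℕ) : ℤ) ^ (d - 1)
            * ((n / Nat.lcm a b : ℕ) : ℤ) := by
  set S1 := Finset.univ.filter fun i : Fin (2 * d - 1) => (i : ℕ) < d with hS1
  set S2 := Finset.univ.filter fun i : Fin (2 * d - 1) => d - 1 ≤ (i : ℕ) with hS2
  set pi := Fintype.piFinset fun _ : Fin (2 * d - 1) => Finset.Icc 1 n with hpi
  -- gcd bounds
  have hgcd_mem : ∀ (S : Finset (Fin (2 * d - 1))) (i0 : Fin (2 * d - 1)), i0 ∈ S →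
      ∀ x ∈ pi, 1 ≤ S.gcd x ∧ S.gcd x ≤ n := by
    intro S i0 hi0 x hx
    have hxi : x i0 ∈ Finset.Icc 1 n := by
      rw [Fintype.mem_piFinset] at hx; exact hx i0
    rw [Finset.mem_Icc] at hxi
    have hdvd : S.gcd x ∣ x i0 := Finset.gcd_dvd hi0
    have h0 : S.gcd x ≠ 0 := by
      intro h; rw [h, zero_dvd_iff] at hdvd; omega
    exact ⟨by omega, le_trans (Nat.le_of_dvd (by omega) hdvd) hxi.2⟩
  have hi0S1 : (⟨0, by omega⟩ : Fin (2 * d - 1)) ∈ S1 := by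
    rw [hS1]; exact mem_filter.mpr ⟨mem_univ _, by simp; omega⟩
  have hi1S2 : (⟨d - 1, by omega⟩ : Fin (2 * d - 1)) ∈ S2 := by
    rw [hS2]; exact mem_filter.mpr ⟨mem_univ _, by simp⟩
  -- the inner count
  have hcount : ∀ a b : ℕ,
      (pi.filter (fun x => a ∣ S1.gcd x ∧ b ∣ S2.gcd x)).card
        = (n / a) ^ (d - 1) * (n / b) ^ (d - 1) * (n / Nat.lcm a b) := by
    intro a b
    set mfun : Fin (2 * d - 1) → ℕ := fun i =>
      if (i : ℕ) < d - 1 then a else if (i : ℕ) = d - 1 then Nat.lcm a b else b with hmfun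
    have hpred : ∀ x : Fin (2 * d - 1) → ℕ,
        (a ∣ S1.gcd x ∧ b ∣ S2.gcd x) ↔ ∀ i, mfun i ∣ x i := by
      intro x
      rw [Finset.dvd_gcd_iff, Finset.dvd_gcd_iff]
      simp only [hS1, hS2, mem_filter, mem_univ, true_and, and_imp]
      constructor
      · rintro ⟨h1, h2⟩ i
        by_cases hlt : (i : ℕ) < d - 1
        · simpa [hmfun, hlt] using h1 i (by omega)
        · by_cases heq : (i : ℕ) = d - 1
          · simpa [hmfun, hlt, heq] using
              Nat.lcm_dvd (h1 i (by omega)) (h2 i (by omega))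
          · simpa [hmfun, hlt, heq] using h2 i (by omega)
      · intro h
        constructor
        · intro i hi
          have hh := h i
          by_cases hlt : (i : ℕ) < d - 1
          · simpa [hmfun, hlt] using hh
          · have heq : (i : ℕ) = d - 1 := by omega
            simp only [hmfun, if_neg hlt, if_pos heq] at hh
            exact (Nat.dvd_lcm_left a b).trans hh
        · intro i hi
          have hh := h i
          by_cases heq : (i : ℕ) = d - 1
          · simp only [hmfun, if_neg (by omega : ¬ (i:ℕ) < d - 1), if_pos heq] at hh
            exact (Nat.dvd_lcm_right a b).trans hh
          · have hnl : ¬ (i:ℕ) < d - 1 := by omega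
            simp only [hmfun, if_neg hnl, if_neg heq] at hh
            exact hh
    have hfilter : pi.filter (fun x => a ∣ S1.gcd x ∧ b ∣ S2.gcd x)
        = Fintype.piFinset (fun i => (Finset.Icc 1 n).filter (fun y => mfun i ∣ y)) := by
      ext x
      simp only [mem_filter, hpi, Fintype.mem_piFinset, hpred x]
      rw [← forall_and]
    rw [hfilter, Fintype.card_piFinset]
    have hIcc : Finset.Icc 1 n = Finset.Ioc 0 n := by
      rw [← Finset.Icc_add_one_left_eq_Ioc]; rfl
    have hfac : ∀ i : Fin (2 * d - 1),
        ((Finset.Icc 1 n).filter (fun y => mfun i ∣ y)).card = n / mfun i := by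
      intro i; rw [hIcc]; exact Nat.Ioc_filter_dvd_card_eq_div n (mfun i)
    simp only [hfac]
    simp only [hmfun]
    have : (∏ i : Fin (2 * d - 1),
          (n / (if (i : ℕ) < d - 1 then a else if (i : ℕ) = d - 1 then Nat.lcm a b else b)))
        = ∏ j ∈ Finset.range (2 * d - 1),
            (n / (if j < d - 1 then a else if j = d - 1 then Nat.lcm a b else b)) :=
      Fin.prod_univ_eq_prod_range
        (fun j => n / (if j < d - 1 then a else if j = d - 1 then Nat.lcm a b else b)) (2 * d - 1)
    rw [this, range_eq_Ico,
      ← Finset.prod_Ico_consecutive _ (Nat.zero_le (d - 1)) (show d - 1 ≤ 2 * d - 1 by omega),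
      ← Finset.prod_Ico_consecutive _ (show d - 1 ≤ d by omega) (show d ≤ 2 * d - 1 by omega)]
    have hP1 : ∏ j ∈ Finset.Ico 0 (d - 1),
        (n / (if j < d - 1 then a else if j = d - 1 then Nat.lcm a b else b)) = (n / a) ^ (d - 1) := by
      have hc : ∀ j ∈ Finset.Ico 0 (d - 1),
          (n / (if j < d - 1 then a else if j = d - 1 then Nat.lcm a b else b)) = n / a := by
        intro j hj; rw [mem_Ico] at hj; rw [if_pos hj.2]
      rw [Finset.prod_congr rfl hc, Finset.prod_const, Nat.card_Ico, Nat.sub_zero]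
    have hP2 : ∏ j ∈ Finset.Ico (d - 1) d,
        (n / (if j < d - 1 then a else if j = d - 1 then Nat.lcm a b else b)) = n / Nat.lcm a b := by
      have he : Finset.Ico (d - 1) d = {d - 1} := by
        ext j; simp only [mem_Ico, Finset.mem_singleton]; omega
      rw [he, Finset.prod_singleton, if_neg (lt_irrefl _), if_pos rfl]
    have hP3 : ∏ j ∈ Finset.Ico d (2 * d - 1),
        (n / (if j < d - 1 then a else if j = d - 1 then Nat.lcm a b else b)) = (n / b) ^ (d - 1) := by
      have hc : ∀ j ∈ Finset.Ico d (2 * d - 1),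
          (n / (if j < d - 1 then a else if j = d - 1 then Nat.lcm a b else b)) = n / b := by
        intro j hj; rw [mem_Ico] at hj; rw [if_neg (by omega), if_neg (by omega)]
      rw [Finset.prod_congr rfl hc, Finset.prod_const, Nat.card_Ico,
        show 2 * d - 1 - d = d - 1 by omega]
    rw [hP1, hP2, hP3]; ring
  -- main chain
  rw [Finset.card_filter, Nat.cast_sum]
  calc ∑ x ∈ pi, (((if S1.gcd x = 1 ∧ S2.gcd x = 1 then 1 else 0) : ℕ) : ℤ)
      = ∑ x ∈ pi, ∑ a ∈ Finset.Icc 1 n, ∑ b ∈ Finset.Icc 1 n,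
          (if a ∣ S1.gcd x ∧ b ∣ S2.gcd x then μ a * μ b else 0) := by
        refine Finset.sum_congr rfl (fun x hx => ?_)
        have h1 := hgcd_mem S1 _ hi0S1 x hx
        have h2 := hgcd_mem S2 _ hi1S2 x hx
        have e1 : (((if S1.gcd x = 1 ∧ S2.gcd x = 1 then 1 else 0) : ℕ) : ℤ)
            = (if S1.gcd x = 1 then (1:ℤ) else 0) * (if S2.gcd x = 1 then (1:ℤ) else 0) := by
          by_cases hA : S1.gcd x = 1 <;> by_cases hB : S2.gcd x = 1 <;> simp [hA, hB]
        rw [e1, indicator_eq h1.1 h1.2, indicator_eq h2.1 h2.2, Finset.sum_mul_sum]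
        refine Finset.sum_congr rfl (fun a _ => Finset.sum_congr rfl (fun b _ => ?_))
        by_cases hA : a ∣ S1.gcd x <;> by_cases hB : b ∣ S2.gcd x <;> simp [hA, hB]
    _ = ∑ x ∈ pi, ∑ ab ∈ Finset.Icc 1 n ×ˢ Finset.Icc 1 n,
          (if ab.1 ∣ S1.gcd x ∧ ab.2 ∣ S2.gcd x then μ ab.1 * μ ab.2 else 0) := by
        refine Finset.sum_congr rfl (fun x _ => ?_)
        rw [Finset.sum_product]
    _ = ∑ ab ∈ Finset.Icc 1 n ×ˢ Finset.Icc 1 n, ∑ x ∈ pi,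
          (if ab.1 ∣ S1.gcd x ∧ ab.2 ∣ S2.gcd x then μ ab.1 * μ ab.2 else 0) :=
        Finset.sum_comm
    _ = ∑ ab ∈ Finset.Icc 1 n ×ˢ Finset.Icc 1 n,
          μ ab.1 * μ ab.2 * ((n / ab.1 : ℕ) : ℤ) ^ (d - 1) * ((n / ab.2 : ℕ) : ℤ) ^ (d - 1)
            * ((n / Nat.lcm ab.1 ab.2 : ℕ) : ℤ) := by
        refine Finset.sum_congr rfl (fun ab _ => ?_)
        rw [← Finset.sum_filter, Finset.sum_const, hcount ab.1 ab.2, nsmul_eq_mul]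
        push_cast
        ring
    _ = ∑ a ∈ Finset.Icc 1 n, ∑ b ∈ Finset.Icc 1 n,
          μ a * μ b * ((n / a : ℕ) : ℤ) ^ (d - 1) * ((n / b : ℕ) : ℤ) ^ (d - 1)
            * ((n / Nat.lcm a b : ℕ) : ℤ) := by
        rw [Finset.sum_product]


noncomputable def Ffun (d n : ℕ) (ab : ℕ × ℕ) : ℝ :=
  ((μ ab.1 : ℤ) : ℝ) * ((μ ab.2 : ℤ) : ℝ) * (((n / ab.1 : ℕ) : ℝ) / n) ^ (d - 1)
    * (((n / ab.2 : ℕ) : ℝ) / n) ^ (d - 1) * (((n / Nat.lcm ab.1 ab.2 : ℕ) : ℝ) / n)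

noncomputable def hfun (d : ℕ) (ab : ℕ × ℕ) : ℝ :=
  ((μ ab.1 : ℤ) : ℝ) * ((μ ab.2 : ℤ) : ℝ) * ((1 : ℝ) / ab.1) ^ (d - 1)
    * ((1 : ℝ) / ab.2) ^ (d - 1) * ((1 : ℝ) / (Nat.lcm ab.1 ab.2))

noncomputable def bfun (k : ℕ) : ℝ := if k = 0 then 0 else 1 / (k * Real.sqrt k)

lemma tendsto_floor_div (a : ℕ) (ha : a ≠ 0) :
    Tendsto (fun n : ℕ => ((n / a : ℕ) : ℝ) / n) atTop (𝓝 (1 / a)) := by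
  have key : ∀ n : ℕ, 1 ≤ n → ‖((n / a : ℕ) : ℝ) / n - 1 / a‖ ≤ 1 / n := by
    intro n hn
    have hn0 : (n : ℝ) ≠ 0 := by positivity
    have ha0 : (a : ℝ) ≠ 0 := by exact_mod_cast ha
    have hq : ((n / a : ℕ) : ℝ) * a = (n : ℝ) - ((n % a : ℕ) : ℝ) := by
      have := congrArg (Nat.cast : ℕ → ℝ) (Nat.div_add_mod n a)
      push_cast at this
      linarith
    have hr : ((n % a : ℕ) : ℝ) < a := by
      exact_mod_cast Nat.mod_lt n (Nat.pos_of_ne_zero ha)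
    have hr0 : (0 : ℝ) ≤ ((n % a : ℕ) : ℝ) := by positivity
    have hq' : ((n / a : ℕ) : ℝ) = ((n : ℝ) - ((n % a : ℕ) : ℝ)) / a := by
      rw [eq_div_iff ha0]; exact hq
    have hexp : ((n / a : ℕ) : ℝ) / n - 1 / a = -(((n % a : ℕ) : ℝ) / (a * n)) := by
      rw [hq']
      field_simp
      ring
    rw [hexp, norm_neg, Real.norm_eq_abs, abs_of_nonneg (by positivity)]
    rw [div_le_div_iff₀ (by positivity) (by positivity)]
    have : ((n % a : ℕ) : ℝ) * n ≤ a * n := by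
      apply mul_le_mul_of_nonneg_right (le_of_lt hr) (by positivity)
    linarith
  rw [← tendsto_sub_nhds_zero_iff]
  apply squeeze_zero_norm' _ tendsto_one_div_atTop_nhds_zero_nat
  filter_upwards [eventually_ge_atTop 1] with n hn using key n hn

lemma Ffun_tendsto (d : ℕ) (hd : 2 ≤ d) (ab : ℕ × ℕ) :
    Tendsto (fun n => Ffun d n ab) atTop (𝓝 (hfun d ab)) := by
  obtain ⟨a, b⟩ := ab
  rcases eq_or_ne a 0 with rfl | ha
  · simp [Ffun, hfun]
  rcases eq_or_ne b 0 with rfl | hb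
  · simp [Ffun, hfun]
  have hl : Nat.lcm a b ≠ 0 := Nat.lcm_ne_zero ha hb
  unfold Ffun hfun
  exact ((((tendsto_const_nhds.mul tendsto_const_nhds).mul
    ((tendsto_floor_div a ha).pow (d-1))).mul
    ((tendsto_floor_div b hb).pow (d-1))).mul (tendsto_floor_div _ hl))

lemma abs_term_le (d : ℕ) (hd : 2 ≤ d) (a b : ℕ) (ha : a ≠ 0) (hb : b ≠ 0)
    (x y z : ℝ) (hx0 : 0 ≤ x) (hy0 : 0 ≤ y) (hz0 : 0 ≤ z)
    (hx : x ≤ 1 / a) (hy : y ≤ 1 / b) (hz : z ≤ 1 / (Nat.lcm a b)) :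
    ‖((μ a : ℤ) : ℝ) * ((μ b : ℤ) : ℝ) * x ^ (d - 1) * y ^ (d - 1) * z‖
      ≤ bfun a * bfun b := by
  have ha1 : (1:ℝ) ≤ a := by exact_mod_cast Nat.one_le_iff_ne_zero.2 ha
  have hb1 : (1:ℝ) ≤ b := by exact_mod_cast Nat.one_le_iff_ne_zero.2 hb
  have hl0 : Nat.lcm a b ≠ 0 := Nat.lcm_ne_zero ha hb
  have hla : (a:ℝ) ≤ Nat.lcm a b := by
    exact_mod_cast Nat.le_of_dvd (Nat.pos_of_ne_zero hl0) (Nat.dvd_lcm_left a b)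
  have hlb : (b:ℝ) ≤ Nat.lcm a b := by
    exact_mod_cast Nat.le_of_dvd (Nat.pos_of_ne_zero hl0) (Nat.dvd_lcm_right a b)
  have hsq : Real.sqrt a * Real.sqrt b ≤ Nat.lcm a b := by
    rw [← Real.sqrt_mul_self (by positivity : (0:ℝ) ≤ (Nat.lcm a b : ℝ))]
    rw [← Real.sqrt_mul (by positivity)]
    apply Real.sqrt_le_sqrt
    calc (a : ℝ) * b ≤ (Nat.lcm a b : ℝ) * (Nat.lcm a b : ℝ) :=
          mul_le_mul hla hlb (by positivity) (by positivity)
      _ = _ := by ring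
  have hmu : ‖((μ a : ℤ) : ℝ) * ((μ b : ℤ) : ℝ)‖ ≤ 1 := by
    rw [norm_mul]
    have h1 : ‖((μ a : ℤ) : ℝ)‖ ≤ 1 := by
      rw [Real.norm_eq_abs, ← Int.cast_abs]
      exact_mod_cast abs_moebius_le_one
    have h2 : ‖((μ b : ℤ) : ℝ)‖ ≤ 1 := by
      rw [Real.norm_eq_abs, ← Int.cast_abs]
      exact_mod_cast abs_moebius_le_one
    calc ‖((μ a : ℤ) : ℝ)‖ * ‖((μ b : ℤ) : ℝ)‖ ≤ 1 * 1 :=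
        mul_le_mul h1 h2 (norm_nonneg _) zero_le_one
      _ = 1 := by ring
  have hxd : x ^ (d - 1) ≤ 1 / a := by
    calc x ^ (d - 1) ≤ (1 / (a:ℝ)) ^ (d - 1) := pow_le_pow_left₀ hx0 hx _
      _ ≤ (1 / (a:ℝ)) ^ 1 := pow_le_pow_of_le_one (by positivity)
          (by rw [div_le_one (by linarith)]; exact ha1) (by omega)
      _ = 1 / a := pow_one _
  have hyd : y ^ (d - 1) ≤ 1 / b := by
    calc y ^ (d - 1) ≤ (1 / (b:ℝ)) ^ (d - 1) := pow_le_pow_left₀ hy0 hy _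
      _ ≤ (1 / (b:ℝ)) ^ 1 := pow_le_pow_of_le_one (by positivity)
          (by rw [div_le_one (by linarith)]; exact hb1) (by omega)
      _ = 1 / b := pow_one _
  have hz' : z ≤ 1 / (Real.sqrt a * Real.sqrt b) := by
    apply hz.trans
    apply one_div_le_one_div_of_le (by positivity) hsq
  calc ‖((μ a : ℤ) : ℝ) * ((μ b : ℤ) : ℝ) * x ^ (d - 1) * y ^ (d - 1) * z‖
      = ‖((μ a : ℤ) : ℝ) * ((μ b : ℤ) : ℝ)‖ * (x ^ (d - 1) * (y ^ (d - 1) * z)) := by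
        rw [mul_assoc, mul_assoc, norm_mul]
        congr 1
        rw [Real.norm_eq_abs, abs_of_nonneg (by positivity)]
    _ ≤ 1 * ((1 / a) * ((1 / b) * (1 / (Real.sqrt a * Real.sqrt b)))) := by
        apply mul_le_mul hmu _ (by positivity) zero_le_one
        apply mul_le_mul hxd _ (by positivity) (by positivity)
        apply mul_le_mul hyd hz' hz0 (by positivity)
    _ = bfun a * bfun b := by
        unfold bfun
        rw [if_neg ha, if_neg hb]
        field_simp
lemma bfun_summable : Summable bfun := by
  have h : Summable (fun k : ℕ => 1 / (k : ℝ) ^ (3 / 2 : ℝ)) :=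
    (Real.summable_one_div_nat_rpow).2 (by norm_num)
  apply h.congr
  intro k
  rcases eq_or_ne k 0 with rfl | hk
  · simp [bfun, Real.zero_rpow (by norm_num : (3/2:ℝ) ≠ 0)]
  · have hk0 : (0:ℝ) < k := by exact_mod_cast Nat.pos_of_ne_zero hk
    rw [bfun, if_neg hk]
    congr 1
    rw [show (3/2 : ℝ) = 1 + 1/2 by norm_num, Real.rpow_add hk0, Real.rpow_one,
      Real.sqrt_eq_rpow]

lemma bound_summable : Summable (fun ab : ℕ × ℕ => bfun ab.1 * bfun ab.2) := by
  apply bfun_summable.mul_of_nonneg bfun_summable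
  · intro k; unfold bfun; split <;> positivity
  · intro k; unfold bfun; split <;> positivity

lemma Ffun_bound (d : ℕ) (hd : 2 ≤ d) (n : ℕ) (hn : 1 ≤ n) (ab : ℕ × ℕ) :
    ‖Ffun d n ab‖ ≤ bfun ab.1 * bfun ab.2 := by
  obtain ⟨a, b⟩ := ab
  rcases eq_or_ne a 0 with rfl | ha
  · simp [Ffun, bfun]
  rcases eq_or_ne b 0 with rfl | hb
  · simp [Ffun, bfun]
  have hn0 : (0:ℝ) < n := by exact_mod_cast hn
  have key : ∀ m : ℕ, m ≠ 0 → ((n / m : ℕ) : ℝ) / n ≤ 1 / m := by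
    intro m hm
    have hm0 : (0:ℝ) < m := by exact_mod_cast Nat.pos_of_ne_zero hm
    rw [div_le_div_iff₀ hn0 hm0]
    calc ((n / m : ℕ) : ℝ) * m ≤ ((n : ℝ) / m) * m := by
          apply mul_le_mul_of_nonneg_right Nat.cast_div_le (le_of_lt hm0)
      _ = n := by field_simp
      _ = 1 * n := by ring
  exact abs_term_le d hd a b ha hb _ _ _ (by positivity) (by positivity) (by positivity)
    (key a ha) (key b hb) (key _ (Nat.lcm_ne_zero ha hb))

lemma hfun_bound (d : ℕ) (hd : 2 ≤ d) (ab : ℕ × ℕ) :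
    ‖hfun d ab‖ ≤ bfun ab.1 * bfun ab.2 := by
  obtain ⟨a, b⟩ := ab
  rcases eq_or_ne a 0 with rfl | ha
  · simp [hfun, bfun]
  rcases eq_or_ne b 0 with rfl | hb
  · simp [hfun, bfun]
  exact abs_term_le d hd a b ha hb _ _ _ (by positivity) (by positivity) (by positivity)
    le_rfl le_rfl le_rfl


lemma tsum_Ffun_eq (d : ℕ) (hd : 2 ≤ d) (n : ℕ) (hn : 1 ≤ n) :
    ∑' ab : ℕ × ℕ, Ffun d n ab
      = (((Fintype.piFinset fun _ : Fin (2 * d - 1) => Finset.Icc 1 n).filter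
          (fun x : Fin (2 * d - 1) → ℕ =>
            (Finset.univ.filter fun i : Fin (2 * d - 1) => (i : ℕ) < d).gcd x = 1 ∧
            (Finset.univ.filter fun i : Fin (2 * d - 1) => d - 1 ≤ (i : ℕ)).gcd x = 1)).card : ℝ)
        / (n : ℝ) ^ (2 * d - 1) := by
  have hsupp : ∀ ab : ℕ × ℕ, ab ∉ Finset.Icc 1 n ×ˢ Finset.Icc 1 n → Ffun d n ab = 0 := by
    rintro ⟨a, b⟩ hab
    rw [Finset.mem_product, Decidable.not_and_iff_or_not] at hab
    have hcase : ∀ m : ℕ, m ∉ Finset.Icc 1 n → (μ m = 0 ∨ (n / m : ℕ) = 0) := by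
      intro m hm
      rw [Finset.mem_Icc, Decidable.not_and_iff_or_not] at hm
      rcases hm with hm | hm
      · left; interval_cases m
        · simp
      · right; exact Nat.div_eq_of_lt (by omega)
    have hd1 : d - 1 ≠ 0 := by omega
    rcases hab with hab | hab <;> rcases hcase _ hab with hm | hm <;>
      simp [Ffun, hm, zero_pow hd1]
  rw [tsum_eq_sum hsupp]
  have hn0 : (n : ℝ) ≠ 0 := by positivity
  have hterm : ∀ ab : ℕ × ℕ, ab ∈ Finset.Icc 1 n ×ˢ Finset.Icc 1 n →
      Ffun d n ab = (((μ ab.1 * μ ab.2 * ((n / ab.1 : ℕ) : ℤ) ^ (d - 1)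
          * ((n / ab.2 : ℕ) : ℤ) ^ (d - 1) * ((n / Nat.lcm ab.1 ab.2 : ℕ) : ℤ) : ℤ)) : ℝ)
        / (n : ℝ) ^ (2 * d - 1) := by
    intro ab _
    unfold Ffun
    rw [show 2 * d - 1 = (d - 1) + ((d - 1) + 1) by omega, pow_add, pow_add, pow_one,
      Int.cast_mul, Int.cast_mul, Int.cast_mul, Int.cast_pow, Int.cast_pow,
      Int.cast_natCast, Int.cast_natCast, Int.cast_natCast]
    rw [div_pow, div_pow]
    field_simp
    push_cast
    ring
  rw [Finset.sum_congr rfl hterm, ← Finset.sum_div]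
  congr 1
  have hsum : ∑ ab ∈ Finset.Icc 1 n ×ˢ Finset.Icc 1 n,
      (μ ab.1 * μ ab.2 * ((n / ab.1 : ℕ) : ℤ) ^ (d - 1) * ((n / ab.2 : ℕ) : ℤ) ^ (d - 1)
        * ((n / Nat.lcm ab.1 ab.2 : ℕ) : ℤ))
      = (((Fintype.piFinset fun _ : Fin (2 * d - 1) => Finset.Icc 1 n).filter
          (fun x : Fin (2 * d - 1) → ℕ =>
            (Finset.univ.filter fun i : Fin (2 * d - 1) => (i : ℕ) < d).gcd x = 1 ∧
            (Finset.univ.filter fun i : Fin (2 * d - 1) => d - 1 ≤ (i : ℕ)).gcd x = 1)).card : ℤ) := by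
    rw [Finset.sum_product]
    exact (count_eq d hd n).symm
  rw [← Int.cast_sum, hsum, Int.cast_natCast]


noncomputable def cfac (d p e : ℕ) : ℝ :=
  if e = 1 ∨ e = 2 then -(1 / (p : ℝ) ^ d) else if e = 3 then 1 / (p : ℝ) ^ (2 * d - 1) else 0

noncomputable def Gfun (d n : ℕ) : ℝ :=
  if n = 0 then 0 else ∏ p ∈ n.primeFactors, cfac d p (n.factorization p)

lemma sf_fact {x : ℕ} (hx : Squarefree x) (p : ℕ) :
    x.factorization p = if p ∈ x.primeFactors then 1 else 0 := by
  by_cases hp : p ∈ x.primeFactors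
  · rw [if_pos hp]
    have h1 : x.factorization p ≤ 1 :=
      (Nat.squarefree_iff_factorization_le_one hx.ne_zero).1 hx p
    have h2 : x.factorization p ≠ 0 := by
      rw [← Nat.support_factorization] at hp
      exact Finsupp.mem_support_iff.1 hp
    omega
  · rw [if_neg hp, ← Nat.support_factorization] at *
    exact Finsupp.notMem_support_iff.1 hp

lemma fact_sq_mul {a b : ℕ} (ha : a ≠ 0) (hb : b ≠ 0) (p : ℕ) :
    (a ^ 2 * b).factorization p = 2 * a.factorization p + b.factorization p := by
  rw [Nat.factorization_mul (pow_ne_zero 2 ha) hb, Nat.factorization_pow]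
  simp [Finsupp.add_apply, Finsupp.smul_apply, smul_eq_mul]

lemma sq_mul_inj {a b a' b' : ℕ} (ha : Squarefree a) (hb : Squarefree b)
    (ha' : Squarefree a') (hb' : Squarefree b') (h : a ^ 2 * b = a' ^ 2 * b') :
    a = a' ∧ b = b' := by
  have key : ∀ p : ℕ, a.factorization p = a'.factorization p ∧
      b.factorization p = b'.factorization p := by
    intro p
    have h1 := fact_sq_mul ha.ne_zero hb.ne_zero p
    have h2 := fact_sq_mul ha'.ne_zero hb'.ne_zero p
    rw [h] at h1
    have e1 : a.factorization p ≤ 1 :=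
      (Nat.squarefree_iff_factorization_le_one ha.ne_zero).1 ha p
    have e2 : b.factorization p ≤ 1 :=
      (Nat.squarefree_iff_factorization_le_one hb.ne_zero).1 hb p
    have e3 : a'.factorization p ≤ 1 :=
      (Nat.squarefree_iff_factorization_le_one ha'.ne_zero).1 ha' p
    have e4 : b'.factorization p ≤ 1 :=
      (Nat.squarefree_iff_factorization_le_one hb'.ne_zero).1 hb' p
    omega
  constructor
  · exact Nat.factorization_inj (by simp [ha.ne_zero]) (by simp [ha'.ne_zero])
      (Finsupp.ext fun p => (key p).1)
  · exact Nat.factorization_inj (by simp [hb.ne_zero]) (by simp [hb'.ne_zero])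
      (Finsupp.ext fun p => (key p).2)

lemma squarefree_prod_primes : ∀ {s : Finset ℕ}, (∀ p ∈ s, p.Prime) →
    Squarefree (∏ p ∈ s, p) := by
  intro s
  induction s using Finset.induction_on with
  | empty => intro _; simpa using squarefree_one
  | @insert q s' hq ih =>
    intro hqs
    rw [Finset.prod_insert hq]
    have hqprime : q.Prime := hqs q (Finset.mem_insert_self q s')
    have hcop : Nat.Coprime q (∏ p ∈ s', p) := by
      rw [hqprime.coprime_iff_not_dvd]
      intro hdvd
      obtain ⟨r, hr, hqr⟩ := (Nat.Prime.prime hqprime).dvd_finset_prod_iff _ |>.1 hdvd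
      have : r = q := ((hqs r (Finset.mem_insert_of_mem hr)).dvd_iff_eq
        (Nat.Prime.ne_one hqprime)).1 hqr
      exact hq (this ▸ hr)
    exact (Nat.squarefree_mul hcop).2 ⟨hqprime.squarefree,
      ih (fun p hp => hqs p (Finset.mem_insert_of_mem hp))⟩

lemma Gfun_one (d : ℕ) : Gfun d 1 = 1 := by simp [Gfun]

lemma Gfun_zero (d : ℕ) : Gfun d 0 = 0 := by simp [Gfun]

lemma Gfun_mul (d : ℕ) {m k : ℕ} (h : Nat.Coprime m k) :
    Gfun d (m * k) = Gfun d m * Gfun d k := by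
  rcases eq_or_ne m 0 with rfl | hm
  · rw [Nat.coprime_zero_left] at h
    subst h; simp [Gfun]
  rcases eq_or_ne k 0 with rfl | hk
  · rw [Nat.coprime_zero_right] at h
    subst h; simp [Gfun]
  rw [Gfun, Gfun, Gfun, if_neg (mul_ne_zero hm hk), if_neg hm, if_neg hk,
    Nat.primeFactors_mul hm hk, Finset.prod_union h.disjoint_primeFactors]
  congr 1
  · refine Finset.prod_congr rfl fun p hp => ?_
    have hpk : p ∉ k.primeFactors := Finset.disjoint_left.1 h.disjoint_primeFactors hp
    have : k.factorization p = 0 := by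
      rw [← Nat.support_factorization] at hpk
      exact Finsupp.notMem_support_iff.1 hpk
    rw [Nat.factorization_mul hm hk, Finsupp.add_apply, this, add_zero]
  · refine Finset.prod_congr rfl fun p hp => ?_
    have hpm : p ∉ m.primeFactors := Finset.disjoint_right.1 h.disjoint_primeFactors hp
    have : m.factorization p = 0 := by
      rw [← Nat.support_factorization] at hpm
      exact Finsupp.notMem_support_iff.1 hpm
    rw [Nat.factorization_mul hm hk, Finsupp.add_apply, this, zero_add]

lemma Gfun_prime_pow (d : ℕ) {p : ℕ} (hp : p.Prime) (e : ℕ) (he : e ≠ 0) :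
    Gfun d (p ^ e) = cfac d p e := by
  rw [Gfun, if_neg (pow_ne_zero e hp.pos.ne'), Nat.primeFactors_prime_pow he hp,
    Finset.prod_singleton, Nat.Prime.factorization_pow hp, Finsupp.single_eq_same]

lemma Gfun_tsum_prime (d : ℕ) (hd : 2 ≤ d) {p : ℕ} (hp : p.Prime) :
    ∑' e : ℕ, Gfun d (p ^ e) = 1 - 2 / (p : ℝ) ^ d + 1 / (p : ℝ) ^ (2 * d - 1) := by
  rw [tsum_eq_sum (s := Finset.range 4) (fun e he => ?_)]
  · rw [show (4:ℕ) = 3 + 1 from rfl, Finset.sum_range_succ, Finset.sum_range_succ,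
      Finset.sum_range_succ, Finset.sum_range_one]
    rw [pow_zero, Gfun_one, Gfun_prime_pow d hp 1 one_ne_zero,
      Gfun_prime_pow d hp 2 two_ne_zero, Gfun_prime_pow d hp 3 three_ne_zero]
    rw [cfac, if_pos (Or.inl rfl), cfac, if_pos (Or.inr rfl), cfac,
      if_neg (by omega), if_pos rfl]
    ring
  · rw [Finset.mem_range, not_lt] at he
    rw [Gfun_prime_pow d hp e (by omega), cfac, if_neg (by omega), if_neg (by omega)]

lemma pw12 (d : ℕ) (hd : 2 ≤ d) (p : ℕ) (e : ℕ) (he : e = 1 ∨ e = 2) :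
    -((1 / (p:ℝ)) ^ (d - 1)) * (1 / (p:ℝ)) = cfac d p e := by
  rw [cfac, if_pos he, neg_mul, ← pow_succ, show d - 1 + 1 = d by omega, one_div_pow]

lemma pw3 (d : ℕ) (hd : 2 ≤ d) (p : ℕ) :
    -((1 / (p:ℝ)) ^ (d - 1)) * -((1 / (p:ℝ)) ^ (d - 1)) * (1 / (p:ℝ)) = cfac d p 3 := by
  rw [cfac, if_neg (by omega), if_pos rfl, neg_mul_neg, ← pow_add, ← pow_succ,
    show d - 1 + (d - 1) + 1 = 2 * d - 1 by omega, one_div_pow]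

lemma Gfun_sq_mul (d : ℕ) (hd : 2 ≤ d) {a b : ℕ} (ha : Squarefree a) (hb : Squarefree b) :
    Gfun d (a ^ 2 * b) = hfun d (a, b) := by
  have ha0 := ha.ne_zero
  have hb0 := hb.ne_zero
  set A := a.primeFactors with hA
  set B := b.primeFactors with hB
  have hn0 : a ^ 2 * b ≠ 0 := mul_ne_zero (pow_ne_zero _ ha0) hb0
  have hpf : (a ^ 2 * b).primeFactors = A ∪ B := by
    rw [Nat.primeFactors_mul (pow_ne_zero _ ha0) hb0, Nat.primeFactors_pow a two_ne_zero]
  have he : ∀ p, (a ^ 2 * b).factorization p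
      = 2 * (if p ∈ A then 1 else 0) + (if p ∈ B then 1 else 0) := fun p => by
    rw [fact_sq_mul ha0 hb0, sf_fact ha, sf_fact hb]
  have he2 : ∀ p ∈ A \ B, (a ^ 2 * b).factorization p = 2 := by
    intro p hp; rw [Finset.mem_sdiff] at hp; rw [he, if_pos hp.1, if_neg hp.2]
  have he1 : ∀ p ∈ B \ A, (a ^ 2 * b).factorization p = 1 := by
    intro p hp; rw [Finset.mem_sdiff] at hp; rw [he, if_neg hp.2, if_pos hp.1]
  have he3 : ∀ p ∈ B ∩ A, (a ^ 2 * b).factorization p = 3 := by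
    intro p hp; rw [Finset.mem_inter] at hp; rw [he, if_pos hp.2, if_pos hp.1]
  have GG : Gfun d (a ^ 2 * b) = (∏ p ∈ A \ B, cfac d p 2) *
      ((∏ p ∈ B \ A, cfac d p 1) * (∏ p ∈ B ∩ A, cfac d p 3)) := by
    rw [Gfun, if_neg hn0, hpf, ← Finset.sdiff_union_self_eq_union,
      Finset.prod_union Finset.sdiff_disjoint]
    congr 1
    · exact Finset.prod_congr rfl fun p hp => by rw [he2 p hp]
    · conv_lhs => rw [← Finset.sdiff_union_inter B A]
      rw [Finset.prod_union (Finset.disjoint_sdiff_inter B A)]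
      congr 1
      · exact Finset.prod_congr rfl fun p hp => by rw [he1 p hp]
      · exact Finset.prod_congr rfl fun p hp => by rw [he3 p hp]
  have hmua : ((μ a : ℤ) : ℝ) = ∏ p ∈ A, (-1 : ℝ) := by
    have hcard : A.card = Ω a := by
      rw [hA, cardFactors_apply, ← Nat.toFinset_factors,
        List.toFinset_card_of_nodup ha.nodup_primeFactorsList]
    rw [moebius_apply_of_squarefree ha, Finset.prod_const, hcard]
    push_cast
    rfl
  have hmub : ((μ b : ℤ) : ℝ) = ∏ p ∈ B, (-1 : ℝ) := by
    have hcard : B.card = Ω b := by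
      rw [hB, cardFactors_apply, ← Nat.toFinset_factors,
        List.toFinset_card_of_nodup hb.nodup_primeFactorsList]
    rw [moebius_apply_of_squarefree hb, Finset.prod_const, hcard]
    push_cast
    rfl
  have hprodA : ((1:ℝ) / a) ^ (d - 1) = ∏ p ∈ A, (1 / (p:ℝ)) ^ (d - 1) := by
    rw [Finset.prod_pow]
    congr 1
    rw [show (a:ℝ) = ∏ p ∈ A, (p:ℝ) from by
      rw [hA, ← Nat.cast_prod, Nat.prod_primeFactors_of_squarefree ha]]
    rw [one_div, ← Finset.prod_inv_distrib]
    simp [one_div]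
  have hprodB : ((1:ℝ) / b) ^ (d - 1) = ∏ p ∈ B, (1 / (p:ℝ)) ^ (d - 1) := by
    rw [Finset.prod_pow]
    congr 1
    rw [show (b:ℝ) = ∏ p ∈ B, (p:ℝ) from by
      rw [hB, ← Nat.cast_prod, Nat.prod_primeFactors_of_squarefree hb]]
    rw [one_div, ← Finset.prod_inv_distrib]
    simp [one_div]
  have hlcmnat : Nat.lcm a b = ∏ p ∈ A ∪ B, p := by
    apply Nat.dvd_antisymm
    · apply Nat.lcm_dvd
      · conv_lhs => rw [← Nat.prod_primeFactors_of_squarefree ha]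
        exact Finset.prod_dvd_prod_of_subset _ _ _ Finset.subset_union_left
      · conv_lhs => rw [← Nat.prod_primeFactors_of_squarefree hb]
        exact Finset.prod_dvd_prod_of_subset _ _ _ Finset.subset_union_right
    · apply Finset.prod_primes_dvd
      · intro p hp
        rcases Finset.mem_union.1 hp with h | h
        · exact (Nat.prime_of_mem_primeFactors h).prime
        · exact (Nat.prime_of_mem_primeFactors h).prime
      · intro p hp
        rcases Finset.mem_union.1 hp with h | h
        · exact (Nat.dvd_of_mem_primeFactors h).trans (Nat.dvd_lcm_left a b)
        · exact (Nat.dvd_of_mem_primeFactors h).trans (Nat.dvd_lcm_right a b)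
  have hlcm : (1:ℝ) / (Nat.lcm a b) = ∏ p ∈ A ∪ B, (1 / (p:ℝ)) := by
    rw [hlcmnat]
    push_cast
    rw [one_div, ← Finset.prod_inv_distrib]
    simp [one_div]
  have step1 : hfun d (a, b) = (∏ p ∈ A, -((1 / (p:ℝ)) ^ (d - 1))) *
      (∏ p ∈ B, -((1 / (p:ℝ)) ^ (d - 1))) * (∏ p ∈ A ∪ B, (1 / (p:ℝ))) := by
    show ((μ a : ℤ) : ℝ) * ((μ b : ℤ) : ℝ) * ((1:ℝ) / a) ^ (d-1) * ((1:ℝ) / b) ^ (d-1)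
        * ((1:ℝ) / (Nat.lcm a b)) = _
    rw [hmua, hmub, hprodA, hprodB, hlcm]
    rw [show ∀ x y z w v : ℝ, x * y * z * w * v = (x * z) * (y * w) * v from
      fun _ _ _ _ _ => by ring]
    rw [← Finset.prod_mul_distrib, ← Finset.prod_mul_distrib]
    congr 1
    congr 1
    · exact Finset.prod_congr rfl fun p _ => by ring
    · exact Finset.prod_congr rfl fun p _ => by ring
  rw [GG, step1]
  have splitA : (∏ p ∈ A, -((1 / (p:ℝ)) ^ (d - 1)))
      = (∏ p ∈ A \ B, -((1 / (p:ℝ)) ^ (d - 1))) * (∏ p ∈ B ∩ A, -((1 / (p:ℝ)) ^ (d - 1))) := by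
    conv_lhs => rw [← Finset.sdiff_union_inter A B]
    rw [Finset.prod_union (Finset.disjoint_sdiff_inter A B), Finset.inter_comm]
  have splitB : (∏ p ∈ B, -((1 / (p:ℝ)) ^ (d - 1)))
      = (∏ p ∈ B \ A, -((1 / (p:ℝ)) ^ (d - 1))) * (∏ p ∈ B ∩ A, -((1 / (p:ℝ)) ^ (d - 1))) := by
    conv_lhs => rw [← Finset.sdiff_union_inter B A]
    rw [Finset.prod_union (Finset.disjoint_sdiff_inter B A)]
  have splitU : (∏ p ∈ A ∪ B, (1 / (p:ℝ)))
      = (∏ p ∈ A \ B, (1 / (p:ℝ))) * ((∏ p ∈ B \ A, (1 / (p:ℝ))) * (∏ p ∈ B ∩ A, (1 / (p:ℝ)))) := by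
    rw [← Finset.sdiff_union_self_eq_union, Finset.prod_union Finset.sdiff_disjoint]
    congr 1
    conv_lhs => rw [← Finset.sdiff_union_inter B A]
    rw [Finset.prod_union (Finset.disjoint_sdiff_inter B A)]
  rw [splitA, splitB, splitU]
  rw [show ∀ x1 x3 y1 y3 z1 z2 z3 : ℝ, (x1 * x3) * (y1 * y3) * (z1 * (z2 * z3))
      = (x1 * z1) * ((y1 * z2) * (x3 * y3 * z3)) from fun _ _ _ _ _ _ _ => by ring]
  rw [← Finset.prod_mul_distrib, ← Finset.prod_mul_distrib, ← Finset.prod_mul_distrib,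
    ← Finset.prod_mul_distrib]
  congr 1
  · exact Finset.prod_congr rfl fun p _ => (pw12 d hd p 2 (Or.inr rfl)).symm
  congr 1
  · exact Finset.prod_congr rfl fun p _ => (pw12 d hd p 1 (Or.inl rfl)).symm
  · exact Finset.prod_congr rfl fun p _ => (pw3 d hd p).symm

lemma hfun_supp (d : ℕ) {ab : ℕ × ℕ} (h : ¬(Squarefree ab.1 ∧ Squarefree ab.2)) :
    hfun d ab = 0 := by
  rw [Decidable.not_and_iff_or_not] at h
  rcases h with h | h <;>
    simp [hfun, moebius_eq_zero_of_not_squarefree h]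

lemma Gfun_ne_zero (d : ℕ) {n : ℕ} (h : Gfun d n ≠ 0) :
    ∃ a b : ℕ, Squarefree a ∧ Squarefree b ∧ a ^ 2 * b = n := by
  have hn0 : n ≠ 0 := by rintro rfl; exact h (Gfun_zero d)
  rw [Gfun, if_neg hn0] at h
  have hfac : ∀ p ∈ n.primeFactors, n.factorization p = 1 ∨ n.factorization p = 2 ∨
      n.factorization p = 3 := by
    intro p hp
    by_contra hcon
    push_neg at hcon
    refine h (Finset.prod_eq_zero hp ?_)
    rw [cfac, if_neg (by omega), if_neg (by omega)]
  set sa := n.primeFactors.filter (fun p => 2 ≤ n.factorization p) with hsa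
  set sb := n.primeFactors.filter
    (fun p => n.factorization p = 1 ∨ n.factorization p = 3) with hsb
  have hpa : ∀ p ∈ sa, p.Prime := fun p hp =>
    Nat.prime_of_mem_primeFactors (Finset.mem_filter.1 hp).1
  have hpb : ∀ p ∈ sb, p.Prime := fun p hp =>
    Nat.prime_of_mem_primeFactors (Finset.mem_filter.1 hp).1
  have hsfa : Squarefree (∏ p ∈ sa, p) := squarefree_prod_primes hpa
  have hsfb : Squarefree (∏ p ∈ sb, p) := squarefree_prod_primes hpb
  refine ⟨∏ p ∈ sa, p, ∏ p ∈ sb, p, hsfa, hsfb, ?_⟩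
  have hApf : (∏ p ∈ sa, p).primeFactors = sa := Nat.primeFactors_prod hpa
  have hBpf : (∏ p ∈ sb, p).primeFactors = sb := Nat.primeFactors_prod hpb
  have key : ∀ p, ((∏ p ∈ sa, p) ^ 2 * (∏ p ∈ sb, p)).factorization p = n.factorization p := by
    intro p
    rw [fact_sq_mul hsfa.ne_zero hsfb.ne_zero, sf_fact hsfa, sf_fact hsfb, hApf, hBpf]
    by_cases hp : p ∈ n.primeFactors
    · rcases hfac p hp with h1 | h2 | h3
      · rw [if_neg (by simp [hsa, Finset.mem_filter, h1]),
          if_pos (by simp [hsb, Finset.mem_filter, hp, h1]), h1]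
      · rw [if_pos (by simp [hsa, Finset.mem_filter, hp, h2]),
          if_neg (by simp [hsb, Finset.mem_filter, h2]), h2]
      · rw [if_pos (by simp [hsa, Finset.mem_filter, hp, h3]),
          if_pos (by simp [hsb, Finset.mem_filter, hp, h3]), h3]
    · have h0 : n.factorization p = 0 := by
        rw [← Nat.support_factorization] at hp
        exact Finsupp.notMem_support_iff.1 hp
      rw [if_neg (by simp [hsa, Finset.mem_filter, hp]),
        if_neg (by simp [hsb, Finset.mem_filter, hp]), h0]
  exact Nat.factorization_inj
    (by simp [mul_ne_zero (pow_ne_zero _ hsfa.ne_zero) hsfb.ne_zero])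
    (by simp [hn0]) (Finsupp.ext key)

lemma tsum_hfun_eq (d : ℕ) (hd : 2 ≤ d) :
    ∑' ab : ℕ × ℕ, hfun d ab
      = ∏' p : Nat.Primes, (1 - 2 / (p : ℝ) ^ d + 1 / (p : ℝ) ^ (2 * d - 1)) := by
  classical
  set S : Set (ℕ × ℕ) := {x | Squarefree x.1 ∧ Squarefree x.2} with hS
  set i : S → ℕ := fun x => x.1.1 ^ 2 * x.1.2 with hi
  have hinj : Function.Injective i := by
    rintro ⟨⟨a, b⟩, hx⟩ ⟨⟨a', b'⟩, hx'⟩ hab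
    obtain ⟨h1, h2⟩ := sq_mul_inj hx.1 hx.2 hx'.1 hx'.2 hab
    exact Subtype.ext (Prod.ext h1 h2)
  have hrange : ∀ n ∉ Set.range i, Gfun d n = 0 := by
    intro n hn
    by_contra h
    obtain ⟨a, b, ha, hb, hab⟩ := Gfun_ne_zero d h
    exact hn ⟨⟨(a, b), ha, hb⟩, hab⟩
  have hGi : ∀ x : S, Gfun d (i x) = hfun d x := by
    rintro ⟨⟨a, b⟩, hx⟩
    exact Gfun_sq_mul d hd hx.1 hx.2
  have hsupp : Function.support (hfun d) ⊆ S := by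
    intro ab hab
    by_contra h
    exact hab (hfun_supp d h)
  have hsum_h : Summable (fun ab : ℕ × ℕ => ‖hfun d ab‖) :=
    Summable.of_nonneg_of_le (fun _ => norm_nonneg _) (fun ab => hfun_bound d hd ab)
      bound_summable
  have hsum_G : Summable (fun n => ‖Gfun d n‖) := by
    have h1 : Summable ((fun n => ‖Gfun d n‖) ∘ i) := by
      apply ((hsum_h.subtype S).congr)
      intro x
      simp only [Function.comp_apply, hGi x]
    exact (hinj.summable_iff (fun n hn => by rw [hrange n hn, norm_zero])).1 h1
  calc ∑' ab : ℕ × ℕ, hfun d ab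
      = ∑' x : S, hfun d x := (tsum_subtype_eq_of_support_subset hsupp).symm
    _ = ∑' x : S, Gfun d (i x) := tsum_congr fun x => (hGi x).symm
    _ = ∑' n, Gfun d n := hinj.tsum_eq (Function.support_subset_iff'.2 hrange)
    _ = ∏' p : Nat.Primes, ∑' e, Gfun d ((p : ℕ) ^ e) :=
        (EulerProduct.eulerProduct_tprod (Gfun_one d) (fun {m k} hc => Gfun_mul d hc)
          hsum_G (Gfun_zero d)).symm
    _ = ∏' p : Nat.Primes, (1 - 2 / (p : ℝ) ^ d + 1 / (p : ℝ) ^ (2 * d - 1)) :=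
        tprod_congr fun p => Gfun_tsum_prime d hd p.2


/-- For every integer `d ≥ 2`, the density of
`(2d−1)`-tuples `(x₁,…,x_{2d−1}) ∈ {1,…,n}^{2d−1}` with
`gcd(x₁,…,x_d) = 1` and `gcd(x_d,…,x_{2d−1}) = 1` converges to
`∏_p (1 − 2/p^d + 1/p^{2d−1})`. -/
theorem density_two_overlapping_coprime_tuples (d : ℕ) (hd : 2 ≤ d) :
    Tendsto
      (fun n : ℕ =>
        ((((Fintype.piFinset fun _ : Fin (2 * d - 1) => Finset.Icc 1 n)).filter
            (fun x : Fin (2 * d - 1) → ℕ =>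
              (Finset.univ.filter fun i : Fin (2 * d - 1) => (i : ℕ) < d).gcd x = 1 ∧
              (Finset.univ.filter fun i : Fin (2 * d - 1) => d - 1 ≤ (i : ℕ)).gcd x = 1)).card : ℝ)
          / (n : ℝ) ^ (2 * d - 1))
      atTop
      (nhds (∏' p : Nat.Primes, (1 - 2 / (p : ℝ) ^ d + 1 / (p : ℝ) ^ (2 * d - 1)))) := by
  rw [← tsum_hfun_eq d hd]
  have hdom : Tendsto (fun n : ℕ => ∑' ab : ℕ × ℕ, Ffun d n ab) atTop
      (𝓝 (∑' ab : ℕ × ℕ, hfun d ab)) := by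
    apply tendsto_tsum_of_dominated_convergence bound_summable (Ffun_tendsto d hd)
    filter_upwards [eventually_ge_atTop 1] with n hn using fun ab => Ffun_bound d hd n hn ab
  apply hdom.congr'
  filter_upwards [eventually_ge_atTop 1] with n hn
  exact tsum_Ffun_eq d hd n hn
end

section
/- Let Y be a Binomial(n, α) random variable, let λ > 0, and set λ₁ := e^λ. If 2αλ₁² < 1 and α < 1/2, then for all sufficiently large n: (1/n)·log E[ e^{(λ/n)·Y²} ] ≤ 4λα²λ₁⁴ + log(4(n+1))/n. -/
open Filter Real

set_option maxHeartbeats 2000000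
lemma binom_term_le (a b : ℝ) (ha : 0 ≤ a) (hb : 0 ≤ b) (n i : ℕ)
    (hi : i ∈ Finset.range (n + 1)) :
    (n.choose i : ℝ) * a ^ i * b ^ (n - i) ≤ (a + b) ^ n := by
  have h := add_pow a b n
  rw [h]
  have : (n.choose i : ℝ) * a ^ i * b ^ (n - i)
      = a ^ i * b ^ (n - i) * (n.choose i : ℝ) := by ring
  rw [this]
  exact Finset.single_le_sum (f := fun k => a ^ k * b ^ (n - k) * (n.choose k : ℝ))
    (fun k _ => by positivity) hi

/-- Let `Y ~ Binomial(n, α)` and `λ > 0`, `λ₁ = e^λ`. If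
`2αλ₁² < 1` and `α < 1/2`, then for all sufficiently large `n`,
`(1/n)·log E[e^{(λ/n)Y²}] ≤ 4λα²λ₁⁴ + log(4(n+1))/n`, where the expectation of
a function of a `Binomial(n, α)` variable is written out explicitly. -/
theorem binomial_mgf_bound (α lam : ℝ) (hα0 : 0 < α) (hα1 : α < 1)
    (hlam : 0 < lam) (h1 : 2 * α * (Real.exp lam) ^ 2 < 1) (h2 : α < 1 / 2) :
    ∀ᶠ n : ℕ in atTop,
      (1 / (n : ℝ)) *
        Real.log (∑ i ∈ Finset.range (n + 1),
          (n.choose i : ℝ) * α ^ i * (1 - α) ^ (n - i) *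
            Real.exp (lam * (i : ℝ) ^ 2 / (n : ℝ)))
      ≤ 4 * lam * α ^ 2 * (Real.exp lam) ^ 4 + Real.log (4 * ((n : ℝ) + 1)) / (n : ℝ) := by
  filter_upwards [eventually_ge_atTop 1] with n hn
  have hn' : (1 : ℝ) ≤ (n : ℝ) := by exact_mod_cast hn
  have hnpos : (0 : ℝ) < (n : ℝ) := by linarith
  set c : ℝ := 4 * lam * α ^ 2 * (Real.exp lam) ^ 4 with hc
  have hcpos : 0 < c := by positivity
  set x₀ : ℝ := 2 * α * (Real.exp lam) ^ 2 with hx₀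
  have hx₀pos : 0 < x₀ := by positivity
  have hcx : c = lam * x₀ ^ 2 := by rw [hc, hx₀]; ring
  have h1α : 0 ≤ 1 - α := by linarith
  -- key per-term bound
  have hterm : ∀ i ∈ Finset.range (n + 1),
      (n.choose i : ℝ) * α ^ i * (1 - α) ^ (n - i) *
        Real.exp (lam * (i : ℝ) ^ 2 / (n : ℝ)) ≤ Real.exp ((n : ℝ) * c) := by
    intro i hi
    have hi' : i ≤ n := Nat.lt_succ_iff.mp (Finset.mem_range.mp hi)
    have hiR : (i : ℝ) ≤ (n : ℝ) := by exact_mod_cast hi'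
    have hi0 : (0 : ℝ) ≤ (i : ℝ) := Nat.cast_nonneg i
    rcases le_or_gt (i : ℝ) (x₀ * n) with hcase | hcase
    · -- small i : pmf ≤ 1, exponent ≤ n c
      have hP : (n.choose i : ℝ) * α ^ i * (1 - α) ^ (n - i) ≤ 1 := by
        have := binom_term_le α (1 - α) hα0.le h1α n i hi
        simpa using this
      have hexp : lam * (i : ℝ) ^ 2 / (n : ℝ) ≤ (n : ℝ) * c := by
        rw [hcx]
        rw [div_le_iff₀ hnpos]
        have hsq : (i : ℝ) ^ 2 ≤ (x₀ * n) ^ 2 := by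
          apply sq_le_sq' _ hcase
          nlinarith
        nlinarith
      calc (n.choose i : ℝ) * α ^ i * (1 - α) ^ (n - i) *
            Real.exp (lam * (i : ℝ) ^ 2 / (n : ℝ))
          ≤ 1 * Real.exp (lam * (i : ℝ) ^ 2 / (n : ℝ)) := by
            apply mul_le_mul_of_nonneg_right hP (Real.exp_pos _).le
        _ ≤ Real.exp ((n : ℝ) * c) := by
            rw [one_mul]; exact Real.exp_le_exp.mpr hexp
    · -- large i : Chernoff with θ = 2λ
      have hsplit : Real.exp (lam * (i : ℝ) ^ 2 / (n : ℝ))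
          = Real.exp ((i : ℝ) * (2 * lam)) *
            Real.exp (lam * (i : ℝ) ^ 2 / (n : ℝ) - 2 * lam * i) := by
        rw [← Real.exp_add]; ring_nf
      have hrw : (n.choose i : ℝ) * α ^ i * (1 - α) ^ (n - i) *
            Real.exp (lam * (i : ℝ) ^ 2 / (n : ℝ))
          = ((n.choose i : ℝ) * (α * Real.exp (2 * lam)) ^ i * (1 - α) ^ (n - i)) *
            Real.exp (lam * (i : ℝ) ^ 2 / (n : ℝ) - 2 * lam * i) := by
        rw [hsplit, mul_pow, ← Real.exp_nat_mul]
        ring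
      rw [hrw]
      have hchern : (n.choose i : ℝ) * (α * Real.exp (2 * lam)) ^ i * (1 - α) ^ (n - i)
          ≤ (α * Real.exp (2 * lam) + (1 - α)) ^ n :=
        binom_term_le _ _ (by positivity) h1α n i hi
      have hbase : α * Real.exp (2 * lam) + (1 - α)
          ≤ Real.exp (α * (Real.exp (2 * lam) - 1)) := by
        have := Real.add_one_le_exp (α * (Real.exp (2 * lam) - 1))
        linarith
      have hpow : (α * Real.exp (2 * lam) + (1 - α)) ^ n
          ≤ Real.exp ((n : ℝ) * (α * (Real.exp (2 * lam) - 1))) := by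
        calc (α * Real.exp (2 * lam) + (1 - α)) ^ n
            ≤ (Real.exp (α * (Real.exp (2 * lam) - 1))) ^ n := by
              apply pow_le_pow_left₀ (by positivity) hbase
          _ = Real.exp ((n : ℝ) * (α * (Real.exp (2 * lam) - 1))) := by
              rw [← Real.exp_nat_mul]
      -- e^{2λ} - 1 ≤ 2λ e^{2λ}
      have hexp2 : Real.exp (2 * lam) - 1 ≤ 2 * lam * Real.exp (2 * lam) := by
        have h := Real.add_one_le_exp (-(2 * lam))
        have hp := Real.exp_pos (2 * lam)
        have hm : Real.exp (-(2 * lam)) * Real.exp (2 * lam) = 1 := by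
          rw [← Real.exp_add]; simp
        nlinarith
      have he2 : Real.exp (2 * lam) = (Real.exp lam) ^ 2 := by
        rw [two_mul, Real.exp_add, sq]
      have hA : α * (Real.exp (2 * lam) - 1) ≤ lam * x₀ := by
        rw [hx₀, ← he2]
        nlinarith [mul_le_mul_of_nonneg_left hexp2 hα0.le, Real.exp_pos (2 * lam)]
      have hE : lam * (i : ℝ) ^ 2 / (n : ℝ) - 2 * lam * i ≤ -(lam * i) := by
        have : lam * (i : ℝ) ^ 2 / (n : ℝ) ≤ lam * i := by
          rw [div_le_iff₀ hnpos]
          nlinarith [mul_le_mul_of_nonneg_left (mul_le_mul_of_nonneg_left hiR hi0) hlam.le]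
        linarith
      calc ((n.choose i : ℝ) * (α * Real.exp (2 * lam)) ^ i * (1 - α) ^ (n - i)) *
            Real.exp (lam * (i : ℝ) ^ 2 / (n : ℝ) - 2 * lam * i)
          ≤ Real.exp ((n : ℝ) * (α * (Real.exp (2 * lam) - 1))) *
            Real.exp (-(lam * i)) := by
            apply mul_le_mul (le_trans hchern hpow) (Real.exp_le_exp.mpr hE)
              (Real.exp_pos _).le (Real.exp_pos _).le
        _ ≤ Real.exp ((n : ℝ) * (lam * x₀)) * Real.exp (-(lam * x₀ * n)) := by
            apply mul_le_mul (Real.exp_le_exp.mpr (by nlinarith))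
              (Real.exp_le_exp.mpr (by nlinarith)) (Real.exp_pos _).le (Real.exp_pos _).le
        _ = 1 := by rw [← Real.exp_add]; ring_nf; exact Real.exp_zero
        _ ≤ Real.exp ((n : ℝ) * c) := Real.one_le_exp (by positivity)
  -- sum bound
  have hsum : (∑ i ∈ Finset.range (n + 1),
        (n.choose i : ℝ) * α ^ i * (1 - α) ^ (n - i) *
          Real.exp (lam * (i : ℝ) ^ 2 / (n : ℝ)))
      ≤ ((n : ℝ) + 1) * Real.exp ((n : ℝ) * c) := by
    calc (∑ i ∈ Finset.range (n + 1),
          (n.choose i : ℝ) * α ^ i * (1 - α) ^ (n - i) *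
            Real.exp (lam * (i : ℝ) ^ 2 / (n : ℝ)))
        ≤ ∑ _i ∈ Finset.range (n + 1), Real.exp ((n : ℝ) * c) :=
          Finset.sum_le_sum hterm
      _ = ((n : ℝ) + 1) * Real.exp ((n : ℝ) * c) := by
          rw [Finset.sum_const, Finset.card_range]
          push_cast
          ring
  have hpos : 0 < ∑ i ∈ Finset.range (n + 1),
      (n.choose i : ℝ) * α ^ i * (1 - α) ^ (n - i) *
        Real.exp (lam * (i : ℝ) ^ 2 / (n : ℝ)) := by
    apply Finset.sum_pos
    · intro i hi
      have hi' : i ≤ n := Nat.lt_succ_iff.mp (Finset.mem_range.mp hi)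
      have hch : 0 < (n.choose i : ℝ) := by
        exact_mod_cast Nat.choose_pos hi'
      have h1α' : (0:ℝ) < 1 - α := by linarith
      exact mul_pos (mul_pos (mul_pos hch (pow_pos hα0 i)) (pow_pos h1α' (n - i)))
        (Real.exp_pos _)
    · exact ⟨0, Finset.mem_range.mpr (Nat.succ_pos n)⟩
  have hlog : Real.log (∑ i ∈ Finset.range (n + 1),
        (n.choose i : ℝ) * α ^ i * (1 - α) ^ (n - i) *
          Real.exp (lam * (i : ℝ) ^ 2 / (n : ℝ)))
      ≤ Real.log (((n : ℝ) + 1)) + (n : ℝ) * c := by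
    have := Real.log_le_log hpos hsum
    rwa [Real.log_mul (by positivity) (Real.exp_pos _).ne', Real.log_exp] at this
  have hlog4 : Real.log ((n : ℝ) + 1) ≤ Real.log (4 * ((n : ℝ) + 1)) := by
    apply Real.log_le_log (by positivity)
    nlinarith
  have key : (1 / (n : ℝ)) * Real.log (∑ i ∈ Finset.range (n + 1),
        (n.choose i : ℝ) * α ^ i * (1 - α) ^ (n - i) *
          Real.exp (lam * (i : ℝ) ^ 2 / (n : ℝ)))
      ≤ (1 / (n : ℝ)) * (Real.log (4 * ((n : ℝ) + 1)) + (n : ℝ) * c) := by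
    apply mul_le_mul_of_nonneg_left _ (by positivity)
    linarith [hlog, hlog4]
  calc (1 / (n : ℝ)) * Real.log (∑ i ∈ Finset.range (n + 1),
        (n.choose i : ℝ) * α ^ i * (1 - α) ^ (n - i) *
          Real.exp (lam * (i : ℝ) ^ 2 / (n : ℝ)))
      ≤ (1 / (n : ℝ)) * (Real.log (4 * ((n : ℝ) + 1)) + (n : ℝ) * c) := key
    _ = c + Real.log (4 * ((n : ℝ) + 1)) / (n : ℝ) := by
        field_simp
        ring
end

section
/- Consider, for each n, a family (Y_p)_{p ∈ S(k,n)} of independent random variables with Y_p distributed as Binomial(n, 1/p). Then for every ε > 0 there exist K and N such that for all k ≥ K and all n ≥ N: (1/n)·log P( ∑_{p ∈ S(k,n)} Y_p² > n²ε ) ≤ −(ε/8)·log k + 4. -/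
open MeasureTheory ProbabilityTheory Filter Real

/-- `S(k₁,k₂)`: the finite set of primes `p` with `k₁ < p ≤ k₂`. -/
def primesIn (k₁ k₂ : ℕ) : Finset ℕ := (Finset.Ioc k₁ k₂).filter Nat.Prime

section AuxLemmas
open Finset

theorem pow_le_fact_exp (a : ℕ) : (a:ℝ)^a ≤ a.factorial * Real.exp a := by
  induction a with
  | zero => simp
  | succ m ih =>
    rcases Nat.eq_zero_or_pos m with hm | hm
    · subst hm; simpa using (by nlinarith [Real.add_one_le_exp (1:ℝ)] : (1:ℝ) ≤ Real.exp 1)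
    · have hm' : (0:ℝ) < m := by exact_mod_cast hm
      have h1 : ((m:ℝ)+1)^m ≤ (m:ℝ)^m * Real.exp 1 := by
        have h0 : ((m:ℝ)+1) = (m:ℝ) * (1 + (m:ℝ)⁻¹) := by field_simp
        rw [h0, mul_pow]
        have h2 : (1 + (m:ℝ)⁻¹)^m ≤ Real.exp 1 := by
          have := Real.add_one_le_exp ((m:ℝ)⁻¹)
          calc (1 + (m:ℝ)⁻¹)^m ≤ (Real.exp ((m:ℝ)⁻¹))^m := by
                apply pow_le_pow_left₀ (by positivity) (by linarith)
            _ = Real.exp 1 := by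
                rw [← Real.exp_nat_mul]; congr 1; field_simp
        exact mul_le_mul_of_nonneg_left h2 (by positivity)
      have key : ((m:ℝ)+1)^(m+1) ≤ ((m:ℝ)+1) * ((m:ℝ)^m * Real.exp 1) := by
        rw [pow_succ, mul_comm]
        exact mul_le_mul_of_nonneg_left h1 (by positivity)
      calc ((m+1:ℕ):ℝ)^(m+1) = ((m:ℝ)+1)^(m+1) := by push_cast; ring_nf
        _ ≤ ((m:ℝ)+1) * ((m:ℝ)^m * Real.exp 1) := key
        _ ≤ ((m:ℝ)+1) * ((m.factorial * Real.exp m) * Real.exp 1) := by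
            apply mul_le_mul_of_nonneg_left _ (by positivity)
            exact mul_le_mul_of_nonneg_right ih (Real.exp_pos 1).le
        _ = ((m+1).factorial : ℝ) * Real.exp ((m:ℝ)+1) := by
            rw [Nat.factorial_succ, Real.exp_add]; push_cast; ring
        _ = ((m+1).factorial : ℝ) * Real.exp ((m+1 : ℕ):ℝ) := by push_cast; ring_nf

theorem pmf_exp_bound (n p a : ℕ) (hp2 : 2 ≤ p) (ha : 1 ≤ a) (han : a ≤ n) :
    (n.choose a : ℝ) * (1/p)^a * (1-1/p)^(n-a)
      ≤ Real.exp ((a:ℝ)*(1 + Real.log ((n:ℝ)*(1/p)/a)) - ((n:ℝ)-a)*(1/p)) := by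
  have hp0 : (0:ℝ) < p := by positivity
  have hq0 : (0:ℝ) < 1/p := by positivity
  have h1mq : (0:ℝ) ≤ 1 - 1/p := by
    rw [sub_nonneg, div_le_one hp0]
    exact_mod_cast Nat.one_le_iff_ne_zero.mpr (by omega)
  have ha0 : (0:ℝ) < a := by exact_mod_cast ha
  have hn0 : (0:ℝ) < n := lt_of_lt_of_le ha0 (by exact_mod_cast han)
  have h1 : (n.choose a : ℝ) ≤ (n:ℝ)^a / a.factorial := by
    exact_mod_cast Nat.choose_le_pow_div a n
  have h2 : ((1:ℝ)-1/p)^(n-a) ≤ Real.exp (-(((n:ℝ)-a)*(1/p))) := by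
    have hb : (1:ℝ)-1/p ≤ Real.exp (-(1/p)) := by
      have := Real.add_one_le_exp (-(1/(p:ℝ))); linarith
    have hb0 : (0:ℝ) ≤ 1-1/p := by linarith
    calc ((1:ℝ)-1/p)^(n-a) ≤ (Real.exp (-(1/p)))^(n-a) := pow_le_pow_left₀ hb0 hb _
      _ = Real.exp (-((((n-a:ℕ)):ℝ)*(1/p))) := by
          rw [← Real.exp_nat_mul]; ring_nf
      _ = Real.exp (-(((n:ℝ)-a)*(1/p))) := by
          rw [Nat.cast_sub han]
  have h3 : (n:ℝ)^a / a.factorial * (1/p)^a ≤ Real.exp ((a:ℝ)*(1 + Real.log ((n:ℝ)*(1/p)/a))) := by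
    have hfa : (0:ℝ) < a.factorial := by exact_mod_cast a.factorial_pos
    have hL1 : (1:ℝ)/a.factorial ≤ Real.exp a / (a:ℝ)^a := by
      rw [div_le_div_iff₀ hfa (by positivity)]
      have := pow_le_fact_exp a
      nlinarith [Real.exp_pos (a:ℝ)]
    have hnq : (0:ℝ) < (n:ℝ)*(1/p) := by positivity
    calc (n:ℝ)^a / a.factorial * (1/p)^a
        = ((n:ℝ)*(1/p))^a * (1/a.factorial) := by rw [mul_pow]; ring
      _ ≤ ((n:ℝ)*(1/p))^a * (Real.exp a / (a:ℝ)^a) := by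
          apply mul_le_mul_of_nonneg_left hL1 (by positivity)
      _ = ((n:ℝ)*(1/p)/a)^a * Real.exp a := by
          rw [div_pow]; field_simp
      _ = Real.exp ((a:ℝ) * Real.log ((n:ℝ)*(1/p)/a)) * Real.exp a := by
          rw [← Real.log_pow, Real.exp_log (by positivity)]
      _ = Real.exp ((a:ℝ)*(1 + Real.log ((n:ℝ)*(1/p)/a))) := by
          rw [← Real.exp_add]; ring_nf
  calc (n.choose a : ℝ) * (1/p)^a * (1-1/p)^(n-a)
      ≤ ((n:ℝ)^a / a.factorial * (1/p)^a) * Real.exp (-(((n:ℝ)-a)*(1/p))) := by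
        apply mul_le_mul ?_ h2 (pow_nonneg h1mq _) (by positivity)
        apply mul_le_mul_of_nonneg_right h1 (by positivity)
    _ ≤ Real.exp ((a:ℝ)*(1 + Real.log ((n:ℝ)*(1/p)/a))) * Real.exp (-(((n:ℝ)-a)*(1/p))) := by
        apply mul_le_mul_of_nonneg_right h3 (Real.exp_pos _).le
    _ = Real.exp ((a:ℝ)*(1 + Real.log ((n:ℝ)*(1/p)/a)) - ((n:ℝ)-a)*(1/p)) := by
        rw [← Real.exp_add]; ring_nf

theorem pmf_qa_bound (n p a : ℕ) (hp2 : 2 ≤ p) (han : a ≤ n) :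
    (n.choose a : ℝ) * (1/p)^a * (1-1/p)^(n-a) ≤ Real.exp ((a:ℝ)*(1/p)) := by
  have hp0 : (0:ℝ) < p := by positivity
  have h1mq : (0:ℝ) ≤ 1 - 1/p := by
    rw [sub_nonneg, div_le_one hp0]
    exact_mod_cast Nat.one_le_iff_ne_zero.mpr (by omega)
  rcases Nat.eq_zero_or_pos a with rfl | ha
  · simp only [Nat.choose_zero_right, Nat.cast_one, pow_zero, one_mul, Nat.sub_zero,
      Nat.cast_zero, zero_mul]
    calc ((1:ℝ)-1/p)^n ≤ 1^n := pow_le_pow_left₀ h1mq (by linarith [hp0, (by positivity : (0:ℝ) < 1/p)]) n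
      _ = 1 := one_pow n
      _ = Real.exp 0 := Real.exp_zero.symm
  · have ha0 : (0:ℝ) < a := by exact_mod_cast ha
    have hn0 : (0:ℝ) < n := lt_of_lt_of_le ha0 (by exact_mod_cast han)
    refine (pmf_exp_bound n p a hp2 ha han).trans ?_
    apply Real.exp_le_exp.mpr
    have hlog : Real.log ((n:ℝ)*(1/p)/a) ≤ (n:ℝ)*(1/p)/a - 1 :=
      Real.log_le_sub_one_of_pos (by positivity)
    have h2 : (a:ℝ) * (1 + Real.log ((n:ℝ)*(1/p)/a)) ≤ (n:ℝ)*(1/p) := by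
      have := mul_le_mul_of_nonneg_left hlog ha0.le
      have he : (a:ℝ) * ((n:ℝ)*(1/p)/a) = (n:ℝ)*(1/p) := by field_simp
      nlinarith
    have hna : (0:ℝ) ≤ (n:ℝ) - a := by
      have : (a:ℝ) ≤ n := by exact_mod_cast han
      linarith
    nlinarith [mul_nonneg hna (by positivity : (0:ℝ) ≤ 1/(p:ℝ))]

theorem hk27' (k : ℕ) (hk : 2^40 ≤ k) : (27:ℝ) ≤ Real.log k := by
  have h2 : ((2:ℕ):ℝ)^40 ≤ (k:ℝ) := by exact_mod_cast (by exact_mod_cast hk : ((2^40 : ℕ):ℝ) ≤ k)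
  have := Real.log_le_log (by positivity) h2
  rw [Real.log_pow] at this
  have h40 : (27:ℝ) ≤ 40 * Real.log 2 := by
    have := Real.log_two_gt_d9
    push_cast
    nlinarith
  push_cast at this ⊢
  linarith

theorem logk_le_two_sqrt (k : ℕ) (hk : 1 ≤ k) : Real.log k ≤ 2 * Real.sqrt k := by
  have h0 : (0:ℝ) < k := by exact_mod_cast hk
  have h1 : Real.log (k:ℝ) = 2 * Real.log (Real.sqrt k) := by
    rw [Real.log_sqrt h0.le]; ring
  have h2 : Real.log (Real.sqrt k) ≤ Real.sqrt k - 1 :=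
    Real.log_le_sub_one_of_pos (Real.sqrt_pos.mpr h0)
  nlinarith [Real.sqrt_nonneg (k:ℝ)]

theorem sqrt_ge (k : ℕ) (hk : 2^40 ≤ k) : (2:ℝ)^20 ≤ Real.sqrt k := by
  rw [show ((2:ℝ)^20) = Real.sqrt ((2^40 : ℕ):ℝ) from ?_]
  · exact Real.sqrt_le_sqrt (by exact_mod_cast hk)
  · rw [show (((2:ℕ)^40 : ℕ):ℝ) = ((2:ℝ)^20)^2 by push_cast; ring]
    exact (Real.sqrt_sq (by positivity)).symm

theorem log15_ge : (5/2:ℝ) ≤ Real.log 15 := by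
  rw [Real.le_log_iff_exp_le (by norm_num)]
  have h := Real.exp_one_lt_d9
  have h5 : Real.exp (5/2) ^ 2 = Real.exp 1 ^ 5 := by
    rw [← Real.exp_nat_mul, ← Real.exp_nat_mul]; norm_num
  have h2 : Real.exp 1 ^ 5 ≤ 225 := by
    have he0 := Real.exp_pos 1
    calc Real.exp 1 ^ 5 ≤ (2.7182818286:ℝ)^5 := by
          apply pow_le_pow_left₀ he0.le h.le
      _ ≤ 225 := by norm_num
  nlinarith [Real.exp_pos (5/2:ℝ)]

set_option maxHeartbeats 1000000 in
theorem G_bound (k n p : ℕ) (hk : 2^40 ≤ k) (hp : p.Prime) (hkp : k < p) (hpn : p ≤ n) :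
    ∑ a ∈ Finset.range (n+1),
      (n.choose a : ℝ) * (1/p)^a * (1-1/p)^(n-a) * Real.exp (Real.log k / 8 * a^2 / n)
    ≤ 18 * ((n:ℝ)/p) * Real.exp ((16 + 32*Real.log k) * n * (1/p)^2) := by
  have hk1 : 1 ≤ k := le_trans (by norm_num) hk
  have hp2 : 2 ≤ p := hp.two_le
  have hp0 : (0:ℝ) < p := by positivity
  have hn1 : 1 ≤ n := le_trans (le_trans one_le_two hp2) hpn
  have hn0 : (0:ℝ) < n := by exact_mod_cast Nat.lt_of_lt_of_le Nat.zero_lt_one hn1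
  have hpnR : (p:ℝ) ≤ n := by exact_mod_cast hpn
  have hkpR : (k:ℝ) ≤ p := by exact_mod_cast hkp.le
  have hk0 : (0:ℝ) < k := by exact_mod_cast hk1
  have hnq1 : (1:ℝ) ≤ (n:ℝ)/p := (one_le_div hp0).mpr hpnR
  set t : ℝ := Real.log k / 8 with ht_def
  have hk27 : (27:ℝ) ≤ Real.log k := hk27' k hk
  have ht0 : 0 ≤ t := by rw [ht_def]; linarith
  have hsq : (2:ℝ)^20 ≤ Real.sqrt k := sqrt_ge k hk
  have hsq0 : (0:ℝ) < Real.sqrt k := lt_of_lt_of_le (by positivity) hsq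
  have hlk2s : Real.log k ≤ 2 * Real.sqrt k := logk_le_two_sqrt k hk1
  have hlog2 : Real.log 2 ≤ 1 := by
    have := Real.log_le_sub_one_of_pos (by norm_num : (0:ℝ) < 2); linarith
  have hlog2' : 0 ≤ Real.log 2 := Real.log_nonneg (by norm_num)
  set A : ℕ := ⌈15*((n:ℝ)/p)⌉₊ with hA_def
  set X : ℝ := (16 + 32*Real.log k) * n * (1/p)^2 with hX_def
  have hX0 : 0 ≤ X := by rw [hX_def]; positivity
  set f : ℕ → ℝ := fun a =>
    (n.choose a : ℝ) * (1/p)^a * (1-1/p)^(n-a) * Real.exp (Real.log k / 8 * a^2 / n) with hf_def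
  have hf0 : ∀ a, 0 ≤ f a := by
    intro a
    have h1mq : (0:ℝ) ≤ 1 - 1/p := by
      rw [sub_nonneg, div_le_one hp0]; exact_mod_cast Nat.one_le_iff_ne_zero.mpr (by omega)
    rw [hf_def]; positivity
  -- small a bound
  have hsmall : ∀ a ∈ Finset.range (n+1), a < A → f a ≤ Real.exp X := by
    intro a hmem hlt
    have han : a ≤ n := by simpa using Nat.lt_succ_iff.mp (Finset.mem_range.mp hmem)
    have haR : (a:ℝ) < 15*((n:ℝ)/p) := by
      have := (Nat.lt_ceil).mp hlt; exact_mod_cast this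
    have ha0 : (0:ℝ) ≤ a := Nat.cast_nonneg a
    have h1 : f a ≤ Real.exp ((a:ℝ)*(1/p)) * Real.exp (Real.log k / 8 * a^2/n) := by
      rw [hf_def]
      exact mul_le_mul_of_nonneg_right (pmf_qa_bound n p a hp2 han) (Real.exp_pos _).le
    rw [← Real.exp_add] at h1
    refine h1.trans (Real.exp_le_exp.mpr ?_)
    have hsq' : (a:ℝ)^2 ≤ (15*((n:ℝ)/p))^2 := by nlinarith
    have e1 : (a:ℝ)*(1/p) ≤ 15*((n:ℝ)/p)*(1/p) := by
      apply mul_le_mul_of_nonneg_right haR.le (by positivity)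
    have e2 : Real.log k / 8 * (a:ℝ)^2 / n ≤ Real.log k / 8 * (15*((n:ℝ)/p))^2 / n := by
      gcongr
    have e3 : Real.log k / 8 * (15*((n:ℝ)/p))^2 / n = (225/8) * Real.log k * n * (1/p)^2 := by
      field_simp; ring
    have e4 : 15*((n:ℝ)/p)*(1/p) = 15 * n * (1/p)^2 := by field_simp
    rw [hX_def]
    calc (a:ℝ)*(1/p) + Real.log k / 8 * (a:ℝ)^2 / n
        ≤ 15 * (n:ℝ) * (1/p)^2 + (225/8) * Real.log k * n * (1/p)^2 := by
          rw [← e4, ← e3]; exact add_le_add e1 e2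
      _ ≤ (16 + 32*Real.log k) * n * (1/p)^2 := by nlinarith [sq_nonneg (1/(p:ℝ)), hn0.le]
  -- large a bound
  have hlarge : ∀ a ∈ Finset.range (n+1), A ≤ a → f a ≤ (1/2:ℝ)^a := by
    intro a hmem hge
    have han : a ≤ n := Nat.lt_succ_iff.mp (Finset.mem_range.mp hmem)
    have hanR : (a:ℝ) ≤ n := by exact_mod_cast han
    have haR : 15*((n:ℝ)/p) ≤ a := le_trans (Nat.le_ceil _) (by exact_mod_cast hge)
    have ha0 : (0:ℝ) < a := lt_of_lt_of_le (by nlinarith [hnq1]) haR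
    have ha1 : 1 ≤ a := by exact_mod_cast Nat.one_le_iff_ne_zero.mpr (by
      rintro rfl; simp at ha0)
    have key : 1 + Real.log ((n:ℝ)*(1/p)/a) + t*a/n ≤ -Real.log 2 := by
      rcases le_or_gt (a:ℝ) ((n:ℝ)/Real.sqrt k) with hc | hc
      · -- small a case
        have hl1 : Real.log ((n:ℝ)*(1/p)/a) ≤ -Real.log 15 := by
          rw [← Real.log_inv]
          apply Real.log_le_log (by positivity)
          rw [div_le_iff₀ ha0]
          have : (15:ℝ) * ((n:ℝ)*(1/p)) ≤ a := by
            calc (15:ℝ) * ((n:ℝ)*(1/p)) = 15*((n:ℝ)/p) := by ring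
              _ ≤ a := haR
          nlinarith
        have hl2 : t*a/n ≤ 1/4 := by
          have h1 : t*a/n ≤ t * ((n:ℝ)/Real.sqrt k)/n := by
            gcongr
          have h2 : t * ((n:ℝ)/Real.sqrt k)/n = t / Real.sqrt k := by field_simp
          have h3 : t / Real.sqrt k ≤ 1/4 := by
            rw [ht_def, div_le_iff₀ hsq0]
            nlinarith
          linarith
        have := log15_ge
        linarith
      · -- large a case
        have hl1 : Real.log ((n:ℝ)*(1/p)/a) ≤ -(Real.log k/2) := by
          have hb : (n:ℝ)*(1/p)/a ≤ 1/Real.sqrt k := by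
            rw [div_le_div_iff₀ ha0 hsq0]
            have h1 : (n:ℝ)*(1/p) * Real.sqrt k ≤ (n:ℝ)*(1/k) * Real.sqrt k := by
              have hik : (1:ℝ)/p ≤ 1/k := by
                apply div_le_div_of_nonneg_left one_pos.le hk0 hkpR
              have h1a : (n:ℝ)*(1/p) ≤ (n:ℝ)*(1/k) := mul_le_mul_of_nonneg_left hik hn0.le
              exact mul_le_mul_of_nonneg_right h1a hsq0.le
            have h2 : (n:ℝ)*(1/k)*Real.sqrt k = (n:ℝ)/Real.sqrt k := by
              rw [eq_div_iff hsq0.ne']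
              have : Real.sqrt k * Real.sqrt k = (k:ℝ) := Real.mul_self_sqrt hk0.le
              field_simp
              nlinarith [this]
            nlinarith [hc]
          calc Real.log ((n:ℝ)*(1/p)/a) ≤ Real.log (1/Real.sqrt k) :=
                Real.log_le_log (by positivity) hb
            _ = -(Real.log k/2) := by
                rw [one_div, Real.log_inv, Real.log_sqrt hk0.le]
        have hl2 : t*a/n ≤ t := by
          rw [div_le_iff₀ hn0]
          nlinarith
        rw [ht_def] at hl2 ⊢
        linarith
    -- conclude
    have h1 : f a ≤ Real.exp ((a:ℝ)*(1 + Real.log ((n:ℝ)*(1/p)/a) + t*a/n)) := by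
      have hpm := pmf_exp_bound n p a hp2 ha1 han
      have hmul : f a ≤ Real.exp ((a:ℝ)*(1 + Real.log ((n:ℝ)*(1/p)/a)) - ((n:ℝ)-a)*(1/p))
          * Real.exp (Real.log k / 8 * a^2/n) := by
        rw [hf_def]
        exact mul_le_mul_of_nonneg_right hpm (Real.exp_pos _).le
      rw [← Real.exp_add] at hmul
      refine hmul.trans (Real.exp_le_exp.mpr ?_)
      have hna : (0:ℝ) ≤ ((n:ℝ)-a)*(1/p) := by
        apply mul_nonneg (by linarith) (by positivity)
      have : Real.log k / 8 * (a:ℝ)^2/n = (a:ℝ)*(t*a/n) := by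
        rw [ht_def]; field_simp
      rw [this]
      nlinarith
    refine h1.trans ?_
    have : Real.exp ((a:ℝ)*(1 + Real.log ((n:ℝ)*(1/p)/a) + t*a/n))
        ≤ Real.exp ((a:ℝ)*(-Real.log 2)) := by
      apply Real.exp_le_exp.mpr
      exact mul_le_mul_of_nonneg_left key (Nat.cast_nonneg a)
    have heq : Real.exp ((a:ℝ)*(-Real.log 2)) = (1/2:ℝ)^a := by
      have e1 : ((a:ℝ)*(-Real.log 2)) = (a:ℕ) * Real.log (1/2) := by
        rw [one_div, Real.log_inv]
      rw [e1, Real.exp_nat_mul, Real.exp_log (by norm_num)]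
    exact this.trans_eq heq
  -- combine
  have hsplit := Finset.sum_filter_add_sum_filter_not (Finset.range (n+1)) (fun a => a < A) f
  have hgeom : ∑ a ∈ (Finset.range (n+1)).filter (fun a => ¬ a < A), f a ≤ 2 := by
    calc ∑ a ∈ (Finset.range (n+1)).filter (fun a => ¬ a < A), f a
        ≤ ∑ a ∈ (Finset.range (n+1)).filter (fun a => ¬ a < A), (1/2:ℝ)^a := by
          apply Finset.sum_le_sum
          intro a ha
          simp only [Finset.mem_filter, not_lt] at ha
          exact hlarge a ha.1 ha.2
      _ ≤ ∑ a ∈ Finset.range (n+1), (1/2:ℝ)^a := by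
          apply Finset.sum_le_sum_of_subset_of_nonneg (Finset.filter_subset _ _)
          intro i _ _; positivity
      _ ≤ 2 := by
          have := geom_sum_eq (by norm_num : (1/2:ℝ) ≠ 1) (n+1)
          rw [this]
          have : (0:ℝ) < (1/2:ℝ)^(n+1) := by positivity
          rw [div_le_iff_of_neg (by norm_num : (1/2:ℝ) - 1 < 0)]
          linarith
  have hsmallsum : ∑ a ∈ (Finset.range (n+1)).filter (fun a => a < A), f a
      ≤ 16 * ((n:ℝ)/p) * Real.exp X := by
    calc ∑ a ∈ (Finset.range (n+1)).filter (fun a => a < A), f a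
        ≤ ∑ _a ∈ (Finset.range (n+1)).filter (fun a => a < A), Real.exp X := by
          apply Finset.sum_le_sum
          intro a ha
          simp only [Finset.mem_filter] at ha
          exact hsmall a ha.1 ha.2
      _ = ((Finset.range (n+1)).filter (fun a => a < A)).card * Real.exp X := by
          rw [Finset.sum_const, nsmul_eq_mul]
      _ ≤ 16 * ((n:ℝ)/p) * Real.exp X := by
          apply mul_le_mul_of_nonneg_right _ (Real.exp_pos X).le
          have hsub : (Finset.range (n+1)).filter (fun a => a < A) ⊆ Finset.range A := by
            intro x hx
            simp only [Finset.mem_filter, Finset.mem_range] at hx ⊢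
            exact hx.2
          have hcard : ((Finset.range (n+1)).filter (fun a => a < A)).card ≤ A := by
            simpa using Finset.card_le_card hsub
          have hAR : (A:ℝ) ≤ 15*((n:ℝ)/p) + 1 := by
            have := Nat.ceil_lt_add_one (by positivity : (0:ℝ) ≤ 15*((n:ℝ)/p))
            exact_mod_cast this.le
          have : ((Finset.range (n+1)).filter (fun a => a < A)).card ≤ (A:ℝ) := by
            exact_mod_cast hcard
          nlinarith
  have hfinal : ∑ a ∈ Finset.range (n+1), f a ≤ 16 * ((n:ℝ)/p) * Real.exp X + 2 := by
    rw [← hsplit]; exact add_le_add hsmallsum hgeom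
  have h2 : (2:ℝ) ≤ 2 * ((n:ℝ)/p) * Real.exp X := by
    nlinarith [Real.one_le_exp hX0]
  calc ∑ a ∈ Finset.range (n+1), f a ≤ 16 * ((n:ℝ)/p) * Real.exp X + 2 := hfinal
    _ ≤ 18 * ((n:ℝ)/p) * Real.exp X := by nlinarith

theorem sum_Ioc_inv_sq' (k : ℕ) (hk : 1 ≤ k) (n : ℕ) (hkn : k ≤ n) :
    ∑ m ∈ Finset.Ioc k n, (1/(m:ℝ))^2 ≤ 1/(k:ℝ) - 1/(n:ℝ) := by
  induction n, hkn using Nat.le_induction with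
  | base => simp
  | succ n hkn ih =>
    rw [Finset.sum_Ioc_succ_top (by omega)]
    have hn0 : (0:ℝ) < n := by
      have : (1:ℕ) ≤ n := le_trans hk hkn
      exact_mod_cast Nat.lt_of_lt_of_le Nat.zero_lt_one this
    have hstep : (1/((n:ℝ)+1))^2 ≤ 1/n - 1/((n:ℝ)+1) := by
      rw [div_sub_div _ _ hn0.ne' (by positivity), div_pow]
      rw [div_le_div_iff₀ (by positivity) (by positivity)]
      ring_nf
      nlinarith
    push_cast
    have := ih
    push_cast at this
    linarith

theorem sum_Ioc_inv_sq (k n : ℕ) (hk : 1 ≤ k) : ∑ m ∈ Finset.Ioc k n, (1/(m:ℝ))^2 ≤ 1/(k:ℝ) := by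
  rcases le_or_gt k n with h | h
  · have := sum_Ioc_inv_sq' k hk n h
    have hn0 : (0:ℝ) < n := by
      have : (1:ℕ) ≤ n := le_trans hk h
      exact_mod_cast Nat.lt_of_lt_of_le Nat.zero_lt_one this
    have : (0:ℝ) < 1/n := by positivity
    linarith [sum_Ioc_inv_sq' k hk n h]
  · rw [Finset.Ioc_eq_empty (by omega)]
    simp only [Finset.sum_empty]
    positivity

theorem prod_Icc_div_le_exp (n : ℕ) : ∏ m ∈ Finset.Icc 1 n, ((n:ℝ)/m) ≤ Real.exp n := by
  have h1 : ∏ m ∈ Finset.Icc 1 n, ((n:ℝ)/m) = (n:ℝ)^n / (n.factorial : ℝ) := by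
    rw [Finset.prod_div_distrib, Finset.prod_const, Nat.card_Icc, Nat.add_sub_cancel]
    congr 1
    rw [← Nat.cast_prod]
    congr 1
    rw [show Finset.Icc 1 n = Finset.Ico 1 (n+1) from rfl]
    exact Finset.prod_Ico_id_eq_factorial n
  rw [h1, div_le_iff₀ (by positivity : (0:ℝ) < n.factorial)]
  calc (n:ℝ)^n ≤ n.factorial * Real.exp n := pow_le_fact_exp n
    _ = Real.exp n * n.factorial := by ring

theorem card_primesIn (k n : ℕ) (hk : 1 ≤ k) : k ^ (primesIn k n).card ≤ 4^n := by
  calc k ^ (primesIn k n).card ≤ ∏ p ∈ primesIn k n, p := by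
        apply Finset.pow_card_le_prod
        intro p hp
        simp only [primesIn, Finset.mem_filter, Finset.mem_Ioc] at hp
        omega
    _ ≤ ∏ p ∈ (Finset.range (n+1)).filter Nat.Prime, p := by
        apply Finset.prod_le_prod_of_subset_of_one_le'
        · intro p hp
          simp only [primesIn, Finset.mem_filter, Finset.mem_Ioc, Finset.mem_range] at hp ⊢
          exact ⟨by omega, hp.2⟩
        · intro p hp _
          simp only [Finset.mem_filter] at hp
          exact hp.2.one_lt.le
    _ ≤ 4^n := primorial_le_4_pow n

set_option maxHeartbeats 1000000 in
theorem prod_G_le (k n : ℕ) (hk : 2^40 ≤ k) (hn : 1 ≤ n) :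
    ∏ p ∈ primesIn k n, (∑ a ∈ Finset.range (n+1),
      (n.choose a : ℝ) * (1/p)^a * (1-1/p)^(n-a) * Real.exp (Real.log k / 8 * a^2 / n))
    ≤ Real.exp (3*n) := by
  have hk1 : 1 ≤ k := le_trans (by norm_num) hk
  have hk0 : (0:ℝ) < k := by exact_mod_cast hk1
  have hn0 : (0:ℝ) < n := by exact_mod_cast hn
  have hk27 : (27:ℝ) ≤ Real.log k := hk27' k hk
  have hmem : ∀ p ∈ primesIn k n, p.Prime ∧ k < p ∧ p ≤ n := by
    intro p hp
    simp only [primesIn, Finset.mem_filter, Finset.mem_Ioc] at hp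
    exact ⟨hp.2, hp.1.1, hp.1.2⟩
  set s := primesIn k n with hs_def
  -- step 1 : bound each factor
  have h1 : ∏ p ∈ s, (∑ a ∈ Finset.range (n+1),
      (n.choose a : ℝ) * (1/p)^a * (1-1/p)^(n-a) * Real.exp (Real.log k / 8 * a^2 / n))
      ≤ ∏ p ∈ s, (18 * ((n:ℝ)/p) * Real.exp ((16 + 32*Real.log k) * n * (1/p)^2)) := by
    apply Finset.prod_le_prod
    · intro p hp
      obtain ⟨hpp, _, _⟩ := hmem p hp
      have hp0 : (0:ℝ) < p := by exact_mod_cast hpp.pos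
      have h1mq : (0:ℝ) ≤ 1 - 1/p := by
        rw [sub_nonneg, div_le_one hp0]
        exact_mod_cast hpp.one_lt.le
      apply Finset.sum_nonneg
      intro a _
      positivity
    · intro p hp
      obtain ⟨hpp, hkp, hpn⟩ := hmem p hp
      exact G_bound k n p hk hpp hkp hpn
  -- step 2 : split the product
  have h2 : ∏ p ∈ s, (18 * ((n:ℝ)/p) * Real.exp ((16 + 32*Real.log k) * n * (1/p)^2))
      = (18:ℝ)^s.card * (∏ p ∈ s, ((n:ℝ)/p))
        * Real.exp (∑ p ∈ s, (16 + 32*Real.log k) * n * (1/p)^2) := by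
    rw [Finset.prod_mul_distrib, Finset.prod_mul_distrib, Finset.prod_const, Real.exp_sum]
  -- step 3a : 18 ^ card ≤ exp n
  have hcard : 3 * (s.card:ℝ) ≤ n := by
    have hc := card_primesIn k n hk1
    have hcR : ((k:ℝ))^s.card ≤ 4^n := by exact_mod_cast hc
    have hlog : (s.card:ℝ) * Real.log k ≤ (n:ℝ) * Real.log 4 := by
      have := Real.log_le_log (by positivity) hcR
      rwa [Real.log_pow, Real.log_pow] at this
    have hlog4 : Real.log 4 ≤ 2 := by
      have h := Real.log_le_sub_one_of_pos (by norm_num : (0:ℝ) < 4)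
      have : Real.log 4 = 2 * Real.log 2 := by
        rw [show (4:ℝ) = 2^2 by norm_num, Real.log_pow]; push_cast; ring
      have h2 := Real.log_le_sub_one_of_pos (by norm_num : (0:ℝ) < 2)
      linarith
    have hcard27 : (s.card:ℝ) * 27 ≤ (n:ℝ) * 2 := by
      calc (s.card:ℝ) * 27 ≤ (s.card:ℝ) * Real.log k := by
            apply mul_le_mul_of_nonneg_left hk27 (Nat.cast_nonneg _)
        _ ≤ (n:ℝ) * Real.log 4 := hlog
        _ ≤ (n:ℝ) * 2 := by apply mul_le_mul_of_nonneg_left hlog4 hn0.le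
    linarith
  have h3a : (18:ℝ)^s.card ≤ Real.exp n := by
    have h18 : (18:ℝ) ≤ Real.exp 3 := by
      have h5 : Real.exp 3 = Real.exp 1 ^ 3 := by
        rw [← Real.exp_nat_mul]; norm_num
      have he := Real.exp_one_gt_d9
      have : (2.7182818283:ℝ)^3 ≤ Real.exp 1 ^3 := by
        apply pow_le_pow_left₀ (by norm_num) he.le
      rw [h5]
      nlinarith
    calc (18:ℝ)^s.card ≤ (Real.exp 3)^s.card := by
          apply pow_le_pow_left₀ (by norm_num) h18
      _ = Real.exp (3 * s.card) := by
          rw [← Real.exp_nat_mul]; ring_nf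
      _ ≤ Real.exp n := Real.exp_le_exp.mpr hcard
  -- step 3b : ∏ (n/p) ≤ exp n
  have h3b : ∏ p ∈ s, ((n:ℝ)/p) ≤ Real.exp n := by
    have hsub : s ⊆ Finset.Icc 1 n := by
      intro p hp
      obtain ⟨hpp, _, hpn⟩ := hmem p hp
      simp only [Finset.mem_Icc]
      exact ⟨hpp.one_lt.le, hpn⟩
    have hprod : ∏ p ∈ s, ((n:ℝ)/p) ≤ ∏ m ∈ Finset.Icc 1 n, ((n:ℝ)/m) := by
      rw [← Finset.prod_sdiff hsub]
      have hone : 1 ≤ ∏ m ∈ Finset.Icc 1 n \ s, ((n:ℝ)/m) := by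
        rw [show (1:ℝ) = ∏ _m ∈ Finset.Icc 1 n \ s, (1:ℝ) from (Finset.prod_const_one).symm]
        apply Finset.prod_le_prod (fun _ _ => zero_le_one)
        intro m hm
        have := (Finset.sdiff_subset) hm
        simp only [Finset.mem_Icc] at this
        rw [le_div_iff₀ (by exact_mod_cast Nat.lt_of_lt_of_le Nat.zero_lt_one this.1)]
        simpa using (by exact_mod_cast this.2 : (m:ℝ) ≤ n)
      have hnn : 0 ≤ ∏ p ∈ s, ((n:ℝ)/p) := by
        apply Finset.prod_nonneg
        intro p hp
        have := hmem p hp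
        positivity
      nlinarith
    exact hprod.trans (prod_Icc_div_le_exp n)
  -- step 3c : exp (∑ ...) ≤ exp n
  have h3c : Real.exp (∑ p ∈ s, (16 + 32*Real.log k) * n * (1/p)^2) ≤ Real.exp n := by
    apply Real.exp_le_exp.mpr
    have hsum : ∑ p ∈ s, ((1:ℝ)/p)^2 ≤ 1/k := by
      refine le_trans ?_ (sum_Ioc_inv_sq k n hk1)
      apply Finset.sum_le_sum_of_subset_of_nonneg
      · intro p hp; exact (Finset.filter_subset _ _) hp
      · intro m _ _; positivity
    have hc16 : (0:ℝ) ≤ 16 + 32*Real.log k := by linarith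
    have hkbig : 16 + 32*Real.log k ≤ k := by
      have hs1 : Real.log k ≤ 2 * Real.sqrt k := logk_le_two_sqrt k hk1
      have hs2 : (2:ℝ)^20 ≤ Real.sqrt k := sqrt_ge k hk
      have hs3 : Real.sqrt k * Real.sqrt k = (k:ℝ) := Real.mul_self_sqrt hk0.le
      nlinarith [Real.sqrt_nonneg (k:ℝ)]
    calc ∑ p ∈ s, (16 + 32*Real.log k) * n * (1/p)^2
        = (16 + 32*Real.log k) * n * ∑ p ∈ s, ((1:ℝ)/p)^2 := by
          rw [Finset.mul_sum]
      _ ≤ (16 + 32*Real.log k) * n * (1/k) := by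
          apply mul_le_mul_of_nonneg_left hsum (by positivity)
      _ ≤ (k:ℝ) * n * (1/k) := by
          apply mul_le_mul_of_nonneg_right _ (by positivity)
          apply mul_le_mul_of_nonneg_right hkbig hn0.le
      _ = n := by field_simp
  calc ∏ p ∈ s, (∑ a ∈ Finset.range (n+1),
      (n.choose a : ℝ) * (1/p)^a * (1-1/p)^(n-a) * Real.exp (Real.log k / 8 * a^2 / n))
      ≤ (18:ℝ)^s.card * (∏ p ∈ s, ((n:ℝ)/p))
        * Real.exp (∑ p ∈ s, (16 + 32*Real.log k) * n * (1/p)^2) := by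
        rw [← h2]; exact h1
    _ ≤ Real.exp n * Real.exp n * Real.exp n := by
        have e1 : (0:ℝ) ≤ (18:ℝ)^s.card := by positivity
        have e2 : 0 ≤ ∏ p ∈ s, ((n:ℝ)/p) := by
          apply Finset.prod_nonneg; intro p hp
          have := hmem p hp; positivity
        have e3 := (Real.exp_pos (∑ p ∈ s, (16 + 32*Real.log k) * n * (1/p)^2)).le
        have e4 := (Real.exp_pos ((n:ℝ))).le
        apply mul_le_mul (mul_le_mul h3a h3b e2 e4) h3c e3
        positivity
    _ = Real.exp (3*n) := by rw [← Real.exp_add, ← Real.exp_add]; ring_nf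

end AuxLemmas

/-- For independent random variables `(Y_p)_{p ∈ S(k,n)}`
with `Y_p ~ Binomial(n, 1/p)`: for every `ε > 0` there exist `K, N` such that
for all `k ≥ K` and `n ≥ N`,
`(1/n)·log P(∑_{p ∈ S(k,n)} Y_p² > n²ε) ≤ −(ε/8)·log k + 4`
(the left-hand side being `−∞` when the probability vanishes). -/
theorem binomial_family_superexponential_bound (ε : ℝ) (hε : 0 < ε) :
    ∃ K N : ℕ, ∀ k ≥ K, ∀ n ≥ N,
      ∀ (Ω : Type) (_ : MeasurableSpace Ω) (P : Measure Ω),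
        IsProbabilityMeasure P →
        ∀ Y : ℕ → Ω → ℕ,
          (∀ p ∈ primesIn k n, Measurable (Y p)) →
          iIndepFun (m := fun _ : {p : ℕ // p ∈ primesIn k n} => (inferInstance : MeasurableSpace ℕ))
            (fun p => Y p) P →
          (∀ p ∈ primesIn k n, ∀ y : ℕ,
            P {ω | Y p ω = y} =
              ENNReal.ofReal ((n.choose y : ℝ) * (1 / (p : ℝ)) ^ y *
                (1 - 1 / (p : ℝ)) ^ (n - y))) →
          (((n : ℝ)⁻¹ : ℝ) : EReal) *
              ENNReal.log (P {ω | (n : ℝ) ^ 2 * ε < ∑ p ∈ primesIn k n, (Y p ω : ℝ) ^ 2})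
            ≤ ((-(ε / 8) * Real.log k + 4 : ℝ) : EReal) := by
  classical
  refine ⟨2^40, 1, ?_⟩
  intro k hk n hn Ω mΩ P hP Y hmeas hindep hpmf
  have hk1 : 1 ≤ k := le_trans (by norm_num) hk
  have hn0 : (0:ℝ) < n := by exact_mod_cast hn
  set s := primesIn k n with hs_def
  set t : ℝ := Real.log k / 8 with ht_def
  have ht0 : 0 ≤ t := by
    rw [ht_def]
    have : (0:ℝ) ≤ Real.log k := Real.log_nonneg (by exact_mod_cast hk1)
    linarith
  set E : Set Ω := {ω | (n:ℝ)^2*ε < ∑ p ∈ s, (Y p ω : ℝ)^2} with hE_def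
  set R : ℝ := -(ε/8)*Real.log k + 4 with hR_def
  -- the probability bound
  have hPE : P E ≤ ENNReal.ofReal (Real.exp (n * R)) := by
    -- null set of large values
    have hnull : P {ω | ∃ p ∈ s, n < Y p ω} = 0 := by
      have he : {ω | ∃ p ∈ s, n < Y p ω} = ⋃ p ∈ (s:Finset ℕ), {ω | n < Y p ω} := by
        ext ω; simp
      rw [he]
      refine le_antisymm ?_ zero_le
      refine le_trans (measure_biUnion_finset_le s _) ?_
      refine le_of_eq (Finset.sum_eq_zero ?_)
      intro p hp
      have he2 : {ω | n < Y p ω} = ⋃ j : ℕ, {ω | Y p ω = n + 1 + j} := by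
        ext ω
        simp only [Set.mem_setOf_eq, Set.mem_iUnion]
        constructor
        · intro h; exact ⟨Y p ω - (n+1), by omega⟩
        · rintro ⟨j, hj⟩; omega
      rw [he2]
      refine le_antisymm ?_ zero_le
      refine le_trans (measure_iUnion_le _) ?_
      refine le_of_eq ?_
      have : ∀ j : ℕ, P {ω | Y p ω = n + 1 + j} = 0 := by
        intro j
        rw [hpmf p hp (n+1+j), Nat.choose_eq_zero_of_lt (by omega)]
        simp
      simp [this]
    -- configurations
    set bad : Finset ({p : ℕ // p ∈ s} → ℕ) :=
      (Fintype.piFinset (fun _ : {p : ℕ // p ∈ s} => Finset.range (n+1))).filter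
        (fun g => (n:ℝ)^2*ε < ∑ i : {p : ℕ // p ∈ s}, ((g i : ℝ))^2) with hbad_def
    have hcover : E ⊆ {ω | ∃ p ∈ s, n < Y p ω} ∪
        ⋃ g ∈ bad, ⋂ i : {p : ℕ // p ∈ s}, Y i.1 ⁻¹' {g i} := by
      intro ω hω
      by_cases hb : ∃ p ∈ s, n < Y p ω
      · exact Or.inl hb
      · push_neg at hb
        refine Or.inr (Set.mem_biUnion (?_ : (fun i : {p : ℕ // p ∈ s} => Y i.1 ω) ∈ bad) ?_)
        · rw [hbad_def, Finset.mem_filter]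
          constructor
          · rw [Fintype.mem_piFinset]
            intro i
            rw [Finset.mem_range]
            exact Nat.lt_succ_of_le (hb i.1 i.2)
          · have hsum : ∑ i : {p : ℕ // p ∈ s}, ((Y i.1 ω : ℝ))^2
                = ∑ p ∈ s, ((Y p ω : ℝ))^2 :=
              Finset.sum_coe_sort s (fun p => ((Y p ω : ℝ))^2)
            rw [hsum]
            exact hω
        · simp only [Set.mem_iInter, Set.mem_preimage, Set.mem_singleton_iff]
          intro i; trivial
    have hPE1 : P E ≤ ∑ g ∈ bad, P (⋂ i : {p : ℕ // p ∈ s}, Y i.1 ⁻¹' {g i}) := by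
      calc P E ≤ P ({ω | ∃ p ∈ s, n < Y p ω} ∪
            ⋃ g ∈ bad, ⋂ i : {p : ℕ // p ∈ s}, Y i.1 ⁻¹' {g i}) := measure_mono hcover
        _ ≤ P {ω | ∃ p ∈ s, n < Y p ω} +
            P (⋃ g ∈ bad, ⋂ i : {p : ℕ // p ∈ s}, Y i.1 ⁻¹' {g i}) := measure_union_le _ _
        _ = P (⋃ g ∈ bad, ⋂ i : {p : ℕ // p ∈ s}, Y i.1 ⁻¹' {g i}) := by
            rw [hnull, zero_add]
        _ ≤ ∑ g ∈ bad, P (⋂ i : {p : ℕ // p ∈ s}, Y i.1 ⁻¹' {g i}) :=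
            measure_biUnion_finset_le _ _
    -- product formula
    have hprod : ∀ g : {p : ℕ // p ∈ s} → ℕ,
        P (⋂ i : {p : ℕ // p ∈ s}, Y i.1 ⁻¹' {g i})
        = ∏ i : {p : ℕ // p ∈ s}, ENNReal.ofReal
            ((n.choose (g i) : ℝ) * (1/(i.1:ℝ))^(g i) * (1-1/(i.1:ℝ))^(n - g i)) := by
      intro g
      have h := hindep.measure_inter_preimage_eq_mul Finset.univ
        (sets := fun i => {g i}) (fun i _ => measurableSet_singleton _)
      have he : (⋂ i ∈ Finset.univ, Y (i : {p : ℕ // p ∈ s}).1 ⁻¹' {g i})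
          = ⋂ i : {p : ℕ // p ∈ s}, Y i.1 ⁻¹' {g i} := by
        simp
      rw [he] at h
      rw [h]
      apply Finset.prod_congr rfl
      intro i _
      have : Y i.1 ⁻¹' {g i} = {ω | Y i.1 ω = g i} := by
        ext ω; simp
      rw [this, hpmf i.1 i.2 (g i)]
    -- real-valued bound
    have hreal : ∑ g ∈ bad, ∏ i : {p : ℕ // p ∈ s},
        ((n.choose (g i) : ℝ) * (1/(i.1:ℝ))^(g i) * (1-1/(i.1:ℝ))^(n - g i))
        ≤ Real.exp (n * R) := by
      have hnn : ∀ (i : {p : ℕ // p ∈ s}) (a : ℕ),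
          0 ≤ (n.choose a : ℝ) * (1/(i.1:ℝ))^a * (1-1/(i.1:ℝ))^(n-a) := by
        intro i a
        have hp2 : 2 ≤ i.1 := by
          have := i.2
          simp only [hs_def, primesIn, Finset.mem_filter] at this
          exact this.2.two_le
        have hp0 : (0:ℝ) < i.1 := by positivity
        have h1mq : (0:ℝ) ≤ 1 - 1/(i.1:ℝ) := by
          rw [sub_nonneg, div_le_one hp0]
          exact_mod_cast Nat.one_le_iff_ne_zero.mpr (by omega)
        positivity
      -- Chernoff trick, then expand the product of sums
      calc ∑ g ∈ bad, ∏ i : {p : ℕ // p ∈ s},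
            ((n.choose (g i) : ℝ) * (1/(i.1:ℝ))^(g i) * (1-1/(i.1:ℝ))^(n - g i))
          ≤ ∑ g ∈ bad, Real.exp (-(t*n*ε)) * ∏ i : {p : ℕ // p ∈ s},
            ((n.choose (g i) : ℝ) * (1/(i.1:ℝ))^(g i) * (1-1/(i.1:ℝ))^(n - g i)
              * Real.exp (Real.log k / 8 * (g i)^2 / n)) := by
            apply Finset.sum_le_sum
            intro g hg
            have hsplit : ∏ i : {p : ℕ // p ∈ s},
                ((n.choose (g i) : ℝ) * (1/(i.1:ℝ))^(g i) * (1-1/(i.1:ℝ))^(n - g i)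
                  * Real.exp (Real.log k / 8 * (g i)^2 / n))
                = (∏ i : {p : ℕ // p ∈ s},
                    ((n.choose (g i) : ℝ) * (1/(i.1:ℝ))^(g i) * (1-1/(i.1:ℝ))^(n - g i)))
                  * Real.exp (∑ i : {p : ℕ // p ∈ s}, Real.log k / 8 * ((g i):ℝ)^2 / n) := by
              rw [Finset.prod_mul_distrib, ← Real.exp_sum]
            rw [hsplit]
            have hgsum : (n:ℝ)^2*ε < ∑ i : {p : ℕ // p ∈ s}, ((g i : ℝ))^2 := by
              rw [hbad_def] at hg
              exact (Finset.mem_filter.mp hg).2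
            have hexp : 1 ≤ Real.exp (-(t*n*ε)) *
                Real.exp (∑ i : {p : ℕ // p ∈ s}, Real.log k / 8 * ((g i):ℝ)^2 / n) := by
              rw [← Real.exp_add, ← Real.exp_zero]
              apply Real.exp_le_exp.mpr
              have e1 : ∑ i : {p : ℕ // p ∈ s}, Real.log k / 8 * ((g i):ℝ)^2 / n
                  = t/n * ∑ i : {p : ℕ // p ∈ s}, ((g i):ℝ)^2 := by
                rw [Finset.mul_sum, ht_def]
                apply Finset.sum_congr rfl
                intro i _
                ring
              rw [e1]
              have e2 : t/n * ((n:ℝ)^2*ε) ≤ t/n * ∑ i : {p : ℕ // p ∈ s}, ((g i):ℝ)^2 := by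
                apply mul_le_mul_of_nonneg_left hgsum.le (by positivity)
              have e3 : t/n * ((n:ℝ)^2*ε) = t*n*ε := by field_simp
              linarith
            have hprodnn : 0 ≤ ∏ i : {p : ℕ // p ∈ s},
                ((n.choose (g i) : ℝ) * (1/(i.1:ℝ))^(g i) * (1-1/(i.1:ℝ))^(n - g i)) :=
              Finset.prod_nonneg (fun i _ => hnn i (g i))
            nlinarith
        _ = Real.exp (-(t*n*ε)) * ∑ g ∈ bad, ∏ i : {p : ℕ // p ∈ s},
            ((n.choose (g i) : ℝ) * (1/(i.1:ℝ))^(g i) * (1-1/(i.1:ℝ))^(n - g i)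
              * Real.exp (Real.log k / 8 * (g i)^2 / n)) := by
            rw [Finset.mul_sum]
        _ ≤ Real.exp (-(t*n*ε)) * ∑ g ∈ Fintype.piFinset (fun _ : {p : ℕ // p ∈ s} => Finset.range (n+1)),
            ∏ i : {p : ℕ // p ∈ s},
            ((n.choose (g i) : ℝ) * (1/(i.1:ℝ))^(g i) * (1-1/(i.1:ℝ))^(n - g i)
              * Real.exp (Real.log k / 8 * (g i)^2 / n)) := by
            apply mul_le_mul_of_nonneg_left _ (Real.exp_pos _).le
            apply Finset.sum_le_sum_of_subset_of_nonneg (Finset.filter_subset _ _)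
            intro g _ _
            apply Finset.prod_nonneg
            intro i _
            have := hnn i (g i)
            positivity
        _ = Real.exp (-(t*n*ε)) * ∏ i : {p : ℕ // p ∈ s}, (∑ a ∈ Finset.range (n+1),
            ((n.choose a : ℝ) * (1/(i.1:ℝ))^a * (1-1/(i.1:ℝ))^(n-a)
              * Real.exp (Real.log k / 8 * a^2 / n))) := by
            rw [Finset.prod_univ_sum]
        _ = Real.exp (-(t*n*ε)) * ∏ p ∈ s, (∑ a ∈ Finset.range (n+1),
            ((n.choose a : ℝ) * (1/(p:ℝ))^a * (1-1/(p:ℝ))^(n-a)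
              * Real.exp (Real.log k / 8 * a^2 / n))) := by
            congr 1
            exact Finset.prod_coe_sort s (fun p => ∑ a ∈ Finset.range (n+1),
              ((n.choose a : ℝ) * (1/(p:ℝ))^a * (1-1/(p:ℝ))^(n-a)
                * Real.exp (Real.log k / 8 * a^2 / n)))
        _ ≤ Real.exp (-(t*n*ε)) * Real.exp (3*n) := by
            apply mul_le_mul_of_nonneg_left (prod_G_le k n hk hn) (Real.exp_pos _).le
        _ ≤ Real.exp (n * R) := by
            rw [← Real.exp_add]
            apply Real.exp_le_exp.mpr
            rw [hR_def, ht_def]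
            have : (0:ℝ) < n := hn0
            nlinarith
    -- put together
    calc P E ≤ ∑ g ∈ bad, P (⋂ i : {p : ℕ // p ∈ s}, Y i.1 ⁻¹' {g i}) := hPE1
      _ = ∑ g ∈ bad, ENNReal.ofReal (∏ i : {p : ℕ // p ∈ s},
          ((n.choose (g i) : ℝ) * (1/(i.1:ℝ))^(g i) * (1-1/(i.1:ℝ))^(n - g i))) := by
          apply Finset.sum_congr rfl
          intro g _
          rw [hprod g, ← ENNReal.ofReal_prod_of_nonneg]
          intro i _
          have hp2 : 2 ≤ i.1 := by
            have := i.2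
            simp only [hs_def, primesIn, Finset.mem_filter] at this
            exact this.2.two_le
          have hp0 : (0:ℝ) < i.1 := by positivity
          have h1mq : (0:ℝ) ≤ 1 - 1/(i.1:ℝ) := by
            rw [sub_nonneg, div_le_one hp0]
            exact_mod_cast Nat.one_le_iff_ne_zero.mpr (by omega)
          positivity
      _ = ENNReal.ofReal (∑ g ∈ bad, ∏ i : {p : ℕ // p ∈ s},
          ((n.choose (g i) : ℝ) * (1/(i.1:ℝ))^(g i) * (1-1/(i.1:ℝ))^(n - g i))) := by
          rw [ENNReal.ofReal_sum_of_nonneg]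
          intro g _
          apply Finset.prod_nonneg
          intro i _
          have hp2 : 2 ≤ i.1 := by
            have := i.2
            simp only [hs_def, primesIn, Finset.mem_filter] at this
            exact this.2.two_le
          have hp0 : (0:ℝ) < i.1 := by positivity
          have h1mq : (0:ℝ) ≤ 1 - 1/(i.1:ℝ) := by
            rw [sub_nonneg, div_le_one hp0]
            exact_mod_cast Nat.one_le_iff_ne_zero.mpr (by omega)
          positivity
      _ ≤ ENNReal.ofReal (Real.exp (n * R)) := ENNReal.ofReal_le_ofReal hreal
  -- EReal endgame
  have hlog : ENNReal.log (P E) ≤ (((n:ℝ) * R : ℝ) : EReal) := by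
    calc ENNReal.log (P E) ≤ ENNReal.log (ENNReal.ofReal (Real.exp ((n:ℝ) * R))) :=
          ENNReal.log_monotone hPE
      _ = (((n:ℝ) * R : ℝ) : EReal) := by
          rw [ENNReal.log_ofReal_of_pos (Real.exp_pos _), Real.log_exp]
  calc (((n : ℝ)⁻¹ : ℝ) : EReal) * ENNReal.log (P E)
      ≤ (((n : ℝ)⁻¹ : ℝ) : EReal) * (((n:ℝ) * R : ℝ) : EReal) := by
        apply mul_le_mul_of_nonneg_left hlog
        apply EReal.coe_nonneg.mpr
        positivity
    _ = ((R : ℝ) : EReal) := by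
        rw [← EReal.coe_mul]
        congr 1
        field_simp
end

section
/- Consider, for each n, a family (Y_p)_{p ∈ S(k,n)} of independent random variables with Y_p distributed as Binomial(n, 1/p). Then for every ε > 0, limsup_{k→∞} limsup_{n→∞} (1/n)·log P( ∑_{p ∈ S(k,n)} Y_p² > n²ε ) = −∞; that is, for every M > 0 there exists K such that for all k ≥ K, limsup_{n→∞} (1/n)·log P( ∑_{p ∈ S(k,n)} Y_p² > n²ε ) ≤ −M. -/
open MeasureTheory ProbabilityTheory Filter Real
open scoped ENNReal NNReal

lemma integral_comp_eq_sum_aux {Ω : Type} [MeasurableSpace Ω] (μ : Measure Ω)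
    [IsProbabilityMeasure μ] (X : Ω → ℕ) (hX : Measurable X) (n : ℕ)
    (h0 : μ {ω | n < X ω} = 0) (f : ℕ → ℝ) :
    ∫ ω, f (X ω) ∂μ = ∑ a ∈ Finset.range (n+1), f a * (μ {ω | X ω = a}).toReal := by
  have h1 : ∀ᵐ ω ∂μ, X ω ≤ n := by
    rw [ae_iff]; simpa [not_le] using h0
  have hae : (fun ω => f (X ω)) =ᵐ[μ]
      (fun ω => ∑ a ∈ Finset.range (n+1),
        Set.indicator {ω' | X ω' = a} (fun _ => f a) ω) := by
    filter_upwards [h1] with ω hω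
    simp only [Set.indicator_apply, Set.mem_setOf_eq]
    rw [Finset.sum_ite_eq (Finset.range (n+1)) (X ω) f]
    rw [if_pos (Finset.mem_range.2 (Nat.lt_succ_of_le hω))]
  rw [integral_congr_ae hae, integral_finset_sum]
  · refine Finset.sum_congr rfl fun a _ => ?_
    have hms : MeasurableSet {ω' | X ω' = a} := hX (measurableSet_singleton a)
    rw [integral_indicator_const (f a) hms, smul_eq_mul, mul_comm]; rfl
  · exact fun a _ => (integrable_const (f a)).indicator (hX (measurableSet_singleton a) : MeasurableSet {ω' | X ω' = a})

lemma sum_pmf_eq_one_aux {Ω : Type} [MeasurableSpace Ω] (μ : Measure Ω)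
    [IsProbabilityMeasure μ] (X : Ω → ℕ) (hX : Measurable X) (n : ℕ)
    (h0 : μ {ω | n < X ω} = 0) :
    ∑ a ∈ Finset.range (n+1), (μ {ω | X ω = a}).toReal = 1 := by
  have := integral_comp_eq_sum_aux μ X hX n h0 (fun _ => 1)
  simpa using this.symm

lemma chernoff_aux {Ω : Type} [MeasurableSpace Ω] {μ : Measure Ω}
    [IsProbabilityMeasure μ] {ι : Type} [Fintype ι] (Z : ι → Ω → ℝ)
    (hmeas : ∀ i, Measurable (Z i))
    (hindep : iIndepFun Z μ) (t c b : ℝ) (ht : 0 ≤ t)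
    (hb : ∀ i, ∀ᵐ ω ∂μ, Z i ω ≤ b) :
    (μ {ω | c ≤ ∑ i, Z i ω}).toReal ≤ exp (-t * c) * ∏ i, mgf (Z i) μ t := by
  have hint : ∀ i : ι, Integrable (fun ω => exp (t * Z i ω)) μ := by
    intro i
    refine Integrable.mono' (integrable_const (exp (t * b)))
      (((hmeas i).const_mul t).exp.aestronglyMeasurable) ?_
    filter_upwards [hb i] with ω hω
    rw [Real.norm_eq_abs, abs_of_pos (exp_pos _)]
    exact exp_le_exp.2 (mul_le_mul_of_nonneg_left hω ht)
  have hintS : Integrable (fun ω => exp (t * (∑ i, Z i) ω)) μ :=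
    hindep.integrable_exp_mul_sum hmeas (fun i _ => hint i)
  have h := measure_ge_le_exp_mul_mgf (X := ∑ i, Z i) (μ := μ) c ht hintS
  rw [hindep.mgf_sum hmeas Finset.univ] at h
  have hset : {ω | c ≤ (∑ i, Z i) ω} = {ω | c ≤ ∑ i, Z i ω} := by
    ext ω; simp [Finset.sum_apply]
  rw [hset] at h
  exact h

lemma choose_le_exp_pow (n a : ℕ) (ha : 1 ≤ a) :
    (n.choose a : ℝ) ≤ (Real.exp 1 * n / a) ^ a := by
  have ha' : (0:ℝ) < a := by exact_mod_cast ha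
  have h1 : (n.choose a : ℝ) ≤ (n:ℝ) ^ a / (a.factorial : ℝ) := Nat.choose_le_pow_div a n
  have h2 : ((a:ℝ)) ^ a / (a.factorial : ℝ) ≤ Real.exp a := by
    have hs := Real.sum_le_exp_of_nonneg (x := (a:ℝ)) ha'.le (a+1)
    refine le_trans ?_ hs
    have he : ((a:ℝ))^a / (a.factorial : ℝ) =
        ∑ i ∈ Finset.range (a+1), if i = a then (a:ℝ)^i/(i.factorial : ℝ) else 0 := by
      rw [Finset.sum_ite_eq' (Finset.range (a+1)) a]
      simp
    rw [he]
    refine Finset.sum_le_sum fun i _ => ?_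
    split
    · exact le_rfl
    · positivity
  have hfac : (0:ℝ) < (a.factorial : ℝ) := by exact_mod_cast a.factorial_pos
  have key : (n:ℝ)^a / (a.factorial : ℝ) ≤ (Real.exp 1 * n / a)^a := by
    have hrw : (Real.exp 1 * n / a)^a = ((n:ℝ)/a)^a * (Real.exp 1)^a := by
      rw [← mul_pow]; ring_nf
    rw [hrw, ← Real.exp_nat_mul, mul_one]
    have h3 : ((a:ℝ))^a ≤ (a.factorial : ℝ) * Real.exp a := by
      rw [div_le_iff₀ hfac] at h2; linarith [h2]
    calc (n:ℝ)^a / (a.factorial : ℝ) = (n:ℝ)^a * ((a:ℝ)^a)⁻¹ * ((a:ℝ)^a / (a.factorial : ℝ)) := by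
          field_simp
      _ ≤ (n:ℝ)^a * ((a:ℝ)^a)⁻¹ * Real.exp a := by
          refine mul_le_mul_of_nonneg_left h2 (by positivity)
      _ = ((n:ℝ)/a)^a * Real.exp a := by
          rw [div_pow]; ring
  exact h1.trans key

lemma exp_sub_one_le (x : ℝ) (h0 : 0 ≤ x) (h1 : x ≤ 1) :
    Real.exp x - 1 ≤ Real.exp 1 * x := by
  have e1 := Real.add_one_le_exp (-x)
  have e2 : Real.exp x ≤ Real.exp 1 := Real.exp_le_exp.2 h1
  have e3 : Real.exp x * Real.exp (-x) = 1 := by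
    rw [← Real.exp_add]; simp
  nlinarith [Real.exp_pos x, mul_le_mul_of_nonneg_right e2 h0]

lemma exp_half : (3:ℝ)/2 ≤ Real.exp (1/2) := by
  have := Real.add_one_le_exp (1/2 : ℝ)
  linarith

lemma log_two_le_one : Real.log 2 ≤ 1 := by
  have h : (2:ℝ) ≤ Real.exp 1 := by
    have := Real.exp_one_gt_d9; linarith
  calc Real.log 2 ≤ Real.log (Real.exp 1) := Real.log_le_log (by norm_num) h
    _ = 1 := Real.log_exp 1

lemma mgf_trunc_le {Ω : Type} [MeasurableSpace Ω] (μ : Measure Ω)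
    [IsProbabilityMeasure μ] (X : Ω → ℕ) (hX : Measurable X) (n p : ℕ)
    (hn : 1 ≤ n) (hp : 2 ≤ p) (t : ℝ) (ht : 0 < t)
    (hpmf : ∀ a, (μ {ω | X ω = a}).toReal ≤ (n.choose a : ℝ) * (1/(p:ℝ))^a)
    (h0 : μ {ω | n < X ω} = 0) :
    mgf (fun ω => if 4*Real.exp (t+1) * n < (p:ℝ) * (X ω) then (X ω : ℝ) else 0) μ t
      ≤ 3/2 := by
  set C : ℝ := 4*Real.exp (t+1) with hC
  have hCpos : 0 < C := by positivity
  have hppos : (0:ℝ) < p := by positivity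
  -- mgf as a finite sum
  have hmgf : mgf (fun ω => if C * n < (p:ℝ) * (X ω) then (X ω : ℝ) else 0) μ t
      = ∑ a ∈ Finset.range (n+1),
          Real.exp (t * (if C * n < (p:ℝ) * a then (a:ℝ) else 0))
            * (μ {ω | X ω = a}).toReal := by
    exact integral_comp_eq_sum_aux μ X hX n h0
      (fun a => Real.exp (t * (if C * n < (p:ℝ) * a then (a:ℝ) else 0)))
  rw [hmgf]
  have hsum1 := sum_pmf_eq_one_aux μ X hX n h0
  -- termwise bound
  have hterm : ∀ a ∈ Finset.range (n+1),
      Real.exp (t * (if C * n < (p:ℝ) * a then (a:ℝ) else 0)) * (μ {ω | X ω = a}).toReal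
      ≤ (μ {ω | X ω = a}).toReal + (if a = 0 then 0 else (1/4:ℝ)^a) := by
    intro a _
    by_cases hcond : C * n < (p:ℝ) * a
    · have ha1 : 1 ≤ a := by
        by_contra hc
        push_neg at hc
        interval_cases a
        · simp at hcond
          nlinarith [hCpos, (by exact_mod_cast hn : (1:ℝ) ≤ n)]
      rw [if_pos hcond, if_neg (by omega)]
      have hb1 : (μ {ω | X ω = a}).toReal ≤ (n.choose a : ℝ) * (1/(p:ℝ))^a := hpmf a
      have hb2 : (n.choose a : ℝ) ≤ (Real.exp 1 * n / a) ^ a := choose_le_exp_pow n a ha1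
      have ha' : (0:ℝ) < a := by exact_mod_cast ha1
      have key : Real.exp (t * a) * ((Real.exp 1 * n / a) ^ a * (1/(p:ℝ))^a) ≤ (1/4:ℝ)^a := by
        have hrw : Real.exp (t * a) * ((Real.exp 1 * n / a) ^ a * (1/(p:ℝ))^a)
            = (Real.exp t * (Real.exp 1 * n / (a * p)))^a := by
          rw [mul_comm t (a:ℝ), Real.exp_nat_mul, ← mul_pow, ← mul_pow]
          congr 1
          field_simp
        rw [hrw]
        refine pow_le_pow_left₀ (by positivity) ?_ a
        -- exp t * (e * n / (a*p)) ≤ 1/4  since  C*n ≤ p*a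
        rw [show Real.exp t * (Real.exp 1 * (n:ℝ) / ((a:ℝ) * p))
              = (Real.exp t * (Real.exp 1 * (n:ℝ))) / ((a:ℝ) * p) by ring]
        rw [div_le_iff₀ (by positivity)]
        have h4 : C * n ≤ (a:ℝ) * p := by rw [mul_comm (a:ℝ) (p:ℝ)]; exact hcond.le
        calc Real.exp t * (Real.exp 1 * n) = Real.exp (t+1) * n := by
              rw [Real.exp_add]; ring
          _ = (C * n) / 4 := by rw [hC]; ring
          _ ≤ ((a:ℝ) * p) / 4 := by linarith
          _ = 1/4 * ((a:ℝ)*p) := by ring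
      calc Real.exp (t * a) * (μ {ω | X ω = a}).toReal
          ≤ Real.exp (t * a) * ((Real.exp 1 * n / a) ^ a * (1/(p:ℝ))^a) := by
            refine mul_le_mul_of_nonneg_left (hb1.trans ?_) (Real.exp_pos _).le
            exact mul_le_mul_of_nonneg_right hb2 (by positivity)
        _ ≤ (1/4:ℝ)^a := key
        _ ≤ (μ {ω | X ω = a}).toReal + (1/4:ℝ)^a := by
            have := ENNReal.toReal_nonneg (a := μ {ω | X ω = a}); linarith
    · rw [if_neg hcond]
      simp only [mul_zero, Real.exp_zero, one_mul]
      have : (0:ℝ) ≤ (if a = 0 then 0 else (1/4:ℝ)^a) := by positivity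
      linarith
  calc ∑ a ∈ Finset.range (n+1),
        Real.exp (t * (if C * n < (p:ℝ) * a then (a:ℝ) else 0)) * (μ {ω | X ω = a}).toReal
      ≤ ∑ a ∈ Finset.range (n+1),
          ((μ {ω | X ω = a}).toReal + (if a = 0 then 0 else (1/4:ℝ)^a)) :=
        Finset.sum_le_sum hterm
    _ = 1 + ∑ a ∈ Finset.range (n+1), (if a = 0 then 0 else (1/4:ℝ)^a) := by
        rw [Finset.sum_add_distrib, hsum1]
    _ ≤ 1 + 1/2 := by
        have hgeom : ∑ a ∈ Finset.range (n+1), (if a = 0 then 0 else (1/4:ℝ)^a) ≤ 1/2 := by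
          rw [Finset.sum_range_succ']
          have hz0 : (if (0:ℕ) = 0 then (0:ℝ) else (1/4:ℝ)^(0:ℕ)) = 0 := by norm_num
          rw [hz0, add_zero]
          rw [Finset.sum_congr rfl (fun a _ => by
            norm_num : ∀ a ∈ Finset.range n,
              (if a+1 = 0 then (0:ℝ) else (1/4:ℝ)^(a+1)) = (1/4:ℝ)^(a+1))]
          have h1 : ∑ a ∈ Finset.range n, (1/4:ℝ)^(a+1)
              = (1/4) * ∑ a ∈ Finset.range n, (1/4:ℝ)^a := by
            rw [Finset.mul_sum]
            exact Finset.sum_congr rfl fun a _ => by ring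
          rw [h1]
          have h2 : ∑ a ∈ Finset.range n, (1/4:ℝ)^a ≤ 2 := by
            refine le_trans (Summable.sum_le_tsum (Finset.range n) (fun a _ => by positivity)
              (summable_geometric_of_lt_one (by norm_num) (by norm_num))) ?_
            rw [tsum_geometric_of_lt_one (by norm_num) (by norm_num)]
            norm_num
          linarith
        linarith
    _ = 3/2 := by norm_num

lemma mgf_div_le {Ω : Type} [MeasurableSpace Ω] (μ : Measure Ω)
    [IsProbabilityMeasure μ] (X : Ω → ℕ) (hX : Measurable X) (n p : ℕ)
    (hp : 2 ≤ p) (s : ℝ) (hs : 0 ≤ s) (hsp : s ≤ (p:ℝ))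
    (hpmf : ∀ a, (μ {ω | X ω = a}).toReal
      = (n.choose a : ℝ) * (1/(p:ℝ))^a * (1-1/(p:ℝ))^(n-a))
    (h0 : μ {ω | n < X ω} = 0) :
    mgf (fun ω => (X ω : ℝ)/(p:ℝ)) μ s ≤ Real.exp ((n:ℝ) * (Real.exp 1 * s / (p:ℝ)^2)) := by
  have hppos : (0:ℝ) < p := by positivity
  have hq0 : (0:ℝ) ≤ 1/(p:ℝ) := by positivity
  have hq1 : 1/(p:ℝ) ≤ 1 := by
    rw [div_le_one hppos]; exact_mod_cast Nat.one_le_iff_ne_zero.2 (by omega)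
  set E : ℝ := Real.exp (s/(p:ℝ)) with hE
  have hE1 : 1 ≤ E := by
    rw [hE, ← Real.exp_zero]
    exact Real.exp_le_exp.2 (by positivity)
  have hmgf : mgf (fun ω => (X ω : ℝ)/(p:ℝ)) μ s
      = ∑ a ∈ Finset.range (n+1), Real.exp (s * ((a:ℝ)/(p:ℝ))) * (μ {ω | X ω = a}).toReal :=
    integral_comp_eq_sum_aux μ X hX n h0 (fun a => Real.exp (s * ((a:ℝ)/(p:ℝ))))
  rw [hmgf]
  have hterm : ∀ a ∈ Finset.range (n+1),
      Real.exp (s * ((a:ℝ)/(p:ℝ))) * (μ {ω | X ω = a}).toReal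
      = (1/(p:ℝ) * E)^a * (1 - 1/(p:ℝ))^(n-a) * (n.choose a : ℝ) := by
    intro a _
    rw [hpmf a]
    have h1 : Real.exp (s * ((a:ℝ)/(p:ℝ))) = E ^ a := by
      rw [hE, ← Real.exp_nat_mul]
      congr 1
      ring
    rw [h1, mul_pow]
    ring
  rw [Finset.sum_congr rfl hterm, ← add_pow]
  have hbase : 1/(p:ℝ) * E + (1 - 1/(p:ℝ)) = 1 + (1/(p:ℝ)) * (E - 1) := by ring
  have hb1 : 0 ≤ 1 + (1/(p:ℝ)) * (E - 1) := by nlinarith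
  have hb2 : 1 + (1/(p:ℝ)) * (E - 1) ≤ Real.exp (Real.exp 1 * s / (p:ℝ)^2) := by
    have hd1 : E - 1 ≤ Real.exp 1 * (s/(p:ℝ)) := by
      refine exp_sub_one_le (s/(p:ℝ)) (by positivity) ?_
      rw [div_le_one hppos]; exact hsp
    have hd2 : (1/(p:ℝ)) * (E - 1) ≤ Real.exp 1 * s / (p:ℝ)^2 := by
      calc (1/(p:ℝ)) * (E - 1) ≤ (1/(p:ℝ)) * (Real.exp 1 * (s/(p:ℝ))) := by
            exact mul_le_mul_of_nonneg_left hd1 hq0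
        _ = Real.exp 1 * s / (p:ℝ)^2 := by rw [pow_two]; field_simp
    calc 1 + (1/(p:ℝ)) * (E - 1) ≤ 1 + Real.exp 1 * s / (p:ℝ)^2 := by linarith
      _ ≤ Real.exp (Real.exp 1 * s / (p:ℝ)^2) := by
          have := Real.add_one_le_exp (Real.exp 1 * s / (p:ℝ)^2); linarith
  calc (1/(p:ℝ) * E + (1 - 1/(p:ℝ)))^n ≤ (Real.exp (Real.exp 1 * s / (p:ℝ)^2))^n := by
        rw [hbase]
        exact pow_le_pow_left₀ hb1 hb2 n
    _ = Real.exp ((n:ℝ) * (Real.exp 1 * s / (p:ℝ)^2)) := by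
        rw [← Real.exp_nat_mul]

lemma final_log_bound (M : ℝ) (hM : 0 < M) (n : ℕ) (hn : 1 ≤ n) (x : ℝ≥0∞) (hx : x ≠ ⊤)
    (h : x ≤ ENNReal.ofReal (2*Real.exp (-(M+1)*n))) :
    (((n : ℝ)⁻¹ : ℝ) : EReal) * ENNReal.log x ≤ ((-M : ℝ) : EReal) := by
  have hn' : (1:ℝ) ≤ n := by exact_mod_cast hn
  have hnpos : (0:ℝ) < n := by linarith
  rcases eq_or_ne x 0 with h0 | h0
  · rw [h0, ENNReal.log_zero, EReal.coe_mul_bot_of_pos (by positivity)]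
    exact bot_le
  · have hlog : ENNReal.log x = ((Real.log x.toReal : ℝ) : EReal) := by
      rw [ENNReal.log, if_neg h0, if_neg hx]
    rw [hlog, ← EReal.coe_mul, EReal.coe_le_coe_iff]
    have h2 : x.toReal ≤ 2*Real.exp (-(M+1)*n) := ENNReal.toReal_le_of_le_ofReal (by positivity) h
    have h3 : 0 < x.toReal := ENNReal.toReal_pos h0 hx
    have h4 : Real.log x.toReal ≤ Real.log 2 + (-(M+1)*n) := by
      calc Real.log x.toReal ≤ Real.log (2*Real.exp (-(M+1)*n)) := Real.log_le_log h3 h2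
        _ = Real.log 2 + Real.log (Real.exp (-(M+1)*n)) :=
            Real.log_mul (by norm_num) (Real.exp_ne_zero _)
        _ = Real.log 2 + (-(M+1)*n) := by rw [Real.log_exp]
    have hinv0 : 0 < (n:ℝ)⁻¹ := by positivity
    have hinv1 : (n:ℝ)⁻¹ ≤ 1 := by
      rw [inv_le_one_iff₀]; right; exact hn'
    calc (n:ℝ)⁻¹ * Real.log x.toReal ≤ (n:ℝ)⁻¹ * (Real.log 2 + (-(M+1)*n)) :=
          mul_le_mul_of_nonneg_left h4 hinv0.le
      _ = (n:ℝ)⁻¹ * Real.log 2 - (M+1)*((n:ℝ)⁻¹*n) := by ring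
      _ = (n:ℝ)⁻¹ * Real.log 2 - (M+1) := by rw [inv_mul_cancel₀ hnpos.ne', mul_one]
      _ ≤ -M := by
          have hl2 : 0 ≤ Real.log 2 := Real.log_nonneg (by norm_num)
          nlinarith [log_two_le_one]

set_option maxHeartbeats 1000000 in
/-- For independent random variables `(Y_p)_{p ∈ S(k,n)}`
with `Y_p ~ Binomial(n, 1/p)` (on a probability space possibly depending on
`k` and `n`), and for every `ε > 0`:
`limsup_{k→∞} limsup_{n→∞} (1/n)·log P(∑_{p∈S(k,n)} Y_p² > n²ε) = −∞`, i.e.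
for every `M > 0` there exists `K` such that for all `k ≥ K` the inner limsup
over `n` is at most `−M`. -/
theorem binomial_family_superexponential_estimate (ε : ℝ) (hε : 0 < ε)
    (Ω : ℕ → ℕ → Type) (mΩ : ∀ k n, MeasurableSpace (Ω k n))
    (P : ∀ k n, Measure (Ω k n)) (hP : ∀ k n, IsProbabilityMeasure (P k n))
    (Y : ∀ k n, ℕ → Ω k n → ℕ)
    (hmeas : ∀ k n, ∀ p ∈ primesIn k n, Measurable (Y k n p))
    (hindep : ∀ k n,
      iIndepFun
        (fun p : {p : ℕ // p ∈ primesIn k n} => Y k n p) (P k n))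
    (hdist : ∀ k n, ∀ p ∈ primesIn k n, ∀ y : ℕ,
      P k n {ω | Y k n p ω = y} =
        ENNReal.ofReal ((n.choose y : ℝ) * (1 / (p : ℝ)) ^ y *
          (1 - 1 / (p : ℝ)) ^ (n - y))) :
    ∀ M : ℝ, 0 < M → ∃ K : ℕ, ∀ k ≥ K,
      Filter.limsup
        (fun n : ℕ =>
          (((n : ℝ)⁻¹ : ℝ) : EReal) *
            ENNReal.log
              (P k n {ω | (n : ℝ) ^ 2 * ε < ∑ p ∈ primesIn k n, (Y k n p ω : ℝ) ^ 2}))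
        atTop
      ≤ ((-M : ℝ) : EReal) := by
  intro M hM
  classical
  set t : ℝ := 2*(M+2)/ε with htdef
  have ht : 0 < t := by rw [htdef]; positivity
  set C : ℝ := 4*Real.exp (t+1) with hCdef
  have hCpos : 0 < C := by rw [hCdef]; positivity
  refine ⟨max 1 ⌈(M+4)*(2*C)/ε⌉₊, fun k hk => ?_⟩
  have hk1 : 1 ≤ k := le_trans (le_max_left _ _) hk
  have hkC : (M+4)*(2*C)/ε ≤ (k:ℝ) := by
    refine le_trans (Nat.le_ceil _) ?_
    exact_mod_cast le_trans (le_max_right 1 _) hk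
  refine Filter.limsup_le_of_le (by isBoundedDefault) ?_
  filter_upwards [Filter.eventually_ge_atTop 1] with n hn
  -- Setup
  have hPM : IsProbabilityMeasure (P k n) := hP k n
  set S : Finset ℕ := primesIn k n with hSdef
  have hmem : ∀ p ∈ S, k < p ∧ p ≤ n ∧ 2 ≤ p := by
    intro p hp
    have h1 := Finset.mem_filter.1 hp
    have h2 := Finset.mem_Ioc.1 h1.1
    exact ⟨h2.1, h2.2, h1.2.two_le⟩
  have hpmf : ∀ p ∈ S, ∀ a : ℕ, ((P k n) {ω | Y k n p ω = a}).toReal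
      = (n.choose a : ℝ) * (1/(p:ℝ))^a * (1-1/(p:ℝ))^(n-a) := by
    intro p hp a
    have h2 : (2:ℝ) ≤ p := by exact_mod_cast (hmem p hp).2.2
    have hq1 : 1/(p:ℝ) ≤ 1 := by
      rw [div_le_one (by linarith)]; linarith
    rw [hdist k n p hp a, ENNReal.toReal_ofReal]
    refine mul_nonneg (mul_nonneg (by positivity) (by positivity)) (pow_nonneg (by linarith) _)
  have hnull : ∀ p ∈ S, (P k n) {ω | n < Y k n p ω} = 0 := by
    intro p hp
    refine le_antisymm ?_ zero_le
    have hsub : {ω | n < Y k n p ω} ⊆ ⋃ j : ℕ, {ω | Y k n p ω = n + 1 + j} := by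
      intro ω hω
      simp only [Set.mem_setOf_eq] at hω ⊢
      exact Set.mem_iUnion.2 ⟨Y k n p ω - (n+1), by simp only [Set.mem_setOf_eq]; omega⟩
    refine le_trans (measure_mono hsub) (le_trans (measure_iUnion_le _) ?_)
    have hz : ∀ j : ℕ, (P k n) {ω | Y k n p ω = n+1+j} = 0 := by
      intro j
      rw [hdist k n p hp (n+1+j), Nat.choose_eq_zero_of_lt (by omega)]
      simp
    simp [hz]
  have hae : ∀ p ∈ S, ∀ᵐ ω ∂(P k n), Y k n p ω ≤ n := by
    intro p hp
    rw [ae_iff]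
    simpa [not_le] using hnull p hp
  -- the random variables
  set gZ : ℕ → ℕ → ℝ := fun p a => if C * (n:ℝ) < (p:ℝ) * (a:ℝ) then (a:ℝ) else 0 with hgZ
  set gV : ℕ → ℕ → ℝ := fun p a => (a:ℝ)/(p:ℝ) with hgV
  set Z : {p : ℕ // p ∈ S} → Ω k n → ℝ := fun i => gZ i.1 ∘ Y k n i.1 with hZdef
  set V : {p : ℕ // p ∈ S} → Ω k n → ℝ := fun i => gV i.1 ∘ Y k n i.1 with hVdef
  have hZmeas : ∀ i, Measurable (Z i) := fun i =>
    measurable_from_nat.comp (hmeas k n i.1 i.2)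
  have hVmeas : ∀ i, Measurable (V i) := fun i =>
    measurable_from_nat.comp (hmeas k n i.1 i.2)
  have hZindep : iIndepFun Z (P k n) :=
    (hindep k n).comp (fun i => gZ i.1) (fun i => measurable_from_nat)
  have hVindep : iIndepFun V (P k n) :=
    (hindep k n).comp (fun i => gV i.1) (fun i => measurable_from_nat)
  have hZb : ∀ i, ∀ᵐ ω ∂(P k n), Z i ω ≤ (n:ℝ) := by
    intro i
    filter_upwards [hae i.1 i.2] with ω hω
    rw [hZdef]
    simp only [Function.comp_apply, hgZ]
    split
    · exact_mod_cast hω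
    · positivity
  have hVb : ∀ i, ∀ᵐ ω ∂(P k n), V i ω ≤ (n:ℝ) := by
    intro i
    filter_upwards [hae i.1 i.2] with ω hω
    rw [hVdef]
    simp only [Function.comp_apply, hgV]
    have h1 : ((Y k n i.1 ω : ℝ)) ≤ (n:ℝ) := by exact_mod_cast hω
    have hp1 : (1:ℝ) ≤ (i.1 : ℝ) := by
      have := (hmem i.1 i.2).2.2; exact_mod_cast by omega
    calc (Y k n i.1 ω : ℝ)/(i.1:ℝ) ≤ (Y k n i.1 ω : ℝ) := by
          refine div_le_self (by positivity) hp1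
      _ ≤ (n:ℝ) := h1
  -- Chernoff bounds
  have hP1 : ((P k n) {ω | ε*n/2 ≤ ∑ i, Z i ω}).toReal ≤ Real.exp (-(M+1)*n) := by
    have hcher := chernoff_aux Z hZmeas hZindep t (ε*n/2) n ht.le hZb
    refine le_trans hcher ?_
    have hmgfZ : ∀ i, mgf (Z i) (P k n) t ≤ 3/2 := by
      intro i
      have h2 : (2:ℝ) ≤ (i.1:ℝ) := by exact_mod_cast (hmem i.1 i.2).2.2
      have hple : ∀ a : ℕ, ((P k n) {ω | Y k n i.1 ω = a}).toReal
          ≤ (n.choose a : ℝ) * (1/(i.1:ℝ))^a := by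
        intro a
        rw [hpmf i.1 i.2 a]
        have hq0 : (0:ℝ) ≤ 1 - 1/(i.1:ℝ) := by
          have : 1/(i.1:ℝ) ≤ 1 := by rw [div_le_one (by linarith)]; linarith
          linarith
        have hq1 : 1 - 1/(i.1:ℝ) ≤ 1 := by
          have : (0:ℝ) ≤ 1/(i.1:ℝ) := by positivity
          linarith
        exact mul_le_of_le_one_right (by positivity) (pow_le_one₀ hq0 hq1)
      exact mgf_trunc_le (P k n) (Y k n i.1) (hmeas k n i.1 i.2) n i.1 hn
        (hmem i.1 i.2).2.2 t ht hple (hnull i.1 i.2)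
    have hprodZ : ∏ i, mgf (Z i) (P k n) t ≤ (3/2:ℝ)^(n:ℕ) := by
      calc ∏ i, mgf (Z i) (P k n) t ≤ ∏ _i : {p : ℕ // p ∈ S}, (3/2:ℝ) :=
            Finset.prod_le_prod (fun i _ => mgf_nonneg) (fun i _ => hmgfZ i)
        _ = (3/2:ℝ)^(Fintype.card {p : ℕ // p ∈ S}) := by
            rw [Finset.prod_const, Finset.card_univ]
        _ ≤ (3/2:ℝ)^(n:ℕ) := by
            refine pow_le_pow_right₀ (by norm_num) ?_
            rw [Fintype.card_coe]
            calc S.card ≤ (Finset.Ioc k n).card := Finset.card_filter_le _ _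
              _ = n - k := Nat.card_Ioc k n
              _ ≤ n := Nat.sub_le _ _
    calc Real.exp (-t*(ε*n/2)) * ∏ i, mgf (Z i) (P k n) t
        ≤ Real.exp (-t*(ε*n/2)) * ((3/2:ℝ)^(n:ℕ)) :=
          mul_le_mul_of_nonneg_left hprodZ (Real.exp_pos _).le
      _ ≤ Real.exp (-t*(ε*n/2)) * Real.exp ((n:ℝ)*(1/2)) := by
          refine mul_le_mul_of_nonneg_left ?_ (Real.exp_pos _).le
          calc (3/2:ℝ)^(n:ℕ) ≤ (Real.exp (1/2))^(n:ℕ) := pow_le_pow_left₀ (by norm_num) exp_half n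
            _ = Real.exp ((n:ℝ)*(1/2)) := (Real.exp_nat_mul _ n).symm
      _ = Real.exp (-t*(ε*n/2) + (n:ℝ)*(1/2)) := (Real.exp_add _ _).symm
      _ ≤ Real.exp (-(M+1)*n) := by
          refine Real.exp_le_exp.2 ?_
          have hte : t*(ε*n/2) = (M+2)*n := by rw [htdef]; field_simp
          have hn0 : (0:ℝ) ≤ (n:ℝ) := by positivity
          linarith
  have hP2 : ((P k n) {ω | ε*n/(2*C) ≤ ∑ i, V i ω}).toReal ≤ Real.exp (-(M+1)*n) := by
    have hkr : (0:ℝ) ≤ (k:ℝ) := by positivity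
    have hkpos : (0:ℝ) < (k:ℝ) := by exact_mod_cast hk1
    have hcher := chernoff_aux V hVmeas hVindep (k:ℝ) (ε*n/(2*C)) n hkr hVb
    refine le_trans hcher ?_
    have hmgfV : ∀ i, mgf (V i) (P k n) (k:ℝ)
        ≤ Real.exp ((n:ℝ) * (Real.exp 1 * (k:ℝ) / ((i.1:ℕ):ℝ)^2)) := by
      intro i
      have hkp : (k:ℝ) ≤ ((i.1:ℕ):ℝ) := by exact_mod_cast (hmem i.1 i.2).1.le
      exact mgf_div_le (P k n) (Y k n i.1) (hmeas k n i.1 i.2) n i.1 (hmem i.1 i.2).2.2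
        (k:ℝ) hkr hkp (hpmf i.1 i.2) (hnull i.1 i.2)
    have hprodV : ∏ i, mgf (V i) (P k n) (k:ℝ) ≤ Real.exp (3*(n:ℝ)) := by
      calc ∏ i, mgf (V i) (P k n) (k:ℝ)
          ≤ ∏ i : {p : ℕ // p ∈ S}, Real.exp ((n:ℝ) * (Real.exp 1 * (k:ℝ) / ((i.1:ℕ):ℝ)^2)) :=
            Finset.prod_le_prod (fun i _ => mgf_nonneg) (fun i _ => hmgfV i)
        _ = Real.exp (∑ i : {p : ℕ // p ∈ S}, (n:ℝ) * (Real.exp 1 * (k:ℝ) / ((i.1:ℕ):ℝ)^2)) :=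
            (Real.exp_sum _ _).symm
        _ ≤ Real.exp (3*(n:ℝ)) := by
            refine Real.exp_le_exp.2 ?_
            have hsum : ∑ i : {p : ℕ // p ∈ S}, (n:ℝ) * (Real.exp 1 * (k:ℝ) / ((i.1:ℕ):ℝ)^2)
                = ((n:ℝ) * (Real.exp 1 * (k:ℝ))) * ∑ p ∈ S, (((p:ℕ):ℝ)^2)⁻¹ := by
              rw [Finset.mul_sum,
                ← Finset.sum_coe_sort S (fun p => ((n:ℝ) * (Real.exp 1 * (k:ℝ))) * (((p:ℕ):ℝ)^2)⁻¹)]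
              refine Finset.sum_congr rfl fun i _ => ?_
              rw [div_eq_mul_inv]
              ring
            rw [hsum]
            have hsq : ∑ p ∈ S, (((p:ℕ):ℝ)^2)⁻¹ ≤ ((k:ℝ))⁻¹ := by
              refine le_trans (Finset.sum_le_sum_of_subset_of_nonneg
                (Finset.filter_subset _ _) (fun p _ _ => by positivity)) ?_
              rcases le_or_gt k n with hkn | hkn
              · refine le_trans (sum_Ioc_inv_sq_le_sub (by omega) hkn) ?_
                have : (0:ℝ) ≤ ((n:ℝ))⁻¹ := by positivity
                linarith
              · rw [Finset.Ioc_eq_empty (by omega)]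
                simp only [Finset.sum_empty]
                positivity
            have he3 : Real.exp 1 ≤ 3 := by
              have := Real.exp_one_lt_d9; linarith
            have hn0 : (0:ℝ) ≤ (n:ℝ) := by positivity
            calc ((n:ℝ) * (Real.exp 1 * (k:ℝ))) * ∑ p ∈ S, (((p:ℕ):ℝ)^2)⁻¹
                ≤ ((n:ℝ) * (Real.exp 1 * (k:ℝ))) * ((k:ℝ))⁻¹ := by
                  refine mul_le_mul_of_nonneg_left hsq (by positivity)
              _ = (n:ℝ) * Real.exp 1 := by field_simp
              _ ≤ 3*(n:ℝ) := by nlinarith [Real.exp_pos 1]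
    calc Real.exp (-(k:ℝ)*(ε*n/(2*C))) * ∏ i, mgf (V i) (P k n) (k:ℝ)
        ≤ Real.exp (-(k:ℝ)*(ε*n/(2*C))) * Real.exp (3*(n:ℝ)) :=
          mul_le_mul_of_nonneg_left hprodV (Real.exp_pos _).le
      _ = Real.exp (-(k:ℝ)*(ε*n/(2*C)) + 3*(n:ℝ)) := (Real.exp_add _ _).symm
      _ ≤ Real.exp (-(M+1)*n) := by
          refine Real.exp_le_exp.2 ?_
          have h1 : (M+4)*(n:ℝ) ≤ (k:ℝ)*(ε*n/(2*C)) := by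
            have h2 : (M+4)*(2*C)/ε * (ε*n/(2*C)) = (M+4)*(n:ℝ) := by
              field_simp
            have h3 : (0:ℝ) ≤ ε*n/(2*C) := by positivity
            nlinarith [mul_le_mul_of_nonneg_right hkC h3]
          linarith
  -- inclusion
  have hincl : {ω | (n:ℝ)^2*ε < ∑ p ∈ S, (Y k n p ω : ℝ)^2}
      ⊆ {ω | ε*n/2 ≤ ∑ i, Z i ω} ∪ {ω | ε*n/(2*C) ≤ ∑ i, V i ω}
        ∪ ⋃ p ∈ S, {ω | n < Y k n p ω} := by
    intro ω hω
    simp only [Set.mem_setOf_eq] at hω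
    by_contra hc
    simp only [Set.mem_union, Set.mem_setOf_eq, not_or, not_le] at hc
    obtain ⟨⟨h1, h2⟩, h3⟩ := hc
    have hnpos : (0:ℝ) < (n:ℝ) := by
      have : (1:ℝ) ≤ (n:ℝ) := by exact_mod_cast hn
      linarith
    have hYb : ∀ p ∈ S, Y k n p ω ≤ n := by
      intro p hp
      by_contra hb
      push_neg at hb
      exact h3 (Set.mem_biUnion hp (by simpa using hb))
    have hpt : ∀ i : {p : ℕ // p ∈ S},
        ((Y k n i.1 ω : ℝ))^2 ≤ (n:ℝ) * Z i ω + C*(n:ℝ)*(V i ω) := by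
      intro i
      have hYn : ((Y k n i.1 ω : ℕ):ℝ) ≤ (n:ℝ) := by exact_mod_cast hYb i.1 i.2
      have hY0 : (0:ℝ) ≤ ((Y k n i.1 ω : ℕ):ℝ) := by positivity
      have hp2 : (2:ℝ) ≤ ((i.1:ℕ):ℝ) := by exact_mod_cast (hmem i.1 i.2).2.2
      have hppos : (0:ℝ) < ((i.1:ℕ):ℝ) := by linarith
      rw [hZdef, hVdef]
      simp only [Function.comp_apply, hgZ, hgV]
      split
      · -- large case
        have hpos : (0:ℝ) ≤ C*(n:ℝ)*(((Y k n i.1 ω : ℕ):ℝ)/((i.1:ℕ):ℝ)) := by positivity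
        have hsq : ((Y k n i.1 ω : ℕ):ℝ)^2 ≤ (n:ℝ) * ((Y k n i.1 ω : ℕ):ℝ) := by
          rw [pow_two]
          exact mul_le_mul_of_nonneg_right hYn hY0
        linarith
      · -- small case
        next h =>
        push_neg at h
        have hdiv : ((Y k n i.1 ω : ℕ):ℝ)^2 ≤ C*(n:ℝ)*(((Y k n i.1 ω : ℕ):ℝ)/((i.1:ℕ):ℝ)) := by
          rw [← mul_div_assoc, le_div_iff₀ hppos]
          calc ((Y k n i.1 ω : ℕ):ℝ)^2 * ((i.1:ℕ):ℝ)
              = (((i.1:ℕ):ℝ) * ((Y k n i.1 ω : ℕ):ℝ)) * ((Y k n i.1 ω : ℕ):ℝ) := by ring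
            _ ≤ (C*(n:ℝ)) * ((Y k n i.1 ω : ℕ):ℝ) := mul_le_mul_of_nonneg_right h hY0
        linarith [hdiv]
    have hsum := Finset.sum_le_sum (fun i (_ : i ∈ (Finset.univ : Finset {p : ℕ // p ∈ S})) => hpt i)
    have hEq : ∑ p ∈ S, ((Y k n p ω : ℕ):ℝ)^2
        = ∑ i : {p : ℕ // p ∈ S}, ((Y k n i.1 ω : ℕ):ℝ)^2 :=
      (Finset.sum_coe_sort S (fun p => ((Y k n p ω : ℕ):ℝ)^2)).symm
    have hsplit : ∑ i : {p : ℕ // p ∈ S}, ((n:ℝ) * Z i ω + C*(n:ℝ)*(V i ω))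
        = (n:ℝ) * (∑ i, Z i ω) + C*(n:ℝ)*(∑ i, V i ω) := by
      rw [Finset.sum_add_distrib, ← Finset.mul_sum, ← Finset.mul_sum]
    have e1 : (n:ℝ) * (∑ i, Z i ω) < (n:ℝ)*(ε*n/2) := by
      exact mul_lt_mul_of_pos_left h1 hnpos
    have e2 : C*(n:ℝ)*(∑ i, V i ω) < C*(n:ℝ)*(ε*n/(2*C)) := by
      refine mul_lt_mul_of_pos_left h2 (by positivity)
    have q1 : (n:ℝ)*(ε*n/2) = ε*(n:ℝ)^2/2 := by ring
    have q2 : C*(n:ℝ)*(ε*n/(2*C)) = ε*(n:ℝ)^2/2 := by field_simp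
    have q3 : ((n:ℝ))^2*ε = ε*(n:ℝ)^2 := by ring
    rw [hEq] at hω
    rw [hsplit] at hsum
    linarith
  have hkey : (P k n) {ω | (n:ℝ)^2*ε < ∑ p ∈ S, (Y k n p ω : ℝ)^2}
      ≤ ENNReal.ofReal (2*Real.exp (-(M+1)*n)) := by
    calc (P k n) {ω | (n:ℝ)^2*ε < ∑ p ∈ S, (Y k n p ω : ℝ)^2}
        ≤ (P k n) ({ω | ε*n/2 ≤ ∑ i, Z i ω} ∪ {ω | ε*n/(2*C) ≤ ∑ i, V i ω}
            ∪ ⋃ p ∈ S, {ω | n < Y k n p ω}) := measure_mono hincl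
      _ ≤ (P k n) ({ω | ε*n/2 ≤ ∑ i, Z i ω} ∪ {ω | ε*n/(2*C) ≤ ∑ i, V i ω})
            + (P k n) (⋃ p ∈ S, {ω | n < Y k n p ω}) := measure_union_le _ _
      _ ≤ ((P k n) {ω | ε*n/2 ≤ ∑ i, Z i ω} + (P k n) {ω | ε*n/(2*C) ≤ ∑ i, V i ω}) + 0 := by
          refine add_le_add (measure_union_le _ _) ?_
          refine le_trans (measure_biUnion_finset_le _ _) ?_
          rw [Finset.sum_congr rfl (fun p hp => hnull p hp), Finset.sum_const, smul_zero]
      _ = (P k n) {ω | ε*n/2 ≤ ∑ i, Z i ω} + (P k n) {ω | ε*n/(2*C) ≤ ∑ i, V i ω} := by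
          rw [add_zero]
      _ ≤ ENNReal.ofReal (Real.exp (-(M+1)*n)) + ENNReal.ofReal (Real.exp (-(M+1)*n)) := by
          refine add_le_add ?_ ?_
          · exact (ENNReal.le_ofReal_iff_toReal_le (measure_ne_top _ _) (Real.exp_nonneg _)).2 hP1
          · exact (ENNReal.le_ofReal_iff_toReal_le (measure_ne_top _ _) (Real.exp_nonneg _)).2 hP2
      _ = ENNReal.ofReal (2*Real.exp (-(M+1)*n)) := by
          rw [← ENNReal.ofReal_add (Real.exp_nonneg _) (Real.exp_nonneg _)]
          ring_nf
  exact final_log_bound M hM n hn _ (measure_ne_top _ _) hkey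
end

section
/- Let k₁ < k₂ and let p₁,…,p_ℓ enumerate the primes in S(k₁,k₂). Let m ∈ ℕ satisfy m·∏_{j=1}^ℓ p_j ≤ n < (m+1)·∏_{j=1}^ℓ p_j. Then for every ε > 0 there exists a coupling μ, namely a probability measure on pairs of random vectors (X₁,…,Xₙ) and (X̃₁,…,X̃ₙ) whose first marginal makes X₁,…,Xₙ i.i.d. uniform on {1,…,n} and whose second marginal makes X̃₁,…,X̃ₙ i.i.d. with P(X̃_i = ∏_{j=1}^ℓ p_j^{b_j}) = ∏_{j: b_j=1} (1/p_j) · ∏_{j: b_j=0} (1 − 1/p_j) for each (b₁,…,b_ℓ) ∈ {0,1}^ℓ, such that μ( ∑_{q ∈ S(k₁,k₂)} Y_q² − ∑_{q ∈ S(k₁,k₂)} Ỹ_q² ≥ n²ε ) ≤ 2^n·(1/m)^{nε/(2k₂)}, where Y_q := #{1 ≤ i ≤ n : q divides X_i} and Ỹ_q := #{1 ≤ i ≤ n : q divides X̃_i}. -/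
open MeasureTheory ProbabilityTheory Real

/-- The joint law of `n` i.i.d. random variables, each uniformly distributed on
`{1, 2, …, n}` (the coordinates `ω ↦ ω i` are the random variables `X_i`). -/
noncomputable def unifVec (n : ℕ) : Measure (Fin n → ℕ) :=
  Measure.pi fun _ => uniformOn (Set.Icc 1 n)

/-- `Y_p = #{1 ≤ i ≤ n : p ∣ X_i}`. -/
def Yp (n : ℕ) (p : ℕ) (ω : Fin n → ℕ) : ℕ :=
  (Finset.univ.filter fun i : Fin n => p ∣ ω i).card

section AuxCoupling
open Finset

lemma meas_all {s : Set (ℕ × ℕ)} : MeasurableSet s := s.to_countable.measurableSet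

lemma uniformOn_finset_apply (s : Finset ℕ) (t : Set ℕ) [DecidablePred (· ∈ t)] :
    uniformOn (s : Set ℕ) t = ((s.filter (· ∈ t)).card : ENNReal) / s.card := by
  rw [uniformOn, cond_apply (s.countable_toSet.measurableSet)]
  have h1 : Measure.count (s : Set ℕ) = s.card := Measure.count_apply_finset s
  have h2 : ((s : Set ℕ) ∩ t) = ((s.filter (· ∈ t) : Finset ℕ) : Set ℕ) := by
    ext x; simp [Finset.mem_filter, Set.mem_inter_iff]
  rw [h1, h2, Measure.count_apply_finset, ENNReal.div_eq_inv_mul]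

section Counting
variable (S : Finset ℕ) (hS : ∀ q ∈ S, Nat.Prime q) (T : Finset ℕ)

/-- counting pattern in one period -/
lemma count_one_period (hS : ∀ q ∈ S, Nat.Prime q) (hT : T ⊆ S) :
    ((Finset.Ioc 0 (∏ q ∈ S, q)).filter (fun x => ∀ q ∈ S, (q ∣ x ↔ q ∈ T))).card
      = ∏ q ∈ S \ T, (q - 1) := by
  classical
  set P := ∏ q ∈ S, q with hPdef
  have hP : 0 < P := Finset.prod_pos (fun q hq => (hS q hq).pos)
  haveI : NeZero P := ⟨hP.ne'⟩
  haveI instq : ∀ q : {x // x ∈ S}, NeZero (q : ℕ) := fun q => ⟨(hS q q.2).pos.ne'⟩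
  have hP' : P = ∏ q : {x // x ∈ S}, (q : ℕ) := (Finset.prod_coe_sort S _).symm
  have copr : Pairwise (Function.onFun Nat.Coprime fun q : {x // x ∈ S} => (q : ℕ)) := by
    intro i j hij
    exact (Nat.coprime_primes (hS i i.2) (hS j j.2)).mpr (Subtype.coe_injective.ne hij)
  have e : ZMod P ≃+* ∀ q : {x // x ∈ S}, ZMod (q : ℕ) :=
    (ZMod.ringEquivCongr hP').trans (ZMod.prodEquivPi _ copr)
  -- key : component description
  have he : ∀ (x : ℕ) (q : {x // x ∈ S}), (e (x : ZMod P) q = 0 ↔ (q : ℕ) ∣ x) := by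
    intro x q
    have : e (x : ZMod P) = ((x : ∀ q : {x // x ∈ S}, ZMod (q : ℕ))) := map_natCast e.toRingHom x
    rw [this, Pi.natCast_apply, ZMod.natCast_eq_zero_iff]
  -- step 0 : Ioc 0 P → range P
  have step0 : ((Finset.Ioc 0 P).filter (fun x => ∀ q ∈ S, (q ∣ x ↔ q ∈ T))).card
      = ((Finset.range P).filter (fun x => ∀ q ∈ S, (q ∣ x ↔ q ∈ T))).card := by
    apply Finset.card_nbij' (fun x => x % P) (fun y => if y = 0 then P else y)
    · intro x hx
      simp only [Finset.mem_coe, mem_filter, mem_Ioc, mem_range] at hx ⊢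
      refine ⟨Nat.mod_lt _ hP, fun q hq => ?_⟩
      have hqP : q ∣ P := Finset.dvd_prod_of_mem _ hq
      rw [Nat.dvd_mod_iff hqP]
      exact hx.2 q hq
    · intro y hy
      simp only [Finset.mem_coe, mem_filter, mem_Ioc, mem_range] at hy ⊢
      split_ifs with h
      · refine ⟨⟨hP, le_refl _⟩, fun q hq => ?_⟩
        have hqP : q ∣ P := Finset.dvd_prod_of_mem _ hq
        exact ⟨fun _ => (hy.2 q hq).mp (h ▸ dvd_zero q), fun _ => hqP⟩
      · exact ⟨⟨Nat.pos_of_ne_zero h, hy.1.le⟩, hy.2⟩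
    · intro x hx
      simp only [Finset.mem_coe, mem_filter, mem_Ioc] at hx
      rcases eq_or_lt_of_le hx.1.2 with h | h
      · simp [h, Nat.mod_self]
      · beta_reduce
        rw [Nat.mod_eq_of_lt h, if_neg hx.1.1.ne']
    · intro y hy
      simp only [Finset.mem_coe, mem_filter, mem_range] at hy
      beta_reduce
      split_ifs with h
      · simp [h, Nat.mod_self]
      · exact Nat.mod_eq_of_lt hy.1
  -- step 1 : range P → ZMod P
  have step1 : ((Finset.range P).filter (fun x => ∀ q ∈ S, (q ∣ x ↔ q ∈ T))).card
      = ((Finset.univ : Finset (ZMod P)).filter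
          (fun r => ∀ q : {x // x ∈ S}, (e r q = 0 ↔ (q : ℕ) ∈ T))).card := by
    refine Finset.card_nbij' (fun x => (x : ZMod P)) (fun r => r.val) ?_ ?_ ?_ ?_
    · intro x hx
      simp only [Finset.mem_coe, mem_filter, mem_range] at hx ⊢
      refine ⟨Finset.mem_univ _, fun q => ?_⟩
      rw [he x q]
      exact hx.2 q q.2
    · intro r hr
      simp only [Finset.mem_coe, mem_filter, mem_range, mem_univ, true_and] at hr ⊢
      refine ⟨ZMod.val_lt r, fun q hq => ?_⟩
      have h2 : ((r.val : ℕ) : ZMod P) = r := ZMod.natCast_rightInverse r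
      rw [← he r.val ⟨q, hq⟩, h2]
      exact hr ⟨q, hq⟩
    · intro x hx
      simp only [Finset.mem_coe, mem_filter, mem_range] at hx
      exact ZMod.val_cast_of_lt hx.1
    · intro r _
      exact ZMod.natCast_rightInverse r
  -- step 2 : ZMod P → pi
  have step2 : ((Finset.univ : Finset (ZMod P)).filter
          (fun r => ∀ q : {x // x ∈ S}, (e r q = 0 ↔ (q : ℕ) ∈ T))).card
      = ((Finset.univ : Finset (∀ q : {x // x ∈ S}, ZMod (q : ℕ))).filter
          (fun f => ∀ q : {x // x ∈ S}, (f q = 0 ↔ (q : ℕ) ∈ T))).card := by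
    refine Finset.card_nbij' (fun r => e r) (fun f => e.symm f) ?_ ?_ ?_ ?_
    · intro r hr
      simp only [Finset.mem_coe, mem_filter, mem_univ, true_and] at hr ⊢
      exact hr
    · intro f hf
      simp only [Finset.mem_coe, mem_filter, mem_univ, true_and] at hf ⊢
      simpa using hf
    · intro r _; simp
    · intro f _; simp
  -- step 3 : pi count
  have step3 : ((Finset.univ : Finset (∀ q : {x // x ∈ S}, ZMod (q : ℕ))).filter
          (fun f => ∀ q : {x // x ∈ S}, (f q = 0 ↔ (q : ℕ) ∈ T))).card
      = ∏ q ∈ S \ T, (q - 1) := by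
    have hpi : ((Finset.univ : Finset (∀ q : {x // x ∈ S}, ZMod (q : ℕ))).filter
          (fun f => ∀ q : {x // x ∈ S}, (f q = 0 ↔ (q : ℕ) ∈ T)))
        = Fintype.piFinset (fun q : {x // x ∈ S} =>
            if (q : ℕ) ∈ T then ({0} : Finset (ZMod (q : ℕ))) else {0}ᶜ) := by
      ext f
      simp only [mem_filter, mem_univ, true_and, Fintype.mem_piFinset]
      apply forall_congr'
      intro q
      split_ifs with h
      · simp [h]
      · simp [h]
    rw [hpi, Fintype.card_piFinset]
    have : ∀ q : {x // x ∈ S},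
        ((if (q : ℕ) ∈ T then ({0} : Finset (ZMod (q : ℕ))) else {0}ᶜ)).card
        = if (q : ℕ) ∈ T then 1 else (q : ℕ) - 1 := by
      intro q
      split_ifs with h
      · simp
      · rw [Finset.card_compl, Finset.card_singleton, ZMod.card]
    simp_rw [this]
    rw [Finset.prod_coe_sort S (fun q => if q ∈ T then 1 else q - 1)]
    rw [Finset.prod_ite, Finset.prod_const_one, one_mul, ← Finset.sdiff_eq_filter]
  rw [step0, step1, step2, step3]

end Counting

lemma count_periods (S : Finset ℕ) (hS : ∀ q ∈ S, Nat.Prime q) (T : Finset ℕ) (m : ℕ) :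
    ((Finset.Ioc 0 (m * ∏ q ∈ S, q)).filter (fun x => ∀ q ∈ S, (q ∣ x ↔ q ∈ T))).card
      = m * ((Finset.Ioc 0 (∏ q ∈ S, q)).filter (fun x => ∀ q ∈ S, (q ∣ x ↔ q ∈ T))).card := by
  classical
  set P := ∏ q ∈ S, q with hPdef
  have hP : 0 < P := Finset.prod_pos (fun q hq => (hS q hq).pos)
  induction m with
  | zero => simp
  | succ k ih =>
    have hsplit : Finset.Ioc 0 ((k+1) * P) = Finset.Ioc 0 (k * P) ∪ Finset.Ioc (k * P) ((k+1) * P) := by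
      rw [Finset.Ioc_union_Ioc_eq_Ioc (Nat.zero_le _) (by nlinarith)]
    have hdisj : Disjoint ((Finset.Ioc 0 (k * P)).filter (fun x => ∀ q ∈ S, (q ∣ x ↔ q ∈ T)))
        ((Finset.Ioc (k * P) ((k+1) * P)).filter (fun x => ∀ q ∈ S, (q ∣ x ↔ q ∈ T))) := by
      apply Finset.disjoint_filter_filter
      rw [Finset.disjoint_left]
      intro a ha hb
      simp only [Finset.mem_Ioc] at ha hb
      omega
    have hchunk : ((Finset.Ioc (k * P) ((k+1) * P)).filter (fun x => ∀ q ∈ S, (q ∣ x ↔ q ∈ T))).card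
        = ((Finset.Ioc 0 P).filter (fun x => ∀ q ∈ S, (q ∣ x ↔ q ∈ T))).card := by
      have hkp : (k+1) * P = k * P + P := by ring
      refine Finset.card_nbij' (fun x => x - k * P) (fun y => y + k * P) ?_ ?_ ?_ ?_
      · intro x hx
        simp only [Finset.mem_coe, Finset.mem_filter, Finset.mem_Ioc] at hx ⊢
        refine ⟨by constructor <;> omega, fun q hq => ?_⟩
        have hqP : q ∣ k * P := Dvd.dvd.mul_left (Finset.dvd_prod_of_mem _ hq) k
        rw [← hx.2 q hq]
        constructor
        · intro h
          have : x = (x - k * P) + k * P := by omega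
          rw [this]
          exact Nat.dvd_add h hqP
        · intro h
          exact Nat.dvd_sub h hqP
      · intro y hy
        simp only [Finset.mem_coe, Finset.mem_filter, Finset.mem_Ioc] at hy ⊢
        refine ⟨by omega, fun q hq => ?_⟩
        have hqP : q ∣ k * P := Dvd.dvd.mul_left (Finset.dvd_prod_of_mem _ hq) k
        rw [← hy.2 q hq]
        constructor
        · intro h
          exact (Nat.dvd_add_right hqP).mp (by rwa [Nat.add_comm] at h)
        · intro h
          exact Nat.dvd_add h hqP
      · intro x hx
        simp only [Finset.mem_coe, Finset.mem_filter, Finset.mem_Ioc] at hx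
        show x - k * P + k * P = x
        omega
      · intro y hy
        simp only [Finset.mem_coe, Finset.mem_filter, Finset.mem_Ioc] at hy
        show y + k * P - k * P = y
        omega
    rw [hsplit, Finset.filter_union, Finset.card_union_of_disjoint hdisj, ih, hchunk]
    ring

lemma count_pattern (S : Finset ℕ) (hS : ∀ q ∈ S, Nat.Prime q) (T : Finset ℕ) (hT : T ⊆ S) (m : ℕ) :
    ((Finset.Ioc 0 (m * ∏ q ∈ S, q)).filter (fun x => ∀ q ∈ S, (q ∣ x ↔ q ∈ T))).card
      = m * ∏ q ∈ S \ T, (q - 1) := by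
  rw [count_periods S hS T m, count_one_period S T hS hT]

lemma pattern_iff_g (S : Finset ℕ) (hS : ∀ q ∈ S, Nat.Prime q) (T : Finset ℕ) (hT : T ⊆ S)
    (x : ℕ) [DecidablePred (· ∣ x)] :
    (∏ q ∈ S.filter (· ∣ x), q) = ∏ q ∈ T, q ↔ ∀ q ∈ S, (q ∣ x ↔ q ∈ T) := by
  classical
  have key : ∀ (U : Finset ℕ), U ⊆ S → ∀ q ∈ S, (q ∣ ∏ r ∈ U, r ↔ q ∈ U) := by
    intro U hU q hq
    constructor
    · intro h
      obtain ⟨r, hr, hqr⟩ := ((hS q hq).prime.dvd_finset_prod_iff _).mp h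
      rwa [(Nat.prime_dvd_prime_iff_eq (hS q hq) (hS r (hU hr))).mp hqr]
    · intro h; exact Finset.dvd_prod_of_mem _ h
  constructor
  · intro h q hq
    have h1 : q ∣ x ↔ q ∈ S.filter (· ∣ x) := by simp [Finset.mem_filter, hq]
    rw [h1, ← key _ (Finset.filter_subset _ _) q hq, h, key T hT q hq]
  · intro h
    have : S.filter (· ∣ x) = T := by
      ext q
      simp only [Finset.mem_filter]
      constructor
      · rintro ⟨hq, hd⟩; exact (h q hq).mp hd
      · intro hq; exact ⟨hT hq, (h q (hT hq)).mpr hq⟩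
    rw [this]

lemma real_arith (S : Finset ℕ) (hS : ∀ q ∈ S, Nat.Prime q) (T : Finset ℕ) (hT : T ⊆ S)
    (m : ℕ) (hm : 0 < m) :
    ((m * ∏ q ∈ S \ T, (q - 1) : ℕ) : ℝ) / ((m * ∏ q ∈ S, q : ℕ) : ℝ)
      = (∏ q ∈ T, (1 / (q : ℝ))) * ∏ q ∈ S \ T, (1 - 1 / (q : ℝ)) := by
  classical
  have hq2 : ∀ q ∈ S, (q : ℝ) ≠ 0 := fun q hq => Nat.cast_ne_zero.mpr (hS q hq).pos.ne'
  have h1 : ∀ q ∈ S \ T, ((q - 1 : ℕ) : ℝ) = (q : ℝ) - 1 := by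
    intro q hq
    have := (hS q (Finset.mem_sdiff.mp hq).1).one_lt
    push_cast [Nat.cast_sub (by omega : 1 ≤ q)]
    ring
  have h2 : ∀ q ∈ S \ T, (1 - 1 / (q : ℝ)) = ((q : ℝ) - 1) / q := by
    intro q hq
    have := hq2 q (Finset.mem_sdiff.mp hq).1
    field_simp
  rw [Finset.prod_congr rfl h2]
  have hsplit : (∏ q ∈ S, (q : ℝ)) = (∏ q ∈ S \ T, (q : ℝ)) * ∏ q ∈ T, (q : ℝ) :=
    (Finset.prod_sdiff hT).symm
  have hTne : (∏ q ∈ T, (q : ℝ)) ≠ 0 :=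
    Finset.prod_ne_zero_iff.mpr (fun q hq => hq2 q (hT hq))
  have hSTne : (∏ q ∈ S \ T, (q : ℝ)) ≠ 0 :=
    Finset.prod_ne_zero_iff.mpr (fun q hq => hq2 q (Finset.mem_sdiff.mp hq).1)
  have hmne : (m : ℝ) ≠ 0 := Nat.cast_ne_zero.mpr hm.ne'
  push_cast
  rw [Finset.prod_congr rfl h1, Finset.prod_div_distrib, hsplit]
  rw [Finset.prod_div_distrib]
  simp only [Finset.prod_const_one]
  field_simp

section MeasureLemmas

lemma measNat {β : Type*} [MeasurableSpace β] (f : ℕ → β) : Measurable f :=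
  measurable_of_countable f

lemma measSet {α : Type*} [MeasurableSpace α] [Countable α] [MeasurableSingletonClass α]
    (s : Set α) : MeasurableSet s := s.to_countable.measurableSet

noncomputable def gfun (S : Finset ℕ) (x : ℕ) : ℕ := ∏ q ∈ S.filter (· ∣ x), q

noncomputable def tgt (S : Finset ℕ) (N : ℕ) : Measure ℕ :=
  (uniformOn (Set.Icc 1 N)).map (gfun S)

noncomputable def nu (S : Finset ℕ) (n N : ℕ) : Measure (ℕ × ℕ) :=
  ((N : ENNReal)/n) • ((uniformOn (Set.Icc 1 N)).map (fun x => (x, gfun S x))) +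
  (((n - N : ℕ) : ENNReal)/n) • ((uniformOn (Set.Ioc N n)).prod (tgt S N))

lemma uniformOn_Icc_prob {N : ℕ} (hN : 1 ≤ N) :
    IsProbabilityMeasure (uniformOn (Set.Icc (1:ℕ) N)) :=
  uniformOn_isProbabilityMeasure (Set.finite_Icc 1 N) (Set.nonempty_Icc.mpr hN)

lemma tgt_prob {S : Finset ℕ} {N : ℕ} (hN : 1 ≤ N) : IsProbabilityMeasure (tgt S N) := by
  haveI := uniformOn_Icc_prob hN
  exact Measure.isProbabilityMeasure_map (measNat _).aemeasurable

/-- the mixture decomposition of the uniform measure -/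
lemma uniformOn_Icc_split {N n : ℕ} (h1 : 1 ≤ N) (h2 : N ≤ n) :
    uniformOn (Set.Icc (1:ℕ) n)
      = ((N : ENNReal)/n) • uniformOn (Set.Icc (1:ℕ) N)
        + (((n - N : ℕ) : ENNReal)/n) • uniformOn (Set.Ioc N n) := by
  classical
  have hn : 0 < n := lt_of_lt_of_le h1 h2
  ext t ht
  rw [Measure.add_apply, Measure.smul_apply, Measure.smul_apply, smul_eq_mul, smul_eq_mul]
  rw [← Finset.coe_Icc, ← Finset.coe_Icc, ← Finset.coe_Ioc]
  rw [uniformOn_finset_apply, uniformOn_finset_apply, uniformOn_finset_apply]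
  have hcard1 : (Finset.Icc 1 n).card = n := by rw [Nat.card_Icc]; omega
  have hcard2 : (Finset.Icc 1 N).card = N := by rw [Nat.card_Icc]; omega
  have hcard3 : (Finset.Ioc N n).card = n - N := by rw [Nat.card_Ioc]
  rw [hcard1, hcard2, hcard3]
  have hunion : Finset.Icc 1 n = Finset.Icc 1 N ∪ Finset.Ioc N n := by
    ext x; simp only [Finset.mem_Icc, Finset.mem_union, Finset.mem_Ioc]; omega
  have hdisj : Disjoint ((Finset.Icc 1 N).filter (· ∈ t)) ((Finset.Ioc N n).filter (· ∈ t)) := by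
    apply Finset.disjoint_filter_filter
    rw [Finset.disjoint_left]
    intro a ha hb
    simp only [Finset.mem_Icc] at ha
    simp only [Finset.mem_Ioc] at hb
    omega
  rw [hunion, Finset.filter_union, Finset.card_union_of_disjoint hdisj]
  rw [Nat.cast_add]
  set a := (((Finset.Icc 1 N).filter (· ∈ t)).card : ENNReal) with ha
  set b := (((Finset.Ioc N n).filter (· ∈ t)).card : ENNReal) with hb
  have hNne : (N : ENNReal) ≠ 0 := Nat.cast_ne_zero.mpr (by omega)
  have hNtop : (N : ENNReal) ≠ ⊤ := ENNReal.natCast_ne_top N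
  have e1 : (N : ENNReal)/n * (a/N) = a/n := by
    calc (N:ENNReal)/n * (a/N) = a * ((N:ENNReal) * (N:ENNReal)⁻¹) * (n:ENNReal)⁻¹ := by
          rw [div_eq_mul_inv, div_eq_mul_inv]; ring
      _ = a/n := by rw [ENNReal.mul_inv_cancel hNne hNtop, mul_one, div_eq_mul_inv]
  have e2 : ((n - N : ℕ) : ENNReal)/n * (b/((n - N : ℕ) : ENNReal)) = b/n := by
    rcases Nat.eq_zero_or_pos (n - N) with h | h
    · have hb0 : b = 0 := by
        rw [hb]
        norm_cast
        have h1 := Finset.card_filter_le (Finset.Ioc N n) (· ∈ t)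
        rw [Nat.card_Ioc] at h1
        omega
      rw [hb0, h]
      simp
    · have hne : ((n - N : ℕ) : ENNReal) ≠ 0 := Nat.cast_ne_zero.mpr h.ne'
      calc ((n - N : ℕ) : ENNReal)/n * (b/((n - N : ℕ) : ENNReal))
            = b * (((n - N : ℕ) : ENNReal) * ((n - N : ℕ) : ENNReal)⁻¹) * (n:ENNReal)⁻¹ := by
            rw [div_eq_mul_inv, div_eq_mul_inv]; ring
        _ = b/n := by rw [ENNReal.mul_inv_cancel hne (ENNReal.natCast_ne_top _), mul_one,
              div_eq_mul_inv]
  rw [e1, e2, ENNReal.div_add_div_same]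

end MeasureLemmas

section More

lemma tgt_mass (S : Finset ℕ) (hS : ∀ q ∈ S, Nat.Prime q) (T : Finset ℕ) (hT : T ⊆ S)
    (m : ℕ) (hm : 0 < m) :
    tgt S (m * ∏ q ∈ S, q) {∏ q ∈ T, q}
      = ENNReal.ofReal ((∏ q ∈ T, (1 / (q : ℝ))) * ∏ q ∈ S \ T, (1 - 1 / (q : ℝ))) := by
  classical
  set P := ∏ q ∈ S, q with hPdef
  have hP : 0 < P := Finset.prod_pos (fun q hq => (hS q hq).pos)
  set N := m * P with hN
  have hN1 : 1 ≤ N := Nat.one_le_iff_ne_zero.mpr (Nat.mul_ne_zero hm.ne' hP.ne')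
  rw [tgt, Measure.map_apply (measNat _) (measSet _)]
  rw [← Finset.coe_Icc, uniformOn_finset_apply]
  have hIcc : Finset.Icc 1 N = Finset.Ioc 0 N := by ext x; simp; omega
  have hfilter : (Finset.Icc 1 N).filter (· ∈ gfun S ⁻¹' {∏ q ∈ T, q})
      = (Finset.Ioc 0 N).filter (fun x => ∀ q ∈ S, (q ∣ x ↔ q ∈ T)) := by
    rw [hIcc]
    apply Finset.filter_congr
    intro x _
    simp only [Set.mem_preimage, Set.mem_singleton_iff, gfun]
    rw [pattern_iff_g S hS T hT x]
  rw [hfilter, count_pattern S hS T hT m, Nat.card_Icc]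
  have hcard : N + 1 - 1 = (m * P : ℕ) := by omega
  rw [hcard]
  rw [← ENNReal.ofReal_natCast (m * ∏ q ∈ S \ T, (q-1)), ← ENNReal.ofReal_natCast (m * P),
    ← ENNReal.ofReal_div_of_pos (by positivity)]
  rw [real_arith S hS T hT m hm]

lemma nu_map_fst (S : Finset ℕ) {n N : ℕ} (h1 : 1 ≤ N) (h2 : N ≤ n) :
    (nu S n N).map Prod.fst = uniformOn (Set.Icc (1:ℕ) n) := by
  haveI := uniformOn_Icc_prob h1
  haveI := tgt_prob (S := S) h1
  rw [nu, Measure.map_add _ _ measurable_fst, Measure.map_smul, Measure.map_smul,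
    Measure.map_map measurable_fst (measNat _), Measure.map_fst_prod]
  have h3 : (Prod.fst ∘ fun x => (x, gfun S x)) = id := rfl
  rw [h3, Measure.map_id, measure_univ, one_smul]
  exact (uniformOn_Icc_split h1 h2).symm

lemma nu_map_snd (S : Finset ℕ) {n N : ℕ} (h1 : 1 ≤ N) (h2 : N ≤ n) :
    (nu S n N).map Prod.snd = tgt S N := by
  haveI := uniformOn_Icc_prob h1
  haveI := tgt_prob (S := S) h1
  rw [nu, Measure.map_add _ _ measurable_snd, Measure.map_smul, Measure.map_smul,
    Measure.map_map measurable_snd (measNat _), Measure.map_snd_prod]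
  have h3 : (Prod.snd ∘ fun x => (x, gfun S x)) = gfun S := rfl
  rw [h3]
  show ((N : ENNReal)/n) • tgt S N + _ • (uniformOn (Set.Ioc (N:ℕ) n) Set.univ) • tgt S N = _
  rcases eq_or_lt_of_le h2 with h | h
  · subst h
    simp only [Nat.sub_self, Nat.cast_zero, ENNReal.zero_div, zero_smul, add_zero]
    rw [ENNReal.div_self (Nat.cast_ne_zero.mpr (by omega)) (ENNReal.natCast_ne_top _), one_smul]
  · haveI : IsProbabilityMeasure (uniformOn (Set.Ioc (N:ℕ) n)) :=
      uniformOn_isProbabilityMeasure (Set.finite_Ioc _ _) (Set.nonempty_Ioc.mpr h)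
    rw [measure_univ, one_smul]
    rw [← add_smul]
    have : (N : ENNReal)/n + ((n - N : ℕ) : ENNReal)/n = 1 := by
      rw [ENNReal.div_add_div_same]
      have : (N : ENNReal) + ((n - N : ℕ) : ENNReal) = (n : ENNReal) := by
        rw [← Nat.cast_add]; congr 1; omega
      rw [this, ENNReal.div_self (Nat.cast_ne_zero.mpr (by omega)) (ENNReal.natCast_ne_top _)]
    rw [this, one_smul]

lemma nu_prob (S : Finset ℕ) {n N : ℕ} (h1 : 1 ≤ N) (h2 : N ≤ n) :
    IsProbabilityMeasure (nu S n N) := by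
  constructor
  have hsnd := nu_map_snd S h1 h2
  haveI := tgt_prob (S := S) h1
  have h4 : (nu S n N) Set.univ = ((nu S n N).map Prod.snd) Set.univ := by
    rw [Measure.map_apply measurable_snd MeasurableSet.univ]; rfl
  rw [h4, hsnd, measure_univ]

end More

lemma dvd_prod_iff_mem (S U : Finset ℕ) (hS : ∀ q ∈ S, Nat.Prime q) (hU : U ⊆ S)
    (q : ℕ) (hq : q ∈ S) : q ∣ ∏ r ∈ U, r ↔ q ∈ U := by
  constructor
  · intro h
    obtain ⟨r, hr, hqr⟩ := ((hS q hq).prime.dvd_finset_prod_iff _).mp h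
    rwa [(Nat.prime_dvd_prime_iff_eq (hS q hq) (hS r (hU hr))).mp hqr]
  · intro h; exact Finset.dvd_prod_of_mem _ h

lemma nu_bad (S : Finset ℕ) (hS : ∀ q ∈ S, Nat.Prime q) {n N : ℕ} (h1 : 1 ≤ N) (h2 : N ≤ n) :
    nu S n N {z : ℕ × ℕ | ¬ ∀ q ∈ S, (q ∣ z.1 ↔ q ∣ z.2)} ≤ ((n - N : ℕ) : ENNReal)/n := by
  haveI := uniformOn_Icc_prob h1
  haveI := tgt_prob (S := S) h1
  rw [nu, Measure.add_apply, Measure.smul_apply, Measure.smul_apply, smul_eq_mul, smul_eq_mul]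
  have hpre : (fun x => (x, gfun S x)) ⁻¹' {z : ℕ × ℕ | ¬ ∀ q ∈ S, (q ∣ z.1 ↔ q ∣ z.2)} = ∅ := by
    ext x
    simp only [Set.mem_preimage, Set.mem_setOf_eq, Set.mem_empty_iff_false, iff_false, not_not]
    intro q hq
    rw [gfun, dvd_prod_iff_mem S _ hS (Finset.filter_subset _ _) q hq, Finset.mem_filter]
    simp [hq]
  rw [Measure.map_apply (measNat _) (measSet _), hpre, measure_empty, mul_zero, zero_add]
  calc ((n - N:ℕ) : ENNReal)/n * ((uniformOn (Set.Ioc (N:ℕ) n)).prod (tgt S N)) _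
      ≤ ((n - N:ℕ) : ENNReal)/n * 1 := by
        gcongr
        refine le_trans (measure_mono (Set.subset_univ _)) ?_
        rw [← Set.univ_prod_univ, Measure.prod_prod]
        calc uniformOn (Set.Ioc (N:ℕ) n) Set.univ * tgt S N Set.univ ≤ 1 * 1 := by
              gcongr <;> exact prob_le_one
          _ = 1 := by ring
    _ = ((n - N:ℕ) : ENNReal)/n := mul_one _

lemma pi_map_coord {n : ℕ} {α β : Type*} [MeasurableSpace α] [MeasurableSpace β]
    (ν : Measure α) [IsProbabilityMeasure ν] (f : α → β) (hf : Measurable f) :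
    (Measure.pi fun _ : Fin n => ν).map (fun ω i => f (ω i))
      = Measure.pi fun _ : Fin n => ν.map f := by
  haveI : IsProbabilityMeasure (ν.map f) := Measure.isProbabilityMeasure_map hf.aemeasurable
  refine (Measure.pi_eq fun s hs => ?_).symm
  have hm : Measurable (fun ω : Fin n → α => fun i => f (ω i)) :=
    measurable_pi_lambda _ fun i => hf.comp (measurable_pi_apply i)
  rw [Measure.map_apply hm (MeasurableSet.univ_pi hs)]
  have hp : (fun ω i => f (ω i)) ⁻¹' Set.pi Set.univ s = Set.pi Set.univ (fun i => f ⁻¹' s i) := by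
    ext ω; simp [Set.mem_pi]
  rw [hp, Measure.pi_pi]
  exact Finset.prod_congr rfl fun i _ => (Measure.map_apply hf (hs i)).symm

lemma choose_le_two_pow (n k : ℕ) : n.choose k ≤ 2 ^ n := by
  rcases le_or_gt k n with h | h
  · calc n.choose k ≤ ∑ i ∈ Finset.range (n+1), n.choose i :=
        Finset.single_le_sum (fun i _ => Nat.zero_le _) (Finset.mem_range.mpr (by omega))
      _ = 2 ^ n := Nat.sum_range_choose n
  · rw [Nat.choose_eq_zero_of_lt h]; exact Nat.zero_le _



end AuxCoupling

/-- If `m ≥ 1` satisfies `m·∏_{p ∈ S(k₁,k₂)} p ≤ n < (m+1)·∏_{p ∈ S(k₁,k₂)} p`,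
then for every `ε > 0` there is a coupling `μ` of the vector `(X₁,…,Xₙ)` of i.i.d. uniforms
on `{1,…,n}` with a vector `(X̃₁,…,X̃ₙ)` of i.i.d. random variables taking the value
`∏_{q ∈ T} q` (for `T ⊆ S(k₁,k₂)`, encoding `b ∈ {0,1}^ℓ`) with probability
`∏_{q∈T} (1/q) · ∏_{q∈S(k₁,k₂)∖T} (1−1/q)`, such that
`μ(∑_{q ∈ S(k₁,k₂)} Y_q² − ∑_{q ∈ S(k₁,k₂)} Ỹ_q² ≥ n²ε) ≤ 2ⁿ·(1/m)^{nε/(2k₂)}`. -/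
theorem coupling_gcd_counts (k₁ k₂ n m : ℕ) (hk : k₁ < k₂) (hm : 1 ≤ m)
    (h₁ : m * ∏ q ∈ primesIn k₁ k₂, q ≤ n)
    (h₂ : n < (m + 1) * ∏ q ∈ primesIn k₁ k₂, q) :
    ∀ ε : ℝ, 0 < ε →
      ∃ μ : Measure ((Fin n → ℕ) × (Fin n → ℕ)),
        IsProbabilityMeasure μ ∧
        μ.map Prod.fst = unifVec n ∧
        (∀ T : Fin n → Finset ℕ, (∀ i, T i ⊆ primesIn k₁ k₂) →
          μ {ω | ∀ i, ω.2 i = ∏ q ∈ T i, q} =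
            ∏ i : Fin n, ENNReal.ofReal
              ((∏ q ∈ T i, (1 / (q : ℝ))) *
                ∏ q ∈ primesIn k₁ k₂ \ T i, (1 - 1 / (q : ℝ)))) ∧
        (μ {ω | (n : ℝ) ^ 2 * ε ≤
            ∑ q ∈ primesIn k₁ k₂, ((Yp n q ω.1 : ℝ) ^ 2 - (Yp n q ω.2 : ℝ) ^ 2)}).toReal
          ≤ 2 ^ n * (1 / (m : ℝ)) ^ (((n : ℝ) * ε) / (2 * (k₂ : ℝ))) := by
  intro ε hε
  classical
  set S := primesIn k₁ k₂ with hSdef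
  have hS : ∀ q ∈ S, Nat.Prime q := fun q hq => (Finset.mem_filter.mp hq).2
  set P := ∏ q ∈ S, q with hPdef
  have hP : 0 < P := Finset.prod_pos fun q hq => (hS q hq).pos
  set N := m * P with hNdef
  have hN1 : 1 ≤ N := Nat.one_le_iff_ne_zero.mpr (Nat.mul_ne_zero (by omega) hP.ne')
  have hNn : N ≤ n := h₁
  have hn : 0 < n := lt_of_lt_of_le hN1 hNn
  have hk₂ : 0 < k₂ := lt_of_le_of_lt (Nat.zero_le _) hk
  haveI hνp : IsProbabilityMeasure (nu S n N) := nu_prob S hN1 hNn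
  set ν := nu S n N with hνdef
  set μpi := Measure.pi fun _ : Fin n => ν with hμpidef
  set F : (Fin n → ℕ × ℕ) → (Fin n → ℕ) × (Fin n → ℕ) :=
    fun ω => (fun i => (ω i).1, fun i => (ω i).2) with hFdef
  have hFmeas : Measurable F := measurable_of_countable F
  refine ⟨μpi.map F, Measure.isProbabilityMeasure_map hFmeas.aemeasurable, ?_, ?_, ?_⟩
  · -- first marginal
    rw [Measure.map_map measurable_fst hFmeas]
    have h3 : (Prod.fst ∘ F) = fun ω i => Prod.fst (ω i) := rfl
    rw [h3, pi_map_coord ν Prod.fst measurable_fst, unifVec]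
    congr 1
    exact funext fun _ => nu_map_fst S hN1 hNn
  · -- second marginal cylinder probabilities
    intro T hT
    have hpre : F ⁻¹' {ω | ∀ i, ω.2 i = ∏ q ∈ T i, q}
        = Set.pi Set.univ (fun i => Prod.snd ⁻¹' {∏ q ∈ T i, q}) := by
      ext ω
      simp [Set.mem_pi, hFdef]
    rw [Measure.map_apply hFmeas (measSet _), hpre, Measure.pi_pi]
    refine Finset.prod_congr rfl fun i _ => ?_
    have h5 : ν (Prod.snd ⁻¹' {∏ q ∈ T i, q}) = (ν.map Prod.snd) {∏ q ∈ T i, q} :=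
      (Measure.map_apply measurable_snd (measSet _)).symm
    rw [h5, nu_map_snd S hN1 hNn]
    have h6 : tgt S N {∏ q ∈ T i, q}
        = ENNReal.ofReal ((∏ q ∈ T i, (1 / (q : ℝ))) * ∏ q ∈ S \ T i, (1 - 1 / (q : ℝ))) := by
      rw [hNdef, hPdef]
      exact tgt_mass S hS (T i) (hT i) m (by omega)
    rw [h6]
  · -- tail bound
    set t : ℝ := ((n : ℝ) * ε) / (2 * (k₂ : ℝ)) with htdef
    set kt := ⌈t⌉₊ with hktdef
    have ht0 : 0 < t := by positivity
    set E : Set ((Fin n → ℕ) × (Fin n → ℕ)) := {ω | (n : ℝ) ^ 2 * ε ≤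
        ∑ q ∈ S, ((Yp n q ω.1 : ℝ) ^ 2 - (Yp n q ω.2 : ℝ) ^ 2)} with hEdef
    have hScard : S.card ≤ k₂ := by
      calc S.card ≤ (Finset.Ioc k₁ k₂).card := Finset.card_filter_le _ _
        _ = k₂ - k₁ := Nat.card_Ioc k₁ k₂
        _ ≤ k₂ := Nat.sub_le _ _
    -- event inclusion
    have hsub : F ⁻¹' E ⊆ ⋃ A ∈ Finset.powersetCard kt (Finset.univ : Finset (Fin n)),
        {ω : Fin n → ℕ × ℕ | ∀ i ∈ A, ¬ ∀ q ∈ S, (q ∣ (ω i).1 ↔ q ∣ (ω i).2)} := by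
      intro ω hω
      simp only [Set.mem_preimage, hEdef, Set.mem_setOf_eq] at hω
      set B := Finset.univ.filter (fun i : Fin n => ¬ ∀ q ∈ S, (q ∣ (ω i).1 ↔ q ∣ (ω i).2))
        with hBdef
      have hq2 : ∀ q ∈ S, ((Yp n q (F ω).1 : ℝ) ^ 2 - (Yp n q (F ω).2 : ℝ) ^ 2)
          ≤ 2 * n * B.card := by
        intro q hq
        have hXY : Yp n q (F ω).1 ≤ Yp n q (F ω).2 + B.card := by
          rw [Yp, Yp]
          calc (Finset.univ.filter fun i : Fin n => q ∣ (F ω).1 i).card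
              ≤ ((Finset.univ.filter fun i : Fin n => q ∣ (F ω).2 i) ∪ B).card := by
                apply Finset.card_le_card
                intro i hi
                simp only [Finset.mem_filter, Finset.mem_univ, true_and, Finset.mem_union,
                  hBdef] at hi ⊢
                by_cases hgood : ∀ q ∈ S, (q ∣ (ω i).1 ↔ q ∣ (ω i).2)
                · exact Or.inl ((hgood q hq).mp hi)
                · exact Or.inr hgood
            _ ≤ _ := Finset.card_union_le _ _
        have hXn : Yp n q (F ω).1 ≤ n := by
          calc Yp n q (F ω).1 ≤ (Finset.univ : Finset (Fin n)).card := Finset.card_filter_le _ _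
            _ = n := by simp
        have hYn : Yp n q (F ω).2 ≤ n := by
          calc Yp n q (F ω).2 ≤ (Finset.univ : Finset (Fin n)).card := Finset.card_filter_le _ _
            _ = n := by simp
        have hXYr : (Yp n q (F ω).1 : ℝ) ≤ (Yp n q (F ω).2 : ℝ) + B.card := by
          exact_mod_cast hXY
        have hXnr : (Yp n q (F ω).1 : ℝ) ≤ n := by exact_mod_cast hXn
        have hYnr : (Yp n q (F ω).2 : ℝ) ≤ n := by exact_mod_cast hYn
        have hX0 : (0:ℝ) ≤ (Yp n q (F ω).1 : ℝ) := Nat.cast_nonneg _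
        have hY0 : (0:ℝ) ≤ (Yp n q (F ω).2 : ℝ) := Nat.cast_nonneg _
        have hB0 : (0:ℝ) ≤ (B.card : ℝ) := Nat.cast_nonneg _
        rcases le_or_gt ((Yp n q (F ω).2 : ℝ) + B.card) n with hc | hc
        · nlinarith
        · nlinarith
      have hsum : ∑ q ∈ S, ((Yp n q (F ω).1 : ℝ) ^ 2 - (Yp n q (F ω).2 : ℝ) ^ 2)
          ≤ S.card * (2 * n * B.card) := by
        have := Finset.sum_le_card_nsmul S _ _ hq2
        rwa [nsmul_eq_mul] at this
      have hBt : t ≤ (B.card : ℝ) := by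
        rw [htdef, div_le_iff₀ (by positivity)]
        have hchain : (n:ℝ)^2 * ε ≤ (k₂ : ℝ) * (2 * n * B.card) := by
          calc (n:ℝ)^2 * ε ≤ S.card * (2 * n * B.card) := le_trans hω hsum
            _ ≤ (k₂ : ℝ) * (2 * n * B.card) := by
                apply mul_le_mul_of_nonneg_right _ (by positivity)
                exact_mod_cast hScard
        have hnr : (0:ℝ) < n := by exact_mod_cast hn
        nlinarith
      have hktB : kt ≤ B.card := Nat.ceil_le.mpr hBt
      obtain ⟨A, hAB, hAcard⟩ := Finset.exists_subset_card_eq hktB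
      refine Set.mem_iUnion₂.mpr ⟨A, Finset.mem_powersetCard.mpr ⟨Finset.subset_univ _, hAcard⟩, ?_⟩
      intro i hi
      exact (Finset.mem_filter.mp (hAB hi)).2
    -- measure bound
    have hbadle : ν {z : ℕ × ℕ | ¬ ∀ q ∈ S, (q ∣ z.1 ↔ q ∣ z.2)} ≤ 1/(m : ENNReal) := by
      refine le_trans (nu_bad S hS hN1 hNn) ?_
      have hmne : (m : ENNReal) ≠ 0 := Nat.cast_ne_zero.mpr (by omega)
      rw [ENNReal.div_le_iff (Nat.cast_ne_zero.mpr hn.ne') (ENNReal.natCast_ne_top _),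
        one_div, ← ENNReal.div_eq_inv_mul,
        ENNReal.le_div_iff_mul_le (Or.inl hmne) (Or.inl (ENNReal.natCast_ne_top _)),
        ← Nat.cast_mul, Nat.cast_le]
      have hNP : (m + 1) * P = N + P := by rw [hNdef]; ring
      have hPm : P * m = m * P := mul_comm _ _
      have hsm : (n - N) * m ≤ (P - 1) * m := Nat.mul_le_mul_right _ (by omega)
      have hsub1 : (P - 1) * m = P * m - m := by rw [Nat.sub_mul, one_mul]
      omega
    have hmap : (μpi.map F) E = μpi (F ⁻¹' E) := Measure.map_apply hFmeas (measSet _)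
    have hbound : μpi (F ⁻¹' E) ≤ (n.choose kt : ENNReal) * (1/(m:ENNReal))^kt := by
      refine le_trans (measure_mono hsub) ?_
      refine le_trans (measure_biUnion_finset_le _ _) ?_
      have hterm : ∀ A ∈ Finset.powersetCard kt (Finset.univ : Finset (Fin n)),
          μpi {ω : Fin n → ℕ × ℕ | ∀ i ∈ A, ¬ ∀ q ∈ S, (q ∣ (ω i).1 ↔ q ∣ (ω i).2)}
            ≤ (1/(m:ENNReal))^kt := by
        intro A hA
        have hAcard : A.card = kt := (Finset.mem_powersetCard.mp hA).2
        have hset : {ω : Fin n → ℕ × ℕ | ∀ i ∈ A, ¬ ∀ q ∈ S, (q ∣ (ω i).1 ↔ q ∣ (ω i).2)}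
            = Set.pi Set.univ (fun i => if i ∈ A
                then {z : ℕ × ℕ | ¬ ∀ q ∈ S, (q ∣ z.1 ↔ q ∣ z.2)} else Set.univ) := by
          ext ω
          simp only [Set.mem_setOf_eq, Set.mem_pi, Set.mem_univ, true_implies]
          constructor
          · intro h i
            split_ifs with hi
            · exact h i hi
            · trivial
          · intro h i hi
            have := h i
            rwa [if_pos hi] at this
        rw [hμpidef, hset, Measure.pi_pi]
        have hprod : ∏ i : Fin n, ν (if i ∈ A
              then {z : ℕ × ℕ | ¬ ∀ q ∈ S, (q ∣ z.1 ↔ q ∣ z.2)} else Set.univ)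
            = ∏ i : Fin n, (if i ∈ A
              then ν {z : ℕ × ℕ | ¬ ∀ q ∈ S, (q ∣ z.1 ↔ q ∣ z.2)} else 1) := by
          refine Finset.prod_congr rfl fun i _ => ?_
          split_ifs
          · rfl
          · exact measure_univ
        rw [hprod, Finset.prod_ite_mem, Finset.univ_inter, Finset.prod_const, hAcard]
        exact pow_le_pow_left' hbadle kt
      refine le_trans (Finset.sum_le_sum hterm) ?_
      rw [Finset.sum_const, Finset.card_powersetCard, Finset.card_univ, Fintype.card_fin,
        nsmul_eq_mul]
    have hRne : ((n.choose kt : ENNReal) * (1/(m:ENNReal))^kt) ≠ ⊤ := by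
      apply ENNReal.mul_ne_top (ENNReal.natCast_ne_top _)
      apply ENNReal.pow_ne_top
      rw [one_div]
      exact ENNReal.inv_ne_top.mpr (Nat.cast_ne_zero.mpr (by omega))
    calc ((μpi.map F) E).toReal ≤ ((n.choose kt : ENNReal) * (1/(m:ENNReal))^kt).toReal := by
          apply ENNReal.toReal_mono hRne
          rw [hmap]; exact hbound
      _ = (n.choose kt : ℝ) * (1/(m:ℝ))^kt := by
          rw [ENNReal.toReal_mul, ENNReal.toReal_pow, ENNReal.toReal_div]
          simp
      _ ≤ 2 ^ n * (1 / (m : ℝ)) ^ t := by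
          have h1m : (0:ℝ) < 1/(m:ℝ) := by
            have : (0:ℝ) < m := by exact_mod_cast (by omega : 0 < m)
            positivity
          have h1m1 : (1:ℝ)/(m:ℝ) ≤ 1 := by
            rw [div_le_one (by exact_mod_cast (by omega : 0 < m))]
            exact_mod_cast hm
          apply mul_le_mul
          · calc (n.choose kt : ℝ) ≤ ((2^n : ℕ) : ℝ) := by exact_mod_cast choose_le_two_pow n kt
              _ = 2^n := by push_cast; ring
          · rw [← Real.rpow_natCast (1/(m:ℝ)) kt]
            exact Real.rpow_le_rpow_of_exponent_ge h1m h1m1 (Nat.le_ceil t)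
          · positivity
          · positivity
end
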